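/- arXiv:2303.00937 — 12 statements merged into one kernel-verified Lean document; each statement's English description precedes it below -/
import Mathlib

section
/- Let p, q, J be positive integers, b ∈ ℝ^q, and for each j ∈ {1,…,J} let X^{(j)} be a symmetric (1+q)×(1+q) real matrix and Λ^{(j)} ∈ ℝ. Let ξ, w₁, …, w_q ∈ ℝ^p and set v₀ := ξ and v_i := w_i for 1 ≤ i ≤ q. Assume that for each j, ∑_{k=0}^{q} ∑_{l=0}^{q} X^{(j)}_{k,l} ⟨v_k, v_l⟩ ≤ Λ^{(j)}. If there exist ρ ≥ 0 and nonnegative reals λ^{(1)}, …, λ^{(J)} such that the symmetric (1+q)×(1+q) matrix whose (0,0)-entry is 1−ρ², whose (0,i)- and (i,0)-entries are b_i for 1 ≤ i ≤ q, and whose (i,k)-entry is b_i b_k for 1 ≤ i,k ≤ q, minus ∑_{j=1}^{J} λ^{(j)} X^{(j)}, is negative semidefinite, then ξ⁺ := ξ + ∑_{i=1}^{q} b_i w_i satisfies ‖ξ⁺‖² ≤ ρ² ‖ξ‖² + ∑_{j=1}^{J} λ^{(j)} Λ^{(j)}. Consequently, if a sequence (ξ_t)_{t≥0} in ℝ^p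 satisfies ξ_{t+1} = ξ_t + ∑_{i=1}^{q} b_{t,i} w_{t,i} and the above hypotheses hold at every time t with data (b_t, X_t^{(j)}, Λ_t^{(j)}, ρ_t, λ_t^{(j)}), then for every t, ‖ξ_t‖² ≤ (∏_{k=0}^{t−1} ρ_k²) ‖ξ₀‖² + ∑_{k=0}^{t−1} (∏_{l=k+1}^{t−1} ρ_l²)(∑_{j=1}^{J} λ_k^{(j)} Λ_k^{(j)}). -/
open Finset

theorem stmt_0 (p q J : ℕ) (hp : 0 < p) (hq : 0 < q) (hJ : 0 < J)
    (b : ℕ → Fin q → ℝ)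
    (X : ℕ → Fin J → Matrix (Fin (q + 1)) (Fin (q + 1)) ℝ)
    (hXsymm : ∀ t j, (X t j).IsSymm)
    (Λ : ℕ → Fin J → ℝ)
    (ξ : ℕ → EuclideanSpace ℝ (Fin p))
    (w : ℕ → Fin q → EuclideanSpace ℝ (Fin p))
    (hrec : ∀ t, ξ (t + 1) = ξ t + ∑ i, b t i • w t i)
    (hsupply : ∀ t j,
      ∑ k, ∑ l, X t j k l *
        (@inner ℝ _ _ ((Fin.cons (ξ t) (w t) : Fin (q + 1) → EuclideanSpace ℝ (Fin p)) k)
          ((Fin.cons (ξ t) (w t) : Fin (q + 1) → EuclideanSpace ℝ (Fin p)) l)) ≤ Λ t j)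
    (ρ : ℕ → ℝ) (lam : ℕ → Fin J → ℝ)
    (hρ : ∀ t, 0 ≤ ρ t) (hlam : ∀ t j, 0 ≤ lam t j)
    (hLMI : ∀ t, ∀ z : Fin (q + 1) → ℝ,
      ∑ k, ∑ l, z k *
        (((Fin.cons (1 : ℝ) (b t) : Fin (q + 1) → ℝ) k *
            (Fin.cons (1 : ℝ) (b t) : Fin (q + 1) → ℝ) l -
            (if k = 0 ∧ l = 0 then ρ t ^ 2 else 0)) -
          ∑ j, lam t j * X t j k l) * z l ≤ 0) :
    (∀ t, ‖ξ (t + 1)‖ ^ 2 ≤ ρ t ^ 2 * ‖ξ t‖ ^ 2 + ∑ j, lam t j * Λ t j) ∧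
    (∀ t, ‖ξ t‖ ^ 2 ≤ (∏ k ∈ range t, ρ k ^ 2) * ‖ξ 0‖ ^ 2 +
        ∑ k ∈ range t, (∏ l ∈ Ico (k + 1) t, ρ l ^ 2) * (∑ j, lam k j * Λ k j)) := by
  have key : ∀ t, ‖ξ (t + 1)‖ ^ 2 ≤ ρ t ^ 2 * ‖ξ t‖ ^ 2 + ∑ j, lam t j * Λ t j := by
    intro t
    set v : Fin (q + 1) → EuclideanSpace ℝ (Fin p) := Fin.cons (ξ t) (w t) with hv
    set c : Fin (q + 1) → ℝ := Fin.cons 1 (b t) with hc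
    have hxi : ξ (t + 1) = ∑ k, c k • v k := by
      rw [hrec t, Fin.sum_univ_succ]
      simp [hv, hc]
    have hnorm : ‖ξ (t + 1)‖ ^ 2 = ∑ k, ∑ l, c k * c l * inner ℝ (v k) (v l) := by
      rw [hxi, ← real_inner_self_eq_norm_sq, sum_inner]
      refine Finset.sum_congr rfl fun k _ => ?_
      rw [inner_sum]
      refine Finset.sum_congr rfl fun l _ => ?_
      rw [real_inner_smul_left, real_inner_smul_right]; ring
    have hPSD : ∑ k, ∑ l,
        ((c k * c l - (if k = 0 ∧ l = 0 then ρ t ^ 2 else 0)) - ∑ j, lam t j * X t j k l)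
          * inner ℝ (v k) (v l) ≤ 0 := by
      have hinner : ∀ k l : Fin (q + 1),
          (inner ℝ (v k) (v l) : ℝ) = ∑ i, v k i * v l i := by
        intro k l
        simp [PiLp.inner_apply, RCLike.inner_apply, conj_trivial, mul_comm]
      calc ∑ k : Fin (q+1), ∑ l : Fin (q+1),
            ((c k * c l - (if k = 0 ∧ l = 0 then ρ t ^ 2 else 0)) - ∑ j : Fin J, lam t j * X t j k l)
              * (inner ℝ (v k) (v l) : ℝ)
          = ∑ i : Fin p, ∑ k : Fin (q+1), ∑ l : Fin (q+1), v k i *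
            ((c k * c l - (if k = 0 ∧ l = 0 then ρ t ^ 2 else 0)) - ∑ j, lam t j * X t j k l)
              * v l i := by
            conv_rhs => rw [Finset.sum_comm]
            refine Finset.sum_congr rfl fun k _ => ?_
            conv_rhs => rw [Finset.sum_comm]
            refine Finset.sum_congr rfl fun l _ => ?_
            rw [hinner, Finset.mul_sum]
            refine Finset.sum_congr rfl fun i _ => ?_
            ring
        _ ≤ 0 := by
            refine Finset.sum_nonpos fun i _ => ?_
            exact hLMI t (fun k => v k i)
    have hdelta : ∑ k, ∑ l, (if k = 0 ∧ l = 0 then ρ t ^ 2 else 0) * (inner ℝ (v k) (v l) : ℝ)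
        = ρ t ^ 2 * ‖ξ t‖ ^ 2 := by
      have : ∀ k l : Fin (q + 1),
          (if k = 0 ∧ l = 0 then ρ t ^ 2 else 0) * (inner ℝ (v k) (v l) : ℝ)
          = if k = 0 then (if l = 0 then ρ t ^ 2 * (inner ℝ (v 0) (v 0) : ℝ) else 0) else 0 := by
        intro k l
        by_cases hk : k = 0 <;> by_cases hl : l = 0 <;> simp [hk, hl]
      have h00 : (inner ℝ (v 0) (v 0) : ℝ) = ‖ξ t‖ ^ 2 := by
        simp only [hv, Fin.cons_zero]; exact real_inner_self_eq_norm_sq _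
      simp only [this, h00]
      simp
    have hXsum : ∀ j, ∑ k, ∑ l, lam t j * X t j k l * (inner ℝ (v k) (v l) : ℝ)
        ≤ lam t j * Λ t j := by
      intro j
      have := hsupply t j
      calc ∑ k, ∑ l, lam t j * X t j k l * (inner ℝ (v k) (v l) : ℝ)
          = lam t j * ∑ k, ∑ l, X t j k l * (inner ℝ (v k) (v l) : ℝ) := by
            rw [Finset.mul_sum]
            refine Finset.sum_congr rfl fun k _ => ?_
            rw [Finset.mul_sum]
            refine Finset.sum_congr rfl fun l _ => ?_
            ring
        _ ≤ lam t j * Λ t j := mul_le_mul_of_nonneg_left this (hlam t j)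
    have expand : ‖ξ (t + 1)‖ ^ 2 =
        (∑ k, ∑ l, ((c k * c l - (if k = 0 ∧ l = 0 then ρ t ^ 2 else 0))
            - ∑ j, lam t j * X t j k l) * inner ℝ (v k) (v l))
        + ρ t ^ 2 * ‖ξ t‖ ^ 2
        + ∑ j, ∑ k, ∑ l, lam t j * X t j k l * (inner ℝ (v k) (v l) : ℝ) := by
      rw [hnorm, ← hdelta]
      have swap : ∑ j, ∑ k, ∑ l, lam t j * X t j k l * (inner ℝ (v k) (v l) : ℝ)
          = ∑ k, ∑ l, (∑ j, lam t j * X t j k l) * (inner ℝ (v k) (v l) : ℝ) := by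
        rw [Finset.sum_comm]
        refine Finset.sum_congr rfl fun k _ => ?_
        rw [Finset.sum_comm]
        refine Finset.sum_congr rfl fun l _ => ?_
        rw [Finset.sum_mul]
      rw [swap, ← Finset.sum_add_distrib, ← Finset.sum_add_distrib]
      refine Finset.sum_congr rfl fun k _ => ?_
      rw [← Finset.sum_add_distrib, ← Finset.sum_add_distrib]
      refine Finset.sum_congr rfl fun l _ => ?_
      ring
    rw [expand]
    have h2 : ∑ j, ∑ k, ∑ l, lam t j * X t j k l * (inner ℝ (v k) (v l) : ℝ)
        ≤ ∑ j, lam t j * Λ t j := Finset.sum_le_sum fun j _ => hXsum j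
    linarith
  refine ⟨key, ?_⟩
  intro t
  induction t with
  | zero => simp
  | succ t ih =>
    have h1 := key t
    have h2 : ρ t ^ 2 * ‖ξ t‖ ^ 2 ≤ ρ t ^ 2 * ((∏ k ∈ range t, ρ k ^ 2) * ‖ξ 0‖ ^ 2 +
        ∑ k ∈ range t, (∏ l ∈ Ico (k + 1) t, ρ l ^ 2) * (∑ j, lam k j * Λ k j)) :=
      mul_le_mul_of_nonneg_left ih (sq_nonneg _)
    have hsum : ∑ k ∈ range (t + 1), (∏ l ∈ Ico (k + 1) (t + 1), ρ l ^ 2) * (∑ j, lam k j * Λ k j)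
        = ρ t ^ 2 * ∑ k ∈ range t, (∏ l ∈ Ico (k + 1) t, ρ l ^ 2) * (∑ j, lam k j * Λ k j)
          + ∑ j, lam t j * Λ t j := by
      rw [Finset.sum_range_succ, Finset.Ico_self, Finset.prod_empty, one_mul, Finset.mul_sum]
      congr 1
      refine Finset.sum_congr rfl fun k hk => ?_
      rw [Finset.prod_Ico_succ_top (Nat.succ_le_of_lt (Finset.mem_range.mp hk))]
      ring
    rw [Finset.prod_range_succ, hsum]
    nlinarith [sq_nonneg (ρ t)]
end

section
/- Let 0 < m ≤ L, α ≥ 0, σ ≥ 0, c ≥ 0, and let f : ℝ^p → ℝ be a differentiable function satisfying the sector condition S(m,L) at a point x* ∈ ℝ^p. Let x, v, x*' ∈ ℝ^p with ‖x*' − x*‖ ≤ σ and ‖v‖ ≤ c, and set x⁺ := x − α(∇f(x) + v). If there exist nonnegative reals ρ, λ₁, λ₂, λ₃ such that the matrix A(ρ,λ₁,λ₂,λ₃) is negative semidefinite, then ‖x⁺ − x*'‖² ≤ ρ² ‖x − x*‖² + λ₂ σ² + λ₃ c². -/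
set_option maxHeartbeats 1000000 in

theorem stmt_2 (p : ℕ) (m L α σ c : ℝ)
    (hm : 0 < m) (hmL : m ≤ L) (hα : 0 ≤ α) (hσ : 0 ≤ σ) (hc : 0 ≤ c)
    (f : EuclideanSpace ℝ (Fin p) → ℝ) (xstar : EuclideanSpace ℝ (Fin p))
    (hf : Differentiable ℝ f)
    (hcrit : gradient f xstar = 0)
    (hsector : ∀ x : EuclideanSpace ℝ (Fin p),
      2 * m * L * ‖x - xstar‖ ^ 2 + 2 * ‖gradient f x‖ ^ 2 ≤
        2 * (L + m) * (@inner ℝ _ _ (x - xstar) (gradient f x)))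
    (x v xstar' : EuclideanSpace ℝ (Fin p))
    (hx' : ‖xstar' - xstar‖ ≤ σ) (hv : ‖v‖ ≤ c)
    (ρ l1 l2 l3 : ℝ) (hρ : 0 ≤ ρ) (hl1 : 0 ≤ l1) (hl2 : 0 ≤ l2) (hl3 : 0 ≤ l3)
    (hLMI : ∀ z : Fin 4 → ℝ,
      ∑ k, ∑ l, z k *
        (!![1 - ρ ^ 2 - 2 * l1 * L * m, -α + l1 * (L + m), 1, -α;
            -α + l1 * (L + m), α ^ 2 - 2 * l1, -α, α ^ 2;
            1, -α, 1 - l2, -α;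
            -α, α ^ 2, -α, α ^ 2 - l3] k l) * z l ≤ 0) :
    ‖(x - α • (gradient f x + v)) - xstar'‖ ^ 2 ≤
      ρ ^ 2 * ‖x - xstar‖ ^ 2 + l2 * σ ^ 2 + l3 * c ^ 2 := by
  set M : Matrix (Fin 4) (Fin 4) ℝ :=
    !![1 - ρ ^ 2 - 2 * l1 * L * m, -α + l1 * (L + m), 1, -α;
       -α + l1 * (L + m), α ^ 2 - 2 * l1, -α, α ^ 2;
       1, -α, 1 - l2, -α;
       -α, α ^ 2, -α, α ^ 2 - l3] with hM
  set g := gradient f x with hg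
  set u : Fin 4 → EuclideanSpace ℝ (Fin p) :=
    ![x - xstar, g, xstar - xstar', v] with hu
  have key : ∑ k : Fin 4, ∑ l : Fin 4, M k l * (inner ℝ (u k) (u l) : ℝ) ≤ 0 := by
    have h1 : ∀ k l : Fin 4, M k l * (inner ℝ (u k) (u l) : ℝ)
        = ∑ i, u k i * M k l * u l i := by
      intro k l
      rw [PiLp.inner_apply]
      simp only [RCLike.inner_apply, conj_trivial, Finset.mul_sum]
      exact Finset.sum_congr rfl fun i _ => by ring
    calc ∑ k : Fin 4, ∑ l : Fin 4, M k l * (inner ℝ (u k) (u l) : ℝ)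
        = ∑ k : Fin 4, ∑ l : Fin 4, ∑ i, u k i * M k l * u l i := by
          simp_rw [h1]
      _ = ∑ k : Fin 4, ∑ i, ∑ l : Fin 4, u k i * M k l * u l i :=
          Finset.sum_congr rfl fun k _ => Finset.sum_comm
      _ = ∑ i, ∑ k : Fin 4, ∑ l : Fin 4, u k i * M k l * u l i := Finset.sum_comm
      _ ≤ 0 := Finset.sum_nonpos fun i _ => hLMI (fun k => u k i)
  have m00 : M 0 0 = 1 - ρ ^ 2 - 2 * l1 * L * m := rfl
  have m01 : M 0 1 = -α + l1 * (L + m) := rfl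
  have m02 : M 0 2 = (1:ℝ) := rfl
  have m03 : M 0 3 = -α := rfl
  have m10 : M 1 0 = -α + l1 * (L + m) := rfl
  have m11 : M 1 1 = α ^ 2 - 2 * l1 := rfl
  have m12 : M 1 2 = -α := rfl
  have m13 : M 1 3 = α ^ 2 := rfl
  have m20 : M 2 0 = (1:ℝ) := rfl
  have m21 : M 2 1 = -α := rfl
  have m22 : M 2 2 = 1 - l2 := rfl
  have m23 : M 2 3 = -α := rfl
  have m30 : M 3 0 = -α := rfl
  have m31 : M 3 1 = α ^ 2 := rfl
  have m32 : M 3 2 = -α := rfl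
  have m33 : M 3 3 = α ^ 2 - l3 := rfl
  have u0d : u 0 = x - xstar := rfl
  have u1d : u 1 = g := rfl
  have u2d : u 2 = xstar - xstar' := rfl
  have u3d : u 3 = v := rfl
  simp only [Fin.sum_univ_four, m00, m01, m02, m03, m10, m11, m12, m13, m20, m21,
    m22, m23, m30, m31, m32, m33, u0d, u1d, u2d, u3d] at key
  rw [real_inner_comm (x - xstar) g, real_inner_comm (x - xstar) (xstar - xstar'),
    real_inner_comm (x - xstar) v, real_inner_comm g (xstar - xstar'),
    real_inner_comm g v, real_inner_comm (xstar - xstar') v] at key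
  have hw : (x - α • (g + v)) - xstar'
      = (x - xstar) - α • g + ((xstar - xstar') - α • v) := by module
  have hT : ‖(x - α • (g + v)) - xstar'‖ ^ 2 =
      (inner ℝ (x - xstar) (x - xstar) : ℝ) + α ^ 2 * inner ℝ g g
      + (inner ℝ (xstar - xstar') (xstar - xstar') : ℝ) + α ^ 2 * inner ℝ v v
      - 2 * α * inner ℝ (x - xstar) g + 2 * inner ℝ (x - xstar) (xstar - xstar')
      - 2 * α * (inner ℝ (x - xstar) v : ℝ)
      - 2 * α * inner ℝ g (xstar - xstar') + 2 * α ^ 2 * (inner ℝ g v : ℝ)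
      - 2 * α * (inner ℝ (xstar - xstar') v : ℝ) := by
    rw [hw, ← real_inner_self_eq_norm_sq]
    simp only [inner_add_left, inner_add_right, inner_sub_left, inner_sub_right,
      real_inner_smul_left, real_inner_smul_right,
      real_inner_comm xstar x, real_inner_comm xstar' x, real_inner_comm g x,
      real_inner_comm v x, real_inner_comm xstar' xstar, real_inner_comm g xstar,
      real_inner_comm v xstar, real_inner_comm g xstar', real_inner_comm v xstar',
      real_inner_comm v g]
    ring
  have hsec := hsector x
  rw [← real_inner_self_eq_norm_sq, ← real_inner_self_eq_norm_sq, ← hg] at hsec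
  have h4 : 0 ≤ l1 * (2 * (L + m) * (inner ℝ (x - xstar) g : ℝ)
      - 2 * m * L * inner ℝ (x - xstar) (x - xstar) - 2 * inner ℝ g g) :=
    mul_nonneg hl1 (by linarith)
  have h2 : (inner ℝ (xstar - xstar') (xstar - xstar') : ℝ) ≤ σ ^ 2 := by
    rw [real_inner_self_eq_norm_sq, norm_sub_rev]
    exact pow_le_pow_left₀ (norm_nonneg _) hx' 2
  have h3 : (inner ℝ v v : ℝ) ≤ c ^ 2 := by
    rw [real_inner_self_eq_norm_sq]
    exact pow_le_pow_left₀ (norm_nonneg _) hv 2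
  rw [hT, ← real_inner_self_eq_norm_sq]
  linarith [mul_le_mul_of_nonneg_left h2 hl2, mul_le_mul_of_nonneg_left h3 hl3, key, h4]
end

section
/- Let 0 < m < L, 0 < α ≤ 2/L, σ ≥ 0, c ≥ 0, and U ≥ 0. Let T be the set of all tuples (ρ, λ₁, λ₂, λ₃) of nonnegative real numbers such that the matrix A(ρ,λ₁,λ₂,λ₃) is negative semidefinite. Then (μ(m,L,α) √U + σ + α c)² is the greatest lower bound of the set { ρ² U + λ₂ σ² + λ₃ c² : (ρ, λ₁, λ₂, λ₃) ∈ T }. -/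
private lemma cs3' (p q r a b d : ℝ) (hp : 0 < p) (hq : 0 < q) (hr : 0 < r) :
    (a + b + d)^2 ≤ ((p+q+r)/p)*a^2 + ((p+q+r)/q)*b^2 + ((p+q+r)/r)*d^2 := by
  rw [← sub_nonneg]
  have key : ((p+q+r)/p)*a^2 + ((p+q+r)/q)*b^2 + ((p+q+r)/r)*d^2 - (a+b+d)^2
      = (r*(q*a-p*b)^2 + q*(r*a-p*d)^2 + p*(r*b-q*d)^2)/(p*q*r) := by
    field_simp; ring
  rw [key]
  positivity

private lemma twobytwo (m L α : ℝ) (hm : 0 < m) (hmL : m < L) (hα : 0 < α)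
    (hαL : α ≤ 2 / L) :
    0 ≤ (if α ≤ 2 / (m + L) then 1 - m * α else α * L - 1) ∧
    0 ≤ α * (if α ≤ 2 / (m + L) then 1 - m * α else α * L - 1) / (L - m) ∧
    ∀ u v : ℝ, (u - α*v)^2 ≤ (if α ≤ 2 / (m + L) then 1 - m * α else α * L - 1)^2 * u^2
      + 2 * (α * (if α ≤ 2 / (m + L) then 1 - m * α else α * L - 1) / (L - m)) * ((v - m*u) * (v - L*u)) := by
  have hmL0 : 0 < m + L := by linarith
  have hLm : 0 < L - m := by linarith
  have hmm : α * m < α * L := mul_lt_mul_of_pos_left hmL hα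
  split_ifs with h
  · have h2 : α * (m + L) ≤ 2 := by
      rw [le_div_iff₀ hmL0] at h
      linarith
    have h2' : α * m + α * L ≤ 2 := by linarith [h2, mul_add α m L]
    have hK : 0 ≤ 1 - m * α := by rw [mul_comm]; linarith
    refine ⟨hK, by positivity, fun u v => ?_⟩
    rw [← sub_nonneg]
    have hid : (1 - m*α)^2 * u^2 + 2 * (α * (1 - m*α) / (L - m)) * ((v - m*u) * (v - L*u)) - (u - α*v)^2
        = (α * (2 - m*α - L*α) * (v - m*u)^2) / (L - m) := by
      field_simp; ring
    rw [hid]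
    have ht : 0 ≤ α * (2 - m*α - L*α) := by
      apply mul_nonneg hα.le
      have : m*α + L*α ≤ 2 := by linarith [h2', mul_comm α m, mul_comm α L]
      linarith
    positivity
  · push_neg at h
    have h2 : 2 ≤ α * (m + L) := by
      rw [div_lt_iff₀ hmL0] at h
      linarith
    have h2' : 2 ≤ α * m + α * L := by linarith [h2, mul_add α m L]
    have hK : 0 ≤ α * L - 1 := by linarith
    refine ⟨hK, by positivity, fun u v => ?_⟩
    rw [← sub_nonneg]
    have hid : (α*L - 1)^2 * u^2 + 2 * (α * (α*L - 1) / (L - m)) * ((v - m*u) * (v - L*u)) - (u - α*v)^2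
        = (α * (α*L + α*m - 2) * (v - L*u)^2) / (L - m) := by
      field_simp; ring
    rw [hid]
    have ht : 0 ≤ α * (α*L + α*m - 2) := by
      apply mul_nonneg hα.le
      linarith
    positivity

private lemma bnd (x δ S : ℝ) (hx : 0 ≤ x) (hδ : 0 < δ) (hS : 0 ≤ S) :
    (S/(x+δ))*x^2 ≤ S*x := by
  rw [div_mul_eq_mul_div, div_le_iff₀ (by linarith)]
  have h0 : 0 ≤ S*x*δ := mul_nonneg (mul_nonneg hS hx) hδ.le
  have hr : S*x*(x+δ) = S*x^2 + S*x*δ := by ring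
  rw [hr]
  linarith

set_option maxHeartbeats 1000000 in
theorem stmt_3 (m L α σ c U : ℝ)
    (hm : 0 < m) (hmL : m < L) (hα : 0 < α) (hαL : α ≤ 2 / L)
    (hσ : 0 ≤ σ) (hc : 0 ≤ c) (hU : 0 ≤ U) :
    IsGLB { y : ℝ | ∃ ρ l1 l2 l3 : ℝ,
        0 ≤ ρ ∧ 0 ≤ l1 ∧ 0 ≤ l2 ∧ 0 ≤ l3 ∧
        (∀ z : Fin 4 → ℝ,
          ∑ k, ∑ l, z k *
            (!![1 - ρ ^ 2 - 2 * l1 * L * m, -α + l1 * (L + m), 1, -α;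
                -α + l1 * (L + m), α ^ 2 - 2 * l1, -α, α ^ 2;
                1, -α, 1 - l2, -α;
                -α, α ^ 2, -α, α ^ 2 - l3] k l) * z l ≤ 0) ∧
        y = ρ ^ 2 * U + l2 * σ ^ 2 + l3 * c ^ 2 }
      (((if α ≤ 2 / (m + L) then 1 - m * α else α * L - 1) * Real.sqrt U + σ + α * c) ^ 2) := by
  obtain ⟨hK0, hlam0, hkey⟩ := twobytwo m L α hm hmL hα hαL
  obtain ⟨K, hKdef⟩ : ∃ x : ℝ, x = (if α ≤ 2 / (m + L) then 1 - m * α else α * L - 1) :=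
    ⟨_, rfl⟩
  rw [← hKdef] at hK0 hlam0 hkey ⊢
  obtain ⟨lam, hlamdef⟩ : ∃ x : ℝ, x = α * K / (L - m) := ⟨_, rfl⟩
  rw [← hlamdef] at hlam0 hkey
  obtain ⟨s, hsdef⟩ : ∃ x : ℝ, x = Real.sqrt U := ⟨_, rfl⟩
  rw [← hsdef]
  have hs0 : 0 ≤ s := hsdef ▸ Real.sqrt_nonneg U
  have hs2 : s^2 = U := by rw [hsdef]; exact Real.sq_sqrt hU
  constructor
  · -- lower bound
    rintro y ⟨ρ, l1, l2, l3, hρ, hl1, hl2, hl3, hA, rfl⟩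
    by_cases h : α ≤ 2 / (m + L)
    · have hKeq : K = 1 - m*α := by rw [hKdef, if_pos h]
      have h0 := hA ![s, m*s, σ, -c]
      have hz : ((1 - m*α)*s + σ + α*c)^2 - (ρ^2*s^2 + l2*σ^2 + l3*c^2) ≤ 0 := by
        refine le_trans (le_of_eq ?_) h0
        simp [Fin.sum_univ_four]
        ring
      rw [hKeq, ← hs2]
      exact sub_nonpos.mp hz
    · have hKeq : K = α*L - 1 := by rw [hKdef, if_neg h]
      have h0 := hA ![-s, -(L*s), σ, -c]
      have hz : ((α*L - 1)*s + σ + α*c)^2 - (ρ^2*s^2 + l2*σ^2 + l3*c^2) ≤ 0 := by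
        refine le_trans (le_of_eq ?_) h0
        simp [Fin.sum_univ_four]
        ring
      rw [hKeq, ← hs2]
      exact sub_nonpos.mp hz
  · -- greatest lower bound
    rintro b hb
    obtain ⟨G, hGdef⟩ : ∃ x : ℝ, x = K * s + σ + α * c := ⟨_, rfl⟩
    rw [← hGdef]
    have hG0 : 0 ≤ G := by rw [hGdef]; positivity
    apply le_of_forall_pos_le_add
    intro ε hε
    obtain ⟨δ, hδdef⟩ : ∃ x : ℝ, x = ε / (3 * (G + 1)) := ⟨_, rfl⟩
    have hδ0 : 0 < δ := by rw [hδdef]; positivity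
    obtain ⟨p, hpdef⟩ : ∃ x : ℝ, x = K * s + δ := ⟨_, rfl⟩
    obtain ⟨q, hqdef⟩ : ∃ x : ℝ, x = σ + δ := ⟨_, rfl⟩
    obtain ⟨r, hrdef⟩ : ∃ x : ℝ, x = α * c + δ := ⟨_, rfl⟩
    have hp : 0 < p := by rw [hpdef]; positivity
    have hq : 0 < q := by rw [hqdef]; positivity
    have hr : 0 < r := by rw [hrdef]; positivity
    obtain ⟨S, hSdef⟩ : ∃ x : ℝ, x = p + q + r := ⟨_, rfl⟩
    have hS0 : 0 < S := by rw [hSdef]; positivity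
    obtain ⟨w1, hw1def⟩ : ∃ x : ℝ, x = S / p := ⟨_, rfl⟩
    obtain ⟨w2, hw2def⟩ : ∃ x : ℝ, x = S / q := ⟨_, rfl⟩
    obtain ⟨w3, hw3def⟩ : ∃ x : ℝ, x = S / r := ⟨_, rfl⟩
    have hw1 : 0 < w1 := by rw [hw1def]; positivity
    have hw2 : 0 < w2 := by rw [hw2def]; positivity
    have hw3 : 0 < w3 := by rw [hw3def]; positivity
    obtain ⟨ρ, hρdef⟩ : ∃ x : ℝ, x = K * Real.sqrt w1 := ⟨_, rfl⟩
    have hρ0 : 0 ≤ ρ := by rw [hρdef]; positivity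
    have hρ2 : ρ^2 = w1 * K^2 := by
      rw [hρdef, mul_pow, Real.sq_sqrt hw1.le]; ring
    have hmem : w1 * K^2 * U + w2 * σ^2 + (w3 * α^2) * c^2 ∈
        { y : ℝ | ∃ ρ l1 l2 l3 : ℝ,
        0 ≤ ρ ∧ 0 ≤ l1 ∧ 0 ≤ l2 ∧ 0 ≤ l3 ∧
        (∀ z : Fin 4 → ℝ,
          ∑ k, ∑ l, z k *
            (!![1 - ρ ^ 2 - 2 * l1 * L * m, -α + l1 * (L + m), 1, -α;
                -α + l1 * (L + m), α ^ 2 - 2 * l1, -α, α ^ 2;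
                1, -α, 1 - l2, -α;
                -α, α ^ 2, -α, α ^ 2 - l3] k l) * z l ≤ 0) ∧
        y = ρ ^ 2 * U + l2 * σ ^ 2 + l3 * c ^ 2 } := by
      refine ⟨ρ, w1 * lam, w2, w3 * α^2, hρ0, by positivity, hw2.le, by positivity, ?_,
        by rw [hρ2]⟩
      intro z
      have h1 := hkey (z 0) (z 1)
      have h1' := mul_le_mul_of_nonneg_left h1 hw1.le
      have hcs := cs3' p q r (z 0 - α * z 1) (z 2) (-(α * z 3)) hp hq hr
      rw [← hSdef, ← hw1def, ← hw2def, ← hw3def] at hcs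
      refine le_trans (le_of_eq ?_)
        (add_nonpos (sub_nonpos.mpr hcs) (sub_nonpos.mpr h1'))
      simp [Fin.sum_univ_four]
      rw [hρ2]
      ring
    have hby := hb hmem
    have hv1 : w1 * K^2 * U ≤ S * (K * s) := by
      have he : w1 * K^2 * U = (S/(K*s + δ)) * (K*s)^2 := by
        rw [hw1def, hpdef, ← hs2]; ring
      rw [he]
      exact bnd (K*s) δ S (by positivity) hδ0 hS0.le
    have hv2 : w2 * σ^2 ≤ S * σ := by
      have he : w2 * σ^2 = (S/(σ + δ)) * σ^2 := by rw [hw2def, hqdef]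
      rw [he]; exact bnd σ δ S hσ hδ0 hS0.le
    have hv3 : (w3 * α^2) * c^2 ≤ S * (α * c) := by
      have he : (w3 * α^2) * c^2 = (S/(α*c + δ)) * (α*c)^2 := by rw [hw3def, hrdef]; ring
      rw [he]; exact bnd (α*c) δ S (by positivity) hδ0 hS0.le
    have hSG : S = G + 3*δ := by rw [hSdef, hpdef, hqdef, hrdef, hGdef]; ring
    have h3δG : 3*δ*G ≤ ε := by
      rw [hδdef]
      have hG1 : (0:ℝ) < G + 1 := by linarith
      have h1 : G / (G+1) ≤ 1 := by rw [div_le_one hG1]; linarith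
      have heq : 3 * (ε / (3*(G+1))) * G = ε * (G/(G+1)) := by field_simp
      rw [heq]
      calc ε * (G/(G+1)) ≤ ε * 1 := mul_le_mul_of_nonneg_left h1 hε.le
        _ = ε := mul_one ε
    calc b ≤ w1 * K^2 * U + w2 * σ^2 + (w3 * α^2) * c^2 := hby
      _ ≤ S * (K * s) + S * σ + S * (α * c) := add_le_add (add_le_add hv1 hv2) hv3
      _ = S * G := by rw [hGdef]; ring
      _ = G^2 + 3*δ*G := by rw [hSG]; ring
      _ ≤ G^2 + ε := add_le_add_right h3δG _
end

section
/- Let 0 < m ≤ L, α ≥ 0, σ ≥ 0, δ > 0, and let f : ℝ^p → ℝ be a differentiable function satisfying the sector condition S(m,L) at a point x* ∈ ℝ^p. Let x, v, x*' ∈ ℝ^p with ‖x*' − x*‖ ≤ σ and ‖v‖ ≤ δ ‖∇f(x)‖, and set x⁺ := x − α(∇f(x) + v). If there exist nonnegative reals ρ, λ₁, λ₂, λ₃ such that the matrix A_δ(ρ,λ₁,λ₂,λ₃) is negative semidefinite, then ‖x⁺ − x*'‖² ≤ ρ² ‖x − x*‖² + λ₂ σ². -/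
set_option maxHeartbeats 1000000

lemma lmi_vec (p : ℕ) (A : Matrix (Fin 4) (Fin 4) ℝ)
    (h : ∀ z : Fin 4 → ℝ, ∑ k, ∑ l, z k * A k l * z l ≤ 0)
    (u : Fin 4 → EuclideanSpace ℝ (Fin p)) :
    ∑ k, ∑ l, A k l * (@inner ℝ _ _ (u k) (u l)) ≤ 0 := by
  have hi : ∀ k l, (@inner ℝ _ _ (u k) (u l)) = ∑ i, u k i * u l i := by
    intro k l
    simp [PiLp.inner_apply, RCLike.inner_apply, mul_comm]
  have key : ∀ k l, A k l * (@inner ℝ _ _ (u k) (u l)) = ∑ i, u k i * A k l * u l i := by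
    intro k l
    rw [hi, Finset.mul_sum]
    exact Finset.sum_congr rfl fun i _ => by ring
  simp_rw [key]
  rw [Finset.sum_comm]
  have : ∀ l : Fin 4, ∑ k, ∑ i, u k i * A k l * u l i
      = ∑ i, ∑ k, u k i * A k l * u l i := fun l => Finset.sum_comm
  simp_rw [this]
  rw [Finset.sum_comm]
  exact Finset.sum_nonpos fun i _ => by rw [Finset.sum_comm]; exact h (fun k => u k i)

theorem stmt_4 (p : ℕ) (m L α σ δ : ℝ)
    (hm : 0 < m) (hmL : m ≤ L) (hα : 0 ≤ α) (hσ : 0 ≤ σ) (hδ : 0 < δ)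
    (f : EuclideanSpace ℝ (Fin p) → ℝ) (xstar : EuclideanSpace ℝ (Fin p))
    (hf : Differentiable ℝ f)
    (hcrit : gradient f xstar = 0)
    (hsector : ∀ x : EuclideanSpace ℝ (Fin p),
      2 * m * L * ‖x - xstar‖ ^ 2 + 2 * ‖gradient f x‖ ^ 2 ≤
        2 * (L + m) * (@inner ℝ _ _ (x - xstar) (gradient f x)))
    (x v xstar' : EuclideanSpace ℝ (Fin p))
    (hx' : ‖xstar' - xstar‖ ≤ σ) (hv : ‖v‖ ≤ δ * ‖gradient f x‖)
    (ρ l1 l2 l3 : ℝ) (hρ : 0 ≤ ρ) (hl1 : 0 ≤ l1) (hl2 : 0 ≤ l2) (hl3 : 0 ≤ l3)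
    (hLMI : ∀ z : Fin 4 → ℝ,
      ∑ k, ∑ l, z k *
        (!![1 - ρ ^ 2 - 2 * l1 * L * m, -α + l1 * (L + m), 1, -α;
            -α + l1 * (L + m), α ^ 2 - 2 * l1 + δ ^ 2 * l3, -α, α ^ 2;
            1, -α, 1 - l2, -α;
            -α, α ^ 2, -α, α ^ 2 - l3] k l) * z l ≤ 0) :
    ‖(x - α • (gradient f x + v)) - xstar'‖ ^ 2 ≤
      ρ ^ 2 * ‖x - xstar‖ ^ 2 + l2 * σ ^ 2 := by
  set g := gradient f x with hg
  set e := x - xstar with he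
  set s := xstar - xstar' with hs
  have hQ := lmi_vec p _ hLMI ![e, g, s, v]
  simp only [Fin.sum_univ_four, Matrix.cons_val_zero, Matrix.cons_val_one, Matrix.head_cons,
    Matrix.cons_val_two, Matrix.tail_cons, Matrix.cons_val_three, Matrix.head_fin_const,
    Matrix.cons_val', Matrix.empty_val', Matrix.cons_val_fin_one, Matrix.of_apply] at hQ
  have hsec := hsector x
  rw [← he, ← hg] at hsec
  have hsσ : ‖s‖ ≤ σ := by rw [hs, ← norm_neg]; simpa using hx'
  have hrw : (x - α • (g + v)) - xstar' = e + s - α • (g + v) := by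
    rw [he, hs]; abel
  rw [hrw]
  clear_value g e s
  clear hs he hg hrw hsector hcrit hf hx' hLMI
  have hexp : ‖e + s - α • (g + v)‖ ^ 2 =
      ‖e‖^2 + ‖s‖^2 + α^2*‖g‖^2 + α^2*‖v‖^2
      + 2*(@inner ℝ _ _ e s) - 2*α*(@inner ℝ _ _ e g) - 2*α*(@inner ℝ _ _ e v)
      - 2*α*(@inner ℝ _ _ s g) - 2*α*(@inner ℝ _ _ s v)
      + 2*α^2*(@inner ℝ _ _ g v) := by
    rw [← @real_inner_self_eq_norm_sq (EuclideanSpace ℝ (Fin p)) _ _ (e + s - α • (g + v))]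
    simp only [inner_sub_left, inner_sub_right, inner_add_left, inner_add_right,
      real_inner_smul_left, real_inner_smul_right]
    rw [real_inner_comm e s, real_inner_comm e g, real_inner_comm e v,
      real_inner_comm s g, real_inner_comm s v, real_inner_comm g v,
      real_inner_self_eq_norm_sq e, real_inner_self_eq_norm_sq s,
      real_inner_self_eq_norm_sq g, real_inner_self_eq_norm_sq v]
    ring
  rw [hexp]
  have hv2 : ‖v‖^2 ≤ δ^2 * ‖g‖^2 := by
    nlinarith [norm_nonneg g, norm_nonneg v]
  have hs2 : ‖s‖^2 ≤ σ^2 := by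
    nlinarith [norm_nonneg s]
  rw [real_inner_self_eq_norm_sq e, real_inner_self_eq_norm_sq s,
    real_inner_self_eq_norm_sq g, real_inner_self_eq_norm_sq v] at hQ
  have c1 : (@inner ℝ _ _ g e) = (@inner ℝ _ _ e g) := real_inner_comm e g
  have c2 : (@inner ℝ _ _ s e) = (@inner ℝ _ _ e s) := real_inner_comm e s
  have c3 : (@inner ℝ _ _ g s) = (@inner ℝ _ _ s g) := real_inner_comm s g
  have c4 : (@inner ℝ _ _ v e) = (@inner ℝ _ _ e v) := real_inner_comm e v
  have c5 : (@inner ℝ _ _ v g) = (@inner ℝ _ _ g v) := real_inner_comm g v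
  have c6 : (@inner ℝ _ _ v s) = (@inner ℝ _ _ s v) := real_inner_comm s v
  have h1 := mul_le_mul_of_nonneg_left hsec hl1
  have h2 := mul_le_mul_of_nonneg_left hs2 hl2
  have h3 := mul_le_mul_of_nonneg_left hv2 hl3
  rw [c1, c2, c3, c4, c5, c6] at hQ
  ring_nf at hQ h1 h2 h3 ⊢
  linarith [c1, c2, c3, c4, c5, c6]
end

section
/- Let 0 < m ≤ L, 0 ≤ δ ≤ m/L with δ < 1, 0 ≤ α ≤ 2(m−δL)/(L²(1−δ²)), σ ≥ 0, c ≥ 0, and U ≥ 0. Let T be the set of all tuples (ρ, λ₁, λ₂, λ₃, λ₄) of nonnegative real numbers such that the matrix B(ρ,λ₁,λ₂,λ₃,λ₄) is negative semidefinite. Then ( √((1 − 2mα + α²L²) U) + α √(c² + δ² L² U) + σ )² is the greatest lower bound of the set { ρ² U + λ₂ σ² + λ₃ c² : (ρ, λ₁, λ₂, λ₃, λ₄) ∈ T }. -/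
set_option maxHeartbeats 1000000 in
theorem stmt_7 (m L α σ δ c U : ℝ)
    (hm : 0 < m) (hmL : m ≤ L)
    (hδ0 : 0 ≤ δ) (hδ1 : δ ≤ m / L) (hδ2 : δ < 1)
    (hα0 : 0 ≤ α) (hα1 : α ≤ 2 * (m - δ * L) / (L ^ 2 * (1 - δ ^ 2)))
    (hσ : 0 ≤ σ) (hc : 0 ≤ c) (hU : 0 ≤ U) :
    IsGLB { y : ℝ | ∃ ρ l1 l2 l3 l4 : ℝ,
        0 ≤ ρ ∧ 0 ≤ l1 ∧ 0 ≤ l2 ∧ 0 ≤ l3 ∧ 0 ≤ l4 ∧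
        (∀ z : Fin 4 → ℝ,
          ∑ k, ∑ l, z k *
            (!![1 - ρ ^ 2 + l4 * L ^ 2 - 2 * l1 * m, l1 - α, 1, -α;
                l1 - α, α ^ 2 - l4 + δ ^ 2 * l3, -α, α ^ 2;
                1, -α, 1 - l2, -α;
                -α, α ^ 2, -α, α ^ 2 - l3] k l) * z l ≤ 0) ∧
        y = ρ ^ 2 * U + l2 * σ ^ 2 + l3 * c ^ 2 }
      ((Real.sqrt ((1 - 2 * m * α + α ^ 2 * L ^ 2) * U) +
          α * Real.sqrt (c ^ 2 + δ ^ 2 * L ^ 2 * U) + σ) ^ 2) := by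
  have hL : 0 < L := hm.trans_le hmL
  have hmL2 : m ^ 2 ≤ L ^ 2 := by nlinarith
  have hκ0 : 0 ≤ 1 - 2 * m * α + α ^ 2 * L ^ 2 := by
    nlinarith [sq_nonneg (1 - α * m), mul_nonneg (sq_nonneg α) (sub_nonneg.2 hmL2)]
  set a := Real.sqrt ((1 - 2 * m * α + α ^ 2 * L ^ 2) * U) with hadef
  set b := Real.sqrt (c ^ 2 + δ ^ 2 * L ^ 2 * U) with hbdef
  have ha0 : 0 ≤ a := Real.sqrt_nonneg _
  have hb0 : 0 ≤ b := Real.sqrt_nonneg _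
  have ha : a ^ 2 = (1 - 2 * m * α + α ^ 2 * L ^ 2) * U :=
    Real.sq_sqrt (mul_nonneg hκ0 hU)
  have hb : b ^ 2 = c ^ 2 + δ ^ 2 * L ^ 2 * U := Real.sq_sqrt (by positivity)
  clear_value a b
  constructor
  · rintro y ⟨ρ, l1, l2, l3, l4, hρ0, h10, h20, h30, h40, hB, rfl⟩
    rcases eq_or_lt_of_le ha0 with haz | hap
    · have haz : a = 0 := haz.symm
      have hκU : (1 - 2 * m * α + α ^ 2 * L ^ 2) * U = 0 := by rw [← ha, haz]; ring
      rcases hU.lt_or_eq with hUp | hU0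
      · -- 0 < U, so κ = 0, hence α*m = 1 and L = m
        have hκz : 1 - 2 * m * α + α ^ 2 * L ^ 2 = 0 := by
          rcases mul_eq_zero.1 hκU with h | h
          · exact h
          · exfalso; linarith
        have h2 : (1 - α * m) ^ 2 = 0 := le_antisymm
          (by nlinarith [mul_nonneg (sq_nonneg α) (sub_nonneg.2 hmL2)]) (sq_nonneg _)
        have h3 : 1 - α * m = 0 := pow_eq_zero_iff two_ne_zero |>.mp h2
        have hαm : α * m = 1 := by linarith
        have hα : 0 < α := by
          rcases lt_or_ge 0 α with h | h
          · exact h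
          · exfalso; nlinarith [mul_nonneg (neg_nonneg.2 h) hm.le]
        have hL2 : α ^ 2 * (L ^ 2 - m ^ 2) = 0 := by linear_combination hκz - h2
        have hLm : L = m := by
          have h6 : L ^ 2 - m ^ 2 = 0 := by
            rcases mul_eq_zero.1 hL2 with h | h
            · exact absurd (pow_eq_zero_iff two_ne_zero |>.mp h) (ne_of_gt hα)
            · exact h
          have h7 : (L - m) * (L + m) = 0 := by linear_combination h6
          rcases mul_eq_zero.1 h7 with h | h
          · linarith
          · linarith
        subst hLm
        obtain ⟨s, hsdef⟩ : ∃ x : ℝ, x = Real.sqrt U := ⟨_, rfl⟩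
        have hs : s ^ 2 = U := by rw [hsdef]; exact Real.sq_sqrt hU
        have h := hB ![s, L * s, σ, -b]
        simp [Fin.sum_univ_four, Matrix.cons_val_zero, Matrix.cons_val_one,
          Matrix.head_cons, Matrix.cons_val', Matrix.empty_val',
          Matrix.cons_val_fin_one, Matrix.head_fin_const] at h
        have e1 : ρ ^ 2 * s ^ 2 = ρ ^ 2 * U := by rw [hs]
        have e2 : l3 * b ^ 2 = l3 * c ^ 2 + l3 * δ ^ 2 * L ^ 2 * U := by rw [hb]; ring
        have e5 : δ ^ 2 * l3 * L ^ 2 * s ^ 2 = δ ^ 2 * l3 * L ^ 2 * U := by rw [hs]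
        have e6 : α * L * s ^ 2 = s ^ 2 := by linear_combination s ^ 2 * hαm
        have e7 : α ^ 2 * L ^ 2 * s ^ 2 = s ^ 2 := by
          linear_combination (α * L + 1) * s ^ 2 * hαm
        have e8 : α * L * σ * s = σ * s := by linear_combination σ * s * hαm
        have e9 : α ^ 2 * L * s * b = α * s * b := by linear_combination α * s * b * hαm
        rw [haz]
        linarith [h, e1, e2, e5, e6, e7, e8, e9]
      · -- U = 0
        subst hU0
        have hbc : b ^ 2 = c ^ 2 := by rw [hb]; ring
        have h := hB ![0, 0, σ, -b]
        simp [Fin.sum_univ_four, Matrix.cons_val_zero, Matrix.cons_val_one,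
          Matrix.head_cons, Matrix.cons_val', Matrix.empty_val',
          Matrix.cons_val_fin_one, Matrix.head_fin_const] at h
        have e : l3 * b ^ 2 = l3 * c ^ 2 := by rw [hbc]
        rw [haz]
        linarith [h, e]
    · -- 0 < a
      have hUp : 0 < U := by
        rcases hU.lt_or_eq with h | h
        · exact h
        · exfalso; rw [← h] at ha; nlinarith [hap]
      obtain ⟨g1, hg1def⟩ : ∃ x : ℝ, x = (m - α * L ^ 2) * U / a := ⟨_, rfl⟩
      have haN : a ≠ 0 := ne_of_gt hap
      have hag1 : a * g1 = (m - α * L ^ 2) * U := by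
        rw [hg1def]; field_simp
      have hg1sq : a ^ 2 * g1 ^ 2 = (m - α * L ^ 2) ^ 2 * U ^ 2 := by
        linear_combination (a * g1 + (m - α * L ^ 2) * U) * hag1
      have hnn : 0 ≤ L ^ 2 * U - g1 ^ 2 := by
        have h4 : a ^ 2 * (L ^ 2 * U - g1 ^ 2) = (L ^ 2 - m ^ 2) * U ^ 2 := by
          linear_combination L ^ 2 * U * ha - hg1sq
        have h5 : 0 ≤ (L ^ 2 - m ^ 2) * U ^ 2 :=
          mul_nonneg (by linarith) (sq_nonneg U)
        nlinarith [mul_pos hap hap]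
      obtain ⟨g2, hg2def⟩ : ∃ x : ℝ, x = Real.sqrt (L ^ 2 * U - g1 ^ 2) := ⟨_, rfl⟩
      have hg2 : g2 ^ 2 = L ^ 2 * U - g1 ^ 2 := by rw [hg2def]; exact Real.sq_sqrt hnn
      have hx1 : (α * g1 + a) ^ 2 + (α * g2) ^ 2 = U := by
        linear_combination α ^ 2 * hg2 + 2 * α * hag1 + ha
      have hx2 : (α * g1 + a) * g1 + (α * g2) * g2 = m * U := by
        linear_combination α * hg2 + hag1
      have hgg : g1 ^ 2 + g2 ^ 2 = L ^ 2 * U := by linear_combination hg2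
      have hq1 : (a + σ + α * b) ^ 2 + 2 * l1 * ((α * g1 + a) * g1)
          + (δ ^ 2 * l3 - l4) * g1 ^ 2
          - (ρ ^ 2 - l4 * L ^ 2 + 2 * l1 * m) * (α * g1 + a) ^ 2
          - l2 * σ ^ 2 - l3 * b ^ 2 ≤ 0 := by
        have h := hB ![α * g1 + a, g1, σ, -b]
        simp [Fin.sum_univ_four, Matrix.cons_val_zero, Matrix.cons_val_one,
          Matrix.head_cons, Matrix.cons_val', Matrix.empty_val',
          Matrix.cons_val_fin_one, Matrix.head_fin_const] at h
        linarith [h]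
      have hq2 : 2 * l1 * ((α * g2) * g2) + (δ ^ 2 * l3 - l4) * g2 ^ 2
          - (ρ ^ 2 - l4 * L ^ 2 + 2 * l1 * m) * (α * g2) ^ 2 ≤ 0 := by
        have h := hB ![α * g2, g2, 0, 0]
        simp [Fin.sum_univ_four, Matrix.cons_val_zero, Matrix.cons_val_one,
          Matrix.head_cons, Matrix.cons_val', Matrix.empty_val',
          Matrix.cons_val_fin_one, Matrix.head_fin_const] at h
        linarith [h]
      have hS : ((a + σ + α * b) ^ 2 + 2 * l1 * ((α * g1 + a) * g1)
          + (δ ^ 2 * l3 - l4) * g1 ^ 2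
          - (ρ ^ 2 - l4 * L ^ 2 + 2 * l1 * m) * (α * g1 + a) ^ 2
          - l2 * σ ^ 2 - l3 * b ^ 2)
          + (2 * l1 * ((α * g2) * g2) + (δ ^ 2 * l3 - l4) * g2 ^ 2
          - (ρ ^ 2 - l4 * L ^ 2 + 2 * l1 * m) * (α * g2) ^ 2)
          = (a + α * b + σ) ^ 2 - (ρ ^ 2 * U + l2 * σ ^ 2 + l3 * c ^ 2) := by
        linear_combination (2 * l1) * hx2 + (δ ^ 2 * l3 - l4) * hgg
          - (ρ ^ 2 - l4 * L ^ 2 + 2 * l1 * m) * hx1 - l3 * hb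
      linarith [hq1, hq2, hS]
  · intro w hw
    apply le_of_forall_pos_le_add
    intro ε hε
    have hab0 : 0 ≤ α * b := mul_nonneg hα0 hb0
    have ht0 : 0 ≤ a + α * b + σ := by linarith
    have hden : 0 < 6 * (a + α * b + σ) + 9 := by linarith
    obtain ⟨η, hηdef⟩ : ∃ x : ℝ, x = min 1 (ε / (6 * (a + α * b + σ) + 9)) := ⟨_, rfl⟩
    have hη0 : 0 < η := by rw [hηdef]; exact lt_min one_pos (div_pos hε hden)
    have hηle : η ≤ ε / (6 * (a + α * b + σ) + 9) := by rw [hηdef]; exact min_le_right _ _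
    obtain ⟨A, hA⟩ : ∃ x : ℝ, x = a + η := ⟨_, rfl⟩
    obtain ⟨Bw, hBw⟩ : ∃ x : ℝ, x = α * b + η := ⟨_, rfl⟩
    obtain ⟨S', hS'⟩ : ∃ x : ℝ, x = σ + η := ⟨_, rfl⟩
    obtain ⟨T, hT⟩ : ∃ x : ℝ, x = A + Bw + S' := ⟨_, rfl⟩
    have hA0 : 0 < A := by rw [hA]; linarith
    have hBw0 : 0 < Bw := by rw [hBw]; linarith
    have hS'0 : 0 < S' := by rw [hS']; linarith
    have hT0 : 0 < T := by rw [hT]; linarith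
    have hAne : A ≠ 0 := ne_of_gt hA0
    have hBwne : Bw ≠ 0 := ne_of_gt hBw0
    have hS'ne : S' ≠ 0 := ne_of_gt hS'0
    have hTne : T ≠ 0 := ne_of_gt hT0
    obtain ⟨l1, hl1⟩ : ∃ x : ℝ, x = T * α / A := ⟨_, rfl⟩
    obtain ⟨l2, hl2⟩ : ∃ x : ℝ, x = T / S' := ⟨_, rfl⟩
    obtain ⟨l3, hl3⟩ : ∃ x : ℝ, x = T * α ^ 2 / Bw := ⟨_, rfl⟩
    obtain ⟨l4, hl4⟩ : ∃ x : ℝ, x = T * α ^ 2 / A + δ ^ 2 * l3 := ⟨_, rfl⟩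
    have hl30 : 0 ≤ l3 := by
      rw [hl3]; exact div_nonneg (mul_nonneg hT0.le (sq_nonneg α)) hBw0.le
    obtain ⟨ρ, hρdef⟩ : ∃ x : ℝ, x = Real.sqrt (T * ((1 - 2 * m * α + α ^ 2 * L ^ 2) / A
        + α ^ 2 * δ ^ 2 * L ^ 2 / Bw)) := ⟨_, rfl⟩
    have hρ0 : 0 ≤ ρ := by rw [hρdef]; exact Real.sqrt_nonneg _
    have hρ2 : ρ ^ 2 = T * ((1 - 2 * m * α + α ^ 2 * L ^ 2) / A
        + α ^ 2 * δ ^ 2 * L ^ 2 / Bw) := by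
      rw [hρdef]
      exact Real.sq_sqrt (mul_nonneg hT0.le (add_nonneg (div_nonneg hκ0 hA0.le)
        (by positivity)))
    have hNSD : ∀ z : Fin 4 → ℝ,
        ∑ k, ∑ l, z k *
          (!![1 - ρ ^ 2 + l4 * L ^ 2 - 2 * l1 * m, l1 - α, 1, -α;
              l1 - α, α ^ 2 - l4 + δ ^ 2 * l3, -α, α ^ 2;
              1, -α, 1 - l2, -α;
              -α, α ^ 2, -α, α ^ 2 - l3] k l) * z l ≤ 0 := by
      intro z
      have hE : (∑ k, ∑ l, z k *
          (!![1 - ρ ^ 2 + l4 * L ^ 2 - 2 * l1 * m, l1 - α, 1, -α;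
              l1 - α, α ^ 2 - l4 + δ ^ 2 * l3, -α, α ^ 2;
              1, -α, 1 - l2, -α;
              -α, α ^ 2, -α, α ^ 2 - l3] k l) * z l)
          = ((z 0 - α * z 1) + z 2 - α * z 3) ^ 2
            - T * ((z 0 - α * z 1) ^ 2 / A + (z 2) ^ 2 / S' + (α * z 3) ^ 2 / Bw) := by
        simp [Fin.sum_univ_four, Matrix.cons_val_zero, Matrix.cons_val_one,
          Matrix.head_cons, Matrix.cons_val', Matrix.empty_val',
          Matrix.cons_val_fin_one, Matrix.head_fin_const]
        rw [hρ2, hl1, hl2, hl4, hl3]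
        field_simp
        ring
      rw [hE]
      have key : ((z 0 - α * z 1) + z 2 - α * z 3) ^ 2
          ≤ T * ((z 0 - α * z 1) ^ 2 / A + (z 2) ^ 2 / S' + (α * z 3) ^ 2 / Bw) := by
        obtain ⟨X, hX⟩ : ∃ x : ℝ, x = z 0 - α * z 1 := ⟨_, rfl⟩
        obtain ⟨Y, hY⟩ : ∃ x : ℝ, x = z 2 := ⟨_, rfl⟩
        obtain ⟨W, hW⟩ : ∃ x : ℝ, x = α * z 3 := ⟨_, rfl⟩
        rw [← hX, ← hY, ← hW, ← sub_nonneg]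
        have expand : T * (X ^ 2 / A + Y ^ 2 / S' + W ^ 2 / Bw) - (X + Y - W) ^ 2
            = (T * (X ^ 2 * (S' * Bw) + Y ^ 2 * (A * Bw) + W ^ 2 * (A * S'))
              - (X + Y - W) ^ 2 * (A * S' * Bw)) / (A * S' * Bw) := by
          field_simp
        rw [expand]
        apply div_nonneg _ (le_of_lt (by positivity))
        rw [hT]
        have idq : (A + Bw + S') * (X ^ 2 * (S' * Bw) + Y ^ 2 * (A * Bw) + W ^ 2 * (A * S'))
            - (X + Y - W) ^ 2 * (A * S' * Bw)
            = Bw * (S' * X - A * Y) ^ 2 + S' * (Bw * X + A * W) ^ 2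
              + A * (Bw * Y + S' * W) ^ 2 := by ring
        linarith [idq, mul_nonneg hBw0.le (sq_nonneg (S' * X - A * Y)),
          mul_nonneg hS'0.le (sq_nonneg (Bw * X + A * W)),
          mul_nonneg hA0.le (sq_nonneg (Bw * Y + S' * W))]
      linarith [key]
    have hmem : (ρ ^ 2 * U + l2 * σ ^ 2 + l3 * c ^ 2) ∈ { y : ℝ | ∃ ρ l1 l2 l3 l4 : ℝ,
          0 ≤ ρ ∧ 0 ≤ l1 ∧ 0 ≤ l2 ∧ 0 ≤ l3 ∧ 0 ≤ l4 ∧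
          (∀ z : Fin 4 → ℝ,
            ∑ k, ∑ l, z k *
              (!![1 - ρ ^ 2 + l4 * L ^ 2 - 2 * l1 * m, l1 - α, 1, -α;
                  l1 - α, α ^ 2 - l4 + δ ^ 2 * l3, -α, α ^ 2;
                  1, -α, 1 - l2, -α;
                  -α, α ^ 2, -α, α ^ 2 - l3] k l) * z l ≤ 0) ∧
          y = ρ ^ 2 * U + l2 * σ ^ 2 + l3 * c ^ 2 } := by
      refine ⟨ρ, l1, l2, l3, l4, hρ0, ?_, ?_, hl30, ?_, hNSD, rfl⟩
      · rw [hl1]; exact div_nonneg (mul_nonneg hT0.le hα0) hA0.le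
      · rw [hl2]; exact div_nonneg hT0.le hS'0.le
      · rw [hl4]
        exact add_nonneg (div_nonneg (mul_nonneg hT0.le (sq_nonneg α)) hA0.le)
          (mul_nonneg (sq_nonneg δ) hl30)
    have h1 : w ≤ ρ ^ 2 * U + l2 * σ ^ 2 + l3 * c ^ 2 := hw hmem
    have c1 : T * ((1 - 2 * m * α + α ^ 2 * L ^ 2) / A) * U = T * (a ^ 2 / A) := by
      rw [ha]; ring
    have c2 : T * (α ^ 2 * δ ^ 2 * L ^ 2 / Bw) * U + T * α ^ 2 / Bw * c ^ 2
        = T * ((α * b) ^ 2 / Bw) := by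
      rw [mul_pow]
      rw [hb]
      field_simp
      ring
    have hval : ρ ^ 2 * U + l2 * σ ^ 2 + l3 * c ^ 2
        = T * (a ^ 2 / A + σ ^ 2 / S' + (α * b) ^ 2 / Bw) := by
      rw [hρ2, hl2, hl3]
      linear_combination c1 + c2
    have d1 : a ^ 2 / A ≤ a := by
      rw [div_le_iff₀ hA0, hA]
      have : a * (a + η) - a ^ 2 = a * η := by ring
      linarith [mul_nonneg ha0 hη0.le, this]
    have d2 : σ ^ 2 / S' ≤ σ := by
      rw [div_le_iff₀ hS'0, hS']
      have : σ * (σ + η) - σ ^ 2 = σ * η := by ring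
      linarith [mul_nonneg hσ hη0.le, this]
    have d3 : (α * b) ^ 2 / Bw ≤ α * b := by
      rw [div_le_iff₀ hBw0, hBw]
      have : (α * b) * (α * b + η) - (α * b) ^ 2 = (α * b) * η := by ring
      linarith [mul_nonneg hab0 hη0.le, this]
    have hub : T * (a ^ 2 / A + σ ^ 2 / S' + (α * b) ^ 2 / Bw)
        ≤ T * (a + σ + α * b) := by
      apply mul_le_mul_of_nonneg_left _ hT0.le
      linarith
    have hT3 : T = (a + α * b + σ) + 3 * η := by rw [hT, hA, hBw, hS']; ring
    have hηε : η * (6 * (a + α * b + σ) + 9) ≤ ε := (le_div_iff₀ hden).mp hηle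
    have h2 : T * (a + σ + α * b) ≤ (a + α * b + σ) ^ 2 + ε := by
      rw [hT3]
      have idh : ((a + α * b + σ) + 3 * η) * (a + σ + α * b)
          - (a + α * b + σ) ^ 2 - η * (6 * (a + α * b + σ) + 9)
          = -(η * (3 * (a + α * b + σ) + 9)) := by ring
      linarith [mul_nonneg hη0.le (by linarith : (0:ℝ) ≤ 3 * (a + α * b + σ) + 9), idh, hηε]
    linarith [h1, hval, hub, h2]
end

section
/- Let (Ω, 𝔓) be a probability space, p, q, J positive integers, b ∈ ℝ^q, and let ξ, w₁, …, w_q : Ω → ℝ^p be random vectors with ‖ξ‖² and each ‖w_i‖² integrable. Set v₀ := ξ and v_i := w_i for 1 ≤ i ≤ q. For each j ∈ {1,…,J} let X^{(j)} be a symmetric (1+q)×(1+q) real matrix and Λ^{(j)} ∈ ℝ, and let Ω₀ ⊆ {1,…,J}. Assume E[ ∑_{k=0}^{q} ∑_{l=0}^{q} X^{(j)}_{k,l} ⟨v_k, v_l⟩ ] ≤ Λ^{(j)} for every j, with equality for every j ∈ Ω₀. If there exist ρ ≥ 0 and reals λ^{(1)}, …, λ^{(J)} with λ^{(j)} ≥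 0 for every j ∉ Ω₀, such that the symmetric (1+q)×(1+q) matrix whose (0,0)-entry is 1−ρ², whose (0,i)- and (i,0)-entries are b_i for 1 ≤ i ≤ q, and whose (i,k)-entry is b_i b_k for 1 ≤ i,k ≤ q, minus ∑_{j=1}^{J} λ^{(j)} X^{(j)}, is negative semidefinite, then ξ⁺ := ξ + ∑_{i=1}^{q} b_i w_i satisfies E‖ξ⁺‖² ≤ ρ² E‖ξ‖² + ∑_{j=1}^{J} λ^{(j)} Λ^{(j)}. -/
open MeasureTheory

lemma aux_comm3 {n₁ n₂ n₃ : Type*} [Fintype n₁] [Fintype n₂] [Fintype n₃]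
    {M : Type*} [AddCommMonoid M] (f : n₁ → n₂ → n₃ → M) :
    ∑ a, ∑ b, ∑ c, f a b c = ∑ c, ∑ a, ∑ b, f a b c := by
  trans ∑ a, ∑ c, ∑ b, f a b c
  · exact Finset.sum_congr rfl fun a _ => Finset.sum_comm ..
  · exact Finset.sum_comm ..

lemma aux_key {n m : ℕ} (M : Matrix (Fin n) (Fin n) ℝ)
    (h : ∀ z : Fin n → ℝ, ∑ k, ∑ l, z k * M k l * z l ≤ 0)
    (v : Fin n → EuclideanSpace ℝ (Fin m)) :
    ∑ k, ∑ l, M k l * (inner ℝ (v k) (v l) : ℝ) ≤ 0 := by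
  have hin : ∀ k l, (inner ℝ (v k) (v l) : ℝ) = ∑ t, v k t * v l t := by
    intro k l
    simp [PiLp.inner_apply, RCLike.inner_apply, conj_trivial, mul_comm]
  calc ∑ k, ∑ l, M k l * (inner ℝ (v k) (v l) : ℝ)
      = ∑ t, ∑ k, ∑ l, (v k t) * M k l * (v l t) := by
        simp only [hin, Finset.mul_sum]
        rw [aux_comm3]
        exact Finset.sum_congr rfl fun t _ => Finset.sum_congr rfl fun k _ =>
          Finset.sum_congr rfl fun l _ => by ring
    _ ≤ 0 := Finset.sum_nonpos fun t _ => h fun k => v k t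

lemma aux_int {Ω : Type*} [MeasurableSpace Ω] (P : Measure Ω) {m : ℕ}
    (f g : Ω → EuclideanSpace ℝ (Fin m)) (hf : Measurable f) (hg : Measurable g)
    (hfi : Integrable (fun ω => ‖f ω‖ ^ 2) P) (hgi : Integrable (fun ω => ‖g ω‖ ^ 2) P) :
    Integrable (fun ω => (inner ℝ (f ω) (g ω) : ℝ)) P := by
  refine Integrable.mono' ((hfi.add hgi).div_const 2) ?_ ?_
  · exact ((hf.inner hg).aestronglyMeasurable)
  · refine Filter.Eventually.of_forall fun ω => ?_
    have h1 := abs_real_inner_le_norm (f ω) (g ω)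
    have h2 : ‖f ω‖ * ‖g ω‖ ≤ (‖f ω‖ ^ 2 + ‖g ω‖ ^ 2) / 2 := by
      nlinarith [sq_nonneg (‖f ω‖ - ‖g ω‖)]
    simpa [Real.norm_eq_abs] using h1.trans h2

theorem stmt_8 {Ω : Type*} [MeasurableSpace Ω]
    (P : Measure Ω) [IsProbabilityMeasure P]
    (p q J : ℕ) (hp : 0 < p) (hq : 0 < q) (hJ : 0 < J)
    (b : Fin q → ℝ)
    (ξ : Ω → EuclideanSpace ℝ (Fin p)) (w : Fin q → Ω → EuclideanSpace ℝ (Fin p))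
    (hξmeas : Measurable ξ) (hwmeas : ∀ i, Measurable (w i))
    (hξint : Integrable (fun ω => ‖ξ ω‖ ^ 2) P)
    (hwint : ∀ i, Integrable (fun ω => ‖w i ω‖ ^ 2) P)
    (X : Fin J → Matrix (Fin (q + 1)) (Fin (q + 1)) ℝ)
    (hXsymm : ∀ j, (X j).IsSymm)
    (Λ : Fin J → ℝ) (Ω₀ : Set (Fin J))
    (hsupply : ∀ j,
      (∫ ω, ∑ k, ∑ l, X j k l *
        (@inner ℝ _ _
          ((Fin.cons (ξ ω) (fun i => w i ω) : Fin (q + 1) → EuclideanSpace ℝ (Fin p)) k)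
          ((Fin.cons (ξ ω) (fun i => w i ω) : Fin (q + 1) → EuclideanSpace ℝ (Fin p)) l)) ∂P)
        ≤ Λ j)
    (hsupply_eq : ∀ j ∈ Ω₀,
      (∫ ω, ∑ k, ∑ l, X j k l *
        (@inner ℝ _ _
          ((Fin.cons (ξ ω) (fun i => w i ω) : Fin (q + 1) → EuclideanSpace ℝ (Fin p)) k)
          ((Fin.cons (ξ ω) (fun i => w i ω) : Fin (q + 1) → EuclideanSpace ℝ (Fin p)) l)) ∂P)
        = Λ j)
    (ρ : ℝ) (hρ : 0 ≤ ρ) (lam : Fin J → ℝ)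
    (hlam : ∀ j ∉ Ω₀, 0 ≤ lam j)
    (hLMI : ∀ z : Fin (q + 1) → ℝ,
      ∑ k, ∑ l, z k *
        (((Fin.cons (1 : ℝ) b : Fin (q + 1) → ℝ) k *
            (Fin.cons (1 : ℝ) b : Fin (q + 1) → ℝ) l -
            (if k = 0 ∧ l = 0 then ρ ^ 2 else 0)) -
          ∑ j, lam j * X j k l) * z l ≤ 0) :
    (∫ ω, ‖ξ ω + ∑ i, b i • w i ω‖ ^ 2 ∂P) ≤
      ρ ^ 2 * (∫ ω, ‖ξ ω‖ ^ 2 ∂P) + ∑ j, lam j * Λ j := by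
  classical
  set v : Ω → Fin (q + 1) → EuclideanSpace ℝ (Fin p) :=
    fun ω => Fin.cons (ξ ω) (fun i => w i ω) with hv
  set c : Fin (q + 1) → ℝ := Fin.cons (1 : ℝ) b with hc
  have hvmeas : ∀ k, Measurable fun ω => v ω k := by
    intro k
    refine Fin.cases ?_ ?_ k
    · simpa [hv] using hξmeas
    · intro i; simpa [hv] using hwmeas i
  have hvint : ∀ k, Integrable (fun ω => ‖v ω k‖ ^ 2) P := by
    intro k
    refine Fin.cases ?_ ?_ k
    · simpa [hv] using hξint
    · intro i; simpa [hv] using hwint i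
  have hii : ∀ k l, Integrable (fun ω => (inner ℝ (v ω k) (v ω l) : ℝ)) P :=
    fun k l => aux_int P _ _ (hvmeas k) (hvmeas l) (hvint k) (hvint l)
  -- expansion of the norm of ξ⁺
  have hexp : ∀ ω, ‖ξ ω + ∑ i, b i • w i ω‖ ^ 2
      = ∑ k, ∑ l, c k * c l * (inner ℝ (v ω k) (v ω l) : ℝ) := by
    intro ω
    have hsum : ξ ω + ∑ i, b i • w i ω = ∑ k, c k • v ω k := by
      have : (fun k => c k • v ω k)
          = Fin.cons (ξ ω) (fun i => b i • w i ω) := by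
        funext k
        refine Fin.cases ?_ ?_ k <;> simp [hv, hc]
      rw [this, Fin.sum_cons]
    rw [hsum, ← real_inner_self_eq_norm_sq, sum_inner]
    refine Finset.sum_congr rfl fun k _ => ?_
    rw [inner_sum]
    refine Finset.sum_congr rfl fun l _ => ?_
    rw [real_inner_smul_left, real_inner_smul_right]; ring
  have hξnorm : ∀ ω, (inner ℝ (v ω 0) (v ω 0) : ℝ) = ‖ξ ω‖ ^ 2 := by
    intro ω
    exact real_inner_self_eq_norm_sq (ξ ω)
  -- pointwise inequality
  have hpt : ∀ ω, ‖ξ ω + ∑ i, b i • w i ω‖ ^ 2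
      ≤ ρ ^ 2 * ‖ξ ω‖ ^ 2
        + ∑ j, lam j * (∑ k, ∑ l, X j k l * (inner ℝ (v ω k) (v ω l) : ℝ)) := by
    intro ω
    have hkey := aux_key
      (Matrix.of fun k l : Fin (q + 1) =>
        (c k * c l - (if k = 0 ∧ l = 0 then ρ ^ 2 else 0)) - ∑ j, lam j * X j k l)
      (fun z => hLMI z) (v ω)
    simp only [Matrix.of_apply] at hkey
    have hρterm : ∑ k, ∑ l,
        (if k = 0 ∧ l = 0 then ρ ^ 2 else 0) * (inner ℝ (v ω k) (v ω l) : ℝ)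
        = ρ ^ 2 * ‖ξ ω‖ ^ 2 := by
      rw [← hξnorm ω]
      rw [Finset.sum_eq_single 0]
      · rw [Finset.sum_eq_single 0]
        · simp
        · intro l _ hl; simp [hl]
        · simp
      · intro k _ hk; simp [hk]
      · simp
    have hXterm : ∑ k, ∑ l, (∑ j, lam j * X j k l) * (inner ℝ (v ω k) (v ω l) : ℝ)
        = ∑ j, lam j * (∑ k, ∑ l, X j k l * (inner ℝ (v ω k) (v ω l) : ℝ)) := by
      simp only [Finset.sum_mul]
      rw [aux_comm3]
      refine Finset.sum_congr rfl fun j _ => ?_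
      simp only [Finset.mul_sum]
      refine Finset.sum_congr rfl fun k _ => Finset.sum_congr rfl fun l _ => by ring
    have hsplit : ∑ k, ∑ l,
        ((c k * c l - (if k = 0 ∧ l = 0 then ρ ^ 2 else 0)) - ∑ j, lam j * X j k l)
          * (inner ℝ (v ω k) (v ω l) : ℝ)
        = (∑ k, ∑ l, c k * c l * (inner ℝ (v ω k) (v ω l) : ℝ))
          - (∑ k, ∑ l, (if k = 0 ∧ l = 0 then ρ ^ 2 else 0) * (inner ℝ (v ω k) (v ω l) : ℝ))
          - (∑ k, ∑ l, (∑ j, lam j * X j k l) * (inner ℝ (v ω k) (v ω l) : ℝ)) := by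
      simp only [sub_mul, Finset.sum_sub_distrib]
    rw [hsplit, hρterm, hXterm] at hkey
    rw [hexp ω]
    linarith
  -- integrability pieces
  have hFint : Integrable (fun ω => ‖ξ ω + ∑ i, b i • w i ω‖ ^ 2) P := by
    have : (fun ω => ‖ξ ω + ∑ i, b i • w i ω‖ ^ 2)
        = fun ω => ∑ k, ∑ l, c k * c l * (inner ℝ (v ω k) (v ω l) : ℝ) :=
      funext hexp
    rw [this]
    exact integrable_finset_sum _ fun k _ =>
      integrable_finset_sum _ fun l _ => (hii k l).const_mul _
  have hQint : ∀ j, Integrable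
      (fun ω => ∑ k, ∑ l, X j k l * (inner ℝ (v ω k) (v ω l) : ℝ)) P := by
    intro j
    exact integrable_finset_sum _ fun k _ =>
      integrable_finset_sum _ fun l _ => (hii k l).const_mul _
  have hGint : Integrable (fun ω => ρ ^ 2 * ‖ξ ω‖ ^ 2
      + ∑ j, lam j * (∑ k, ∑ l, X j k l * (inner ℝ (v ω k) (v ω l) : ℝ))) P :=
    (hξint.const_mul _).add
      (integrable_finset_sum _ fun j _ => (hQint j).const_mul _)
  have hmono := integral_mono hFint hGint hpt
  have hGval : ∫ ω, (ρ ^ 2 * ‖ξ ω‖ ^ 2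
      + ∑ j, lam j * (∑ k, ∑ l, X j k l * (inner ℝ (v ω k) (v ω l) : ℝ))) ∂P
      = ρ ^ 2 * (∫ ω, ‖ξ ω‖ ^ 2 ∂P)
        + ∑ j, lam j *
          (∫ ω, ∑ k, ∑ l, X j k l * (inner ℝ (v ω k) (v ω l) : ℝ) ∂P) := by
    rw [integral_add (hξint.const_mul _)
      (integrable_finset_sum _ fun j _ => (hQint j).const_mul _),
      integral_const_mul, integral_finset_sum _ fun j _ => (hQint j).const_mul _]
    simp_rw [integral_const_mul]
  rw [hGval] at hmono
  refine hmono.trans ?_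
  refine add_le_add le_rfl (Finset.sum_le_sum fun j _ => ?_)
  by_cases hj : j ∈ Ω₀
  · exact le_of_eq (by rw [mul_eq_mul_left_iff]; exact Or.inl (hsupply_eq j hj))
  · exact mul_le_mul_of_nonneg_left (hsupply j) (hlam j hj)
end

section
/- Let 0 < m ≤ L, α ≥ 0, σ ≥ 0, c ≥ 0, and let f : ℝ^p → ℝ be a differentiable function satisfying the sector condition S(m,L) at a point x* ∈ ℝ^p. Let x*' ∈ ℝ^p with ‖x*' − x*‖ ≤ σ. Let (Ω, 𝔓) be a probability space and x, v : Ω → ℝ^p random vectors such that ‖x−x*‖², ‖∇f(x)‖², ‖v‖² are integrable, E[v] = 0, E‖v‖² ≤ c², E⟨v, x − x*⟩ = 0, and E⟨v, ∇f(x)⟩ = 0. Set x⁺ := x − α(∇f(x) + v). If there exist nonnegative reals ρ, λ₁, λ₂, λ₃ and reals λ₄, λ₅, λ₆ such that the matrix C(ρ,λ₁,…,λ₆) is negative semidefinite, then E‖x⁺ − x*'‖² ≤ ρ² E‖x − x*‖² + λ₂ σ² + λ₃ c². -/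
open MeasureTheory


lemma key_lemma (p : ℕ) (m L α ρ l1 l2 l3 l4 l5 l6 : ℝ)
    (hLMI : ∀ z : Fin 4 → ℝ,
      ∑ k, ∑ l, z k *
        (!![1 - ρ ^ 2 - 2 * l1 * L * m, -α + l1 * (L + m), 1, -α - l4;
            -α + l1 * (L + m), α ^ 2 - 2 * l1, -α, α ^ 2 - l5;
            1, -α, 1 - l2, -α - l6;
            -α - l4, α ^ 2 - l5, -α - l6, α ^ 2 - l3] k l) * z l ≤ 0)
    (hl1 : 0 ≤ l1)
    (a g e w : EuclideanSpace ℝ (Fin p))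
    (hs : 2 * m * L * ‖a‖ ^ 2 + 2 * ‖g‖ ^ 2 ≤ 2 * (L + m) * (@inner ℝ _ _ a g)) :
    ‖a + e - α • (g + w)‖ ^ 2 ≤ ρ ^ 2 * ‖a‖ ^ 2 + l2 * ‖e‖ ^ 2 + l3 * ‖w‖ ^ 2
      + 2 * l4 * (@inner ℝ _ _ a w) + 2 * l5 * (@inner ℝ _ _ g w)
      + 2 * l6 * (@inner ℝ _ _ e w) := by
  have coord : ∀ u v : EuclideanSpace ℝ (Fin p), (@inner ℝ _ _ u v) = ∑ i, u i * v i := by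
    intro u v
    simp [PiLp.inner_apply, RCLike.inner_apply, mul_comm]
  have ncoord : ∀ u : EuclideanSpace ℝ (Fin p), ‖u‖ ^ 2 = ∑ i, u i * u i := by
    intro u
    rw [← real_inner_self_eq_norm_sq, coord]
  have H : ∑ i : Fin p, (∑ k, ∑ l, (![a i, g i, e i, w i]) k *
        (!![1 - ρ ^ 2 - 2 * l1 * L * m, -α + l1 * (L + m), 1, -α - l4;
            -α + l1 * (L + m), α ^ 2 - 2 * l1, -α, α ^ 2 - l5;
            1, -α, 1 - l2, -α - l6;
            -α - l4, α ^ 2 - l5, -α - l6, α ^ 2 - l3] k l) * (![a i, g i, e i, w i]) l) ≤ 0 :=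
    Finset.sum_nonpos fun i _ => hLMI _
  have Hq : ∑ i : Fin p, (∑ k, ∑ l, (![a i, g i, e i, w i]) k *
        (!![1 - ρ ^ 2 - 2 * l1 * L * m, -α + l1 * (L + m), 1, -α - l4;
            -α + l1 * (L + m), α ^ 2 - 2 * l1, -α, α ^ 2 - l5;
            1, -α, 1 - l2, -α - l6;
            -α - l4, α ^ 2 - l5, -α - l6, α ^ 2 - l3] k l) * (![a i, g i, e i, w i]) l)
      = ‖a + e - α • (g + w)‖ ^ 2 - ρ ^ 2 * ‖a‖ ^ 2 - l2 * ‖e‖ ^ 2 - l3 * ‖w‖ ^ 2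
        - 2 * l4 * (@inner ℝ _ _ a w) - 2 * l5 * (@inner ℝ _ _ g w)
        - 2 * l6 * (@inner ℝ _ _ e w)
        + l1 * (2 * (L + m) * (@inner ℝ _ _ a g)) - l1 * (2 * m * L * ‖a‖ ^ 2)
        - l1 * (2 * ‖g‖ ^ 2) := by
    rw [ncoord, ncoord, ncoord, ncoord, ncoord, coord, coord, coord, coord]
    simp only [Finset.mul_sum, ← Finset.sum_add_distrib, ← Finset.sum_sub_distrib]
    refine Finset.sum_congr rfl fun i _ => ?_
    simp only [Fin.sum_univ_four, Matrix.cons_val', Matrix.cons_val_zero, Matrix.cons_val_one,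
      Matrix.head_cons, Matrix.empty_val', Matrix.cons_val_fin_one, Matrix.head_fin_const,
      Matrix.of_apply, Matrix.cons_val_two, Matrix.cons_val_three, Matrix.tail_cons,
      PiLp.add_apply, PiLp.sub_apply, PiLp.smul_apply, smul_eq_mul]
    ring
  have hnn : 0 ≤ l1 * (2 * (L + m) * (@inner ℝ _ _ a g)) - l1 * (2 * m * L * ‖a‖ ^ 2)
      - l1 * (2 * ‖g‖ ^ 2) := by nlinarith
  linarith [Hq ▸ H]


theorem stmt_9 (p : ℕ) (m L α σ c : ℝ)
    (hm : 0 < m) (hmL : m ≤ L) (hα : 0 ≤ α) (hσ : 0 ≤ σ) (hc : 0 ≤ c)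
    (f : EuclideanSpace ℝ (Fin p) → ℝ) (xstar : EuclideanSpace ℝ (Fin p))
    (hf : Differentiable ℝ f)
    (hcrit : gradient f xstar = 0)
    (hsector : ∀ x : EuclideanSpace ℝ (Fin p),
      2 * m * L * ‖x - xstar‖ ^ 2 + 2 * ‖gradient f x‖ ^ 2 ≤
        2 * (L + m) * (@inner ℝ _ _ (x - xstar) (gradient f x)))
    (xstar' : EuclideanSpace ℝ (Fin p)) (hx' : ‖xstar' - xstar‖ ≤ σ)
    {Ω : Type*} [MeasurableSpace Ω] (P : Measure Ω) [IsProbabilityMeasure P]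
    (x v : Ω → EuclideanSpace ℝ (Fin p))
    (hxmeas : Measurable x) (hvmeas : Measurable v)
    (hint1 : Integrable (fun ω => ‖x ω - xstar‖ ^ 2) P)
    (hint2 : Integrable (fun ω => ‖gradient f (x ω)‖ ^ 2) P)
    (hint3 : Integrable (fun ω => ‖v ω‖ ^ 2) P)
    (hvmean : (∫ ω, v ω ∂P) = 0)
    (hvms : (∫ ω, ‖v ω‖ ^ 2 ∂P) ≤ c ^ 2)
    (hvx : (∫ ω, (@inner ℝ _ _ (v ω) (x ω - xstar)) ∂P) = 0)
    (hvg : (∫ ω, (@inner ℝ _ _ (v ω) (gradient f (x ω))) ∂P) = 0)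
    (ρ l1 l2 l3 : ℝ) (hρ : 0 ≤ ρ) (hl1 : 0 ≤ l1) (hl2 : 0 ≤ l2) (hl3 : 0 ≤ l3)
    (l4 l5 l6 : ℝ)
    (hLMI : ∀ z : Fin 4 → ℝ,
      ∑ k, ∑ l, z k *
        (!![1 - ρ ^ 2 - 2 * l1 * L * m, -α + l1 * (L + m), 1, -α - l4;
            -α + l1 * (L + m), α ^ 2 - 2 * l1, -α, α ^ 2 - l5;
            1, -α, 1 - l2, -α - l6;
            -α - l4, α ^ 2 - l5, -α - l6, α ^ 2 - l3] k l) * z l ≤ 0) :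
    (∫ ω, ‖(x ω - α • (gradient f (x ω) + v ω)) - xstar'‖ ^ 2 ∂P) ≤
      ρ ^ 2 * (∫ ω, ‖x ω - xstar‖ ^ 2 ∂P) + l2 * σ ^ 2 + l3 * c ^ 2 := by
  
  have hkey := fun (a g e w : EuclideanSpace ℝ (Fin p)) hs =>
    key_lemma p m L α ρ l1 l2 l3 l4 l5 l6 hLMI hl1 a g e w hs
  set e : EuclideanSpace ℝ (Fin p) := xstar - xstar' with he
  have hgmeas : Measurable (fun ω => gradient f (x ω)) :=
    (((InnerProductSpace.toDual ℝ (EuclideanSpace ℝ (Fin p))).symm.continuous.measurable).comp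
      (measurable_fderiv ℝ f)).comp hxmeas
  have hameas : Measurable (fun ω => x ω - xstar) := hxmeas.sub measurable_const
  have hvint : Integrable v P := by
    refine Integrable.mono' ((integrable_const 1).add hint3) hvmeas.aestronglyMeasurable
      (Filter.Eventually.of_forall fun ω => ?_)
    simp only [Pi.add_apply, Pi.one_apply]
    nlinarith [sq_nonneg (‖v ω‖ - 1), norm_nonneg (v ω)]
  have hIaw : Integrable (fun ω => (@inner ℝ _ _ (x ω - xstar) (v ω))) P := by
    refine Integrable.mono' (hint1.add hint3) (hameas.inner hvmeas).aestronglyMeasurable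
      (Filter.Eventually.of_forall fun ω => ?_)
    simp only [Pi.add_apply, Real.norm_eq_abs]
    nlinarith [abs_real_inner_le_norm (x ω - xstar) (v ω), sq_nonneg (‖x ω - xstar‖ - ‖v ω‖)]
  have hIgw : Integrable (fun ω => (@inner ℝ _ _ (gradient f (x ω)) (v ω))) P := by
    refine Integrable.mono' (hint2.add hint3) (hgmeas.inner hvmeas).aestronglyMeasurable
      (Filter.Eventually.of_forall fun ω => ?_)
    simp only [Pi.add_apply, Real.norm_eq_abs]
    nlinarith [abs_real_inner_le_norm (gradient f (x ω)) (v ω),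
      sq_nonneg (‖gradient f (x ω)‖ - ‖v ω‖)]
  have hIew : Integrable (fun ω => (@inner ℝ _ _ e (v ω))) P := hvint.const_inner e
  have J1 : Integrable (fun ω => ρ ^ 2 * ‖x ω - xstar‖ ^ 2) P := hint1.const_mul _
  have J2 : Integrable (fun _ : Ω => l2 * ‖e‖ ^ 2) P := integrable_const _
  have J3 : Integrable (fun ω => l3 * ‖v ω‖ ^ 2) P := hint3.const_mul _
  have J4 : Integrable (fun ω => 2 * l4 * (@inner ℝ _ _ (x ω - xstar) (v ω))) P :=
    hIaw.const_mul _
  have J5 : Integrable (fun ω => 2 * l5 * (@inner ℝ _ _ (gradient f (x ω)) (v ω))) P :=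
    hIgw.const_mul _
  have J6 : Integrable (fun ω => 2 * l6 * (@inner ℝ _ _ e (v ω))) P := hIew.const_mul _
  have J12 : Integrable (fun ω => ρ ^ 2 * ‖x ω - xstar‖ ^ 2 + l2 * ‖e‖ ^ 2) P := J1.add J2
  have J13 : Integrable (fun ω => ρ ^ 2 * ‖x ω - xstar‖ ^ 2 + l2 * ‖e‖ ^ 2
      + l3 * ‖v ω‖ ^ 2) P := J12.add J3
  have J14 : Integrable (fun ω => ρ ^ 2 * ‖x ω - xstar‖ ^ 2 + l2 * ‖e‖ ^ 2 + l3 * ‖v ω‖ ^ 2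
      + 2 * l4 * (@inner ℝ _ _ (x ω - xstar) (v ω))) P := J13.add J4
  have J15 : Integrable (fun ω => ρ ^ 2 * ‖x ω - xstar‖ ^ 2 + l2 * ‖e‖ ^ 2 + l3 * ‖v ω‖ ^ 2
      + 2 * l4 * (@inner ℝ _ _ (x ω - xstar) (v ω))
      + 2 * l5 * (@inner ℝ _ _ (gradient f (x ω)) (v ω))) P := J14.add J5
  have J16 : Integrable (fun ω => ρ ^ 2 * ‖x ω - xstar‖ ^ 2 + l2 * ‖e‖ ^ 2 + l3 * ‖v ω‖ ^ 2
      + 2 * l4 * (@inner ℝ _ _ (x ω - xstar) (v ω))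
      + 2 * l5 * (@inner ℝ _ _ (gradient f (x ω)) (v ω))
      + 2 * l6 * (@inner ℝ _ _ e (v ω))) P := J15.add J6
  have hpt : ∀ ω, ‖(x ω - α • (gradient f (x ω) + v ω)) - xstar'‖ ^ 2 ≤
      ρ ^ 2 * ‖x ω - xstar‖ ^ 2 + l2 * ‖e‖ ^ 2 + l3 * ‖v ω‖ ^ 2
      + 2 * l4 * (@inner ℝ _ _ (x ω - xstar) (v ω))
      + 2 * l5 * (@inner ℝ _ _ (gradient f (x ω)) (v ω))
      + 2 * l6 * (@inner ℝ _ _ e (v ω)) := by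
    intro ω
    have hveq : (x ω - α • (gradient f (x ω) + v ω)) - xstar'
        = (x ω - xstar) + e - α • (gradient f (x ω) + v ω) := by
      rw [he]; abel
    rw [hveq]
    exact hkey (x ω - xstar) (gradient f (x ω)) e (v ω) (hsector (x ω))
  have hmono : (∫ ω, ‖(x ω - α • (gradient f (x ω) + v ω)) - xstar'‖ ^ 2 ∂P) ≤
      ∫ ω, (ρ ^ 2 * ‖x ω - xstar‖ ^ 2 + l2 * ‖e‖ ^ 2 + l3 * ‖v ω‖ ^ 2
      + 2 * l4 * (@inner ℝ _ _ (x ω - xstar) (v ω))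
      + 2 * l5 * (@inner ℝ _ _ (gradient f (x ω)) (v ω))
      + 2 * l6 * (@inner ℝ _ _ e (v ω))) ∂P :=
    integral_mono_of_nonneg (Filter.Eventually.of_forall fun ω => sq_nonneg _) J16
      (Filter.Eventually.of_forall hpt)
  have h1 : (∫ ω, (@inner ℝ _ _ (x ω - xstar) (v ω)) ∂P) = 0 := by
    rw [← hvx]; congr 1; ext ω; exact real_inner_comm _ _
  have h2 : (∫ ω, (@inner ℝ _ _ (gradient f (x ω)) (v ω)) ∂P) = 0 := by
    rw [← hvg]; congr 1; ext ω; exact real_inner_comm _ _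
  have h3 : (∫ ω, (@inner ℝ _ _ e (v ω)) ∂P) = 0 := by
    rw [integral_inner hvint e, hvmean, inner_zero_right]
  have hBval : ∫ ω, (ρ ^ 2 * ‖x ω - xstar‖ ^ 2 + l2 * ‖e‖ ^ 2 + l3 * ‖v ω‖ ^ 2
      + 2 * l4 * (@inner ℝ _ _ (x ω - xstar) (v ω))
      + 2 * l5 * (@inner ℝ _ _ (gradient f (x ω)) (v ω))
      + 2 * l6 * (@inner ℝ _ _ e (v ω))) ∂P
      = ρ ^ 2 * (∫ ω, ‖x ω - xstar‖ ^ 2 ∂P) + l2 * ‖e‖ ^ 2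
      + l3 * (∫ ω, ‖v ω‖ ^ 2 ∂P) := by
    rw [integral_add J15 J6, integral_add J14 J5, integral_add J13 J4, integral_add J12 J3,
      integral_add J1 J2]
    simp only [integral_const_mul, integral_const, measure_univ, ENNReal.toReal_one, probReal_univ, one_smul,
      smul_eq_mul, h1, h2, h3]
    ring
  have hesig : ‖e‖ ≤ σ := by rw [he, norm_sub_rev]; exact hx'
  have hesq : ‖e‖ ^ 2 ≤ σ ^ 2 := pow_le_pow_left₀ (norm_nonneg e) hesig 2
  rw [hBval] at hmono
  have hv2 : l3 * (∫ ω, ‖v ω‖ ^ 2 ∂P) ≤ l3 * c ^ 2 := mul_le_mul_of_nonneg_left hvms hl3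
  have he2 : l2 * ‖e‖ ^ 2 ≤ l2 * σ ^ 2 := mul_le_mul_of_nonneg_left hesq hl2
  linarith
end

section
/- Let 0 < m < L, 0 < α ≤ 2/L, σ ≥ 0, c ≥ 0, and U ≥ 0. Let T be the set of all tuples (ρ, λ₁, λ₂, λ₃, λ₄, λ₅, λ₆) with ρ, λ₁, λ₂, λ₃ nonnegative reals and λ₄, λ₅, λ₆ arbitrary reals such that the matrix C(ρ,λ₁,…,λ₆) is negative semidefinite. Then (μ(m,L,α) √U + σ)² + α² c² is the greatest lower bound of the set { ρ² U + λ₂ σ² + λ₃ c² : (ρ, λ₁, …, λ₆) ∈ T }. -/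
lemma feasAux (m L α t μ β co ρ l1 l2 l3 l4 l5 l6 : ℝ)
    (hLm : 0 < L - m) (ht : 0 < t) (hco : 0 ≤ co)
    (hρ : ρ ^ 2 * t = (1 + t) * μ ^ 2)
    (hl1 : l1 * (t * (L - m)) = (1 + t) * (α * μ))
    (hl2 : l2 = 1 + t) (hl3 : l3 = α ^ 2) (hl4 : l4 = -α) (hl5 : l5 = α ^ 2)
    (hl6 : l6 = -α)
    (hid : ∀ z1 z2 : ℝ, (L - m) * (μ ^ 2 * z1 ^ 2 - (z1 - α * z2) ^ 2)
      + 2 * (α * μ) * (L * z1 - z2) * (m * z1 - z2) = co * (z2 - β * z1) ^ 2)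
    (z : Fin 4 → ℝ) :
    ∑ k, ∑ l, z k *
      (!![1 - ρ ^ 2 - 2 * l1 * L * m, -α + l1 * (L + m), 1, -α - l4;
          -α + l1 * (L + m), α ^ 2 - 2 * l1, -α, α ^ 2 - l5;
          1, -α, 1 - l2, -α - l6;
          -α - l4, α ^ 2 - l5, -α - l6, α ^ 2 - l3] k l) * z l ≤ 0 := by
  subst hl2 hl3 hl4 hl5 hl6
  have key : t * ((L - m) * (ρ ^ 2 * (z 0) ^ 2
        + 2 * l1 * (L * z 0 - z 1) * (m * z 0 - z 1) + (1 + t) * (z 2) ^ 2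
        + α ^ 2 * (z 3) ^ 2 + 2 * (-α) * (z 0) * (z 3) + 2 * α ^ 2 * (z 1) * (z 3)
        + 2 * (-α) * (z 2) * (z 3) - (z 0 - α * z 1 + z 2 - α * z 3) ^ 2))
      = (1 + t) * (co * (z 1 - β * z 0) ^ 2)
        + (L - m) * (z 0 - α * z 1 - t * z 2) ^ 2 := by
    linear_combination ((L - m) * (z 0) ^ 2) * hρ
      + (2 * (L * z 0 - z 1) * (m * z 0 - z 1)) * hl1 + (1 + t) * hid (z 0) (z 1)
  have h1t : (0:ℝ) ≤ 1 + t := by linarith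
  simp [Fin.sum_univ_four, Matrix.cons_val', Matrix.cons_val_zero,
    Matrix.cons_val_one, Matrix.head_cons, Matrix.empty_val',
    Matrix.cons_val_fin_one, Matrix.head_fin_const, Matrix.of_apply]
  nlinarith [key, mul_pos ht hLm,
    mul_nonneg (mul_nonneg h1t hco) (sq_nonneg (z 1 - β * z 0)),
    mul_nonneg hLm.le (sq_nonneg (z 0 - α * z 1 - t * z 2))]

set_option maxHeartbeats 1000000 in
theorem stmt_10 (m L α σ c U : ℝ)
    (hm : 0 < m) (hmL : m < L) (hα : 0 < α) (hαL : α ≤ 2 / L)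
    (hσ : 0 ≤ σ) (hc : 0 ≤ c) (hU : 0 ≤ U) :
    IsGLB { y : ℝ | ∃ ρ l1 l2 l3 l4 l5 l6 : ℝ,
        0 ≤ ρ ∧ 0 ≤ l1 ∧ 0 ≤ l2 ∧ 0 ≤ l3 ∧
        (∀ z : Fin 4 → ℝ,
          ∑ k, ∑ l, z k *
            (!![1 - ρ ^ 2 - 2 * l1 * L * m, -α + l1 * (L + m), 1, -α - l4;
                -α + l1 * (L + m), α ^ 2 - 2 * l1, -α, α ^ 2 - l5;
                1, -α, 1 - l2, -α - l6;
                -α - l4, α ^ 2 - l5, -α - l6, α ^ 2 - l3] k l) * z l ≤ 0) ∧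
        y = ρ ^ 2 * U + l2 * σ ^ 2 + l3 * c ^ 2 }
      (((if α ≤ 2 / (m + L) then 1 - m * α else α * L - 1) * Real.sqrt U + σ) ^ 2 +
        α ^ 2 * c ^ 2) := by
  have hmL0 : 0 < m + L := by linarith
  have hLm : 0 < L - m := sub_pos.2 hmL
  have hu0 : 0 ≤ Real.sqrt U := Real.sqrt_nonneg U
  have hu2 : Real.sqrt U ^ 2 = U := Real.sq_sqrt hU
  constructor
  · rintro y ⟨ρ, l1, l2, l3, l4, l5, l6, hρ0, h1, h2, h3, hQ, rfl⟩
    have hρU : ρ ^ 2 * Real.sqrt U ^ 2 = ρ ^ 2 * U := by rw [hu2]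
    by_cases hcase : α ≤ 2 / (m + L)
    · rw [if_pos hcase]
      have hA := hQ ![Real.sqrt U, m * Real.sqrt U, σ, c]
      have hB := hQ ![Real.sqrt U, m * Real.sqrt U, σ, -c]
      simp [Fin.sum_univ_four, Matrix.cons_val', Matrix.cons_val_zero,
        Matrix.cons_val_one, Matrix.head_cons, Matrix.empty_val',
        Matrix.cons_val_fin_one, Matrix.head_fin_const, Matrix.of_apply] at hA hB
      nlinarith [hA, hB, hρU]
    · rw [if_neg hcase]
      have hA := hQ ![Real.sqrt U, L * Real.sqrt U, -σ, c]
      have hB := hQ ![Real.sqrt U, L * Real.sqrt U, -σ, -c]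
      simp [Fin.sum_univ_four, Matrix.cons_val', Matrix.cons_val_zero,
        Matrix.cons_val_one, Matrix.head_cons, Matrix.empty_val',
        Matrix.cons_val_fin_one, Matrix.head_fin_const, Matrix.of_apply] at hA hB
      nlinarith [hA, hB, hρU]
  · rintro b hb
    refine le_of_forall_pos_le_add fun ε hε => ?_
    have main : ∀ μ β co : ℝ, 0 ≤ μ → 0 ≤ co →
        (∀ z1 z2 : ℝ, (L - m) * (μ ^ 2 * z1 ^ 2 - (z1 - α * z2) ^ 2)
          + 2 * (α * μ) * (L * z1 - z2) * (m * z1 - z2) = co * (z2 - β * z1) ^ 2) →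
        b ≤ (μ * Real.sqrt U + σ) ^ 2 + α ^ 2 * c ^ 2 + ε := by
      intro μ β co hμ0 hco hid
      set s := μ * Real.sqrt U with hsdef
      have hs0 : 0 ≤ s := mul_nonneg hμ0 hu0
      have hs2 : s ^ 2 = μ ^ 2 * U := by rw [hsdef, mul_pow, hu2]
      have hsσ1 : (0:ℝ) < s + σ + 1 := by linarith
      obtain ⟨δ, hδ, hδeq⟩ : ∃ δ : ℝ, 0 < δ ∧ δ * (s + σ + 1) = ε :=
        ⟨ε / (s + σ + 1), div_pos hε hsσ1, div_mul_cancel₀ _ hsσ1.ne'⟩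
      have hσδ : 0 < σ + δ := by linarith
      obtain ⟨t, ht, hteq⟩ : ∃ t : ℝ, 0 < t ∧ t * (σ + δ) = s + δ :=
        ⟨(s + δ) / (σ + δ), div_pos (by linarith) hσδ, div_mul_cancel₀ _ hσδ.ne'⟩
      obtain ⟨ρw, hρw0, hρw2⟩ : ∃ r : ℝ, 0 ≤ r ∧ r ^ 2 * t = (1 + t) * μ ^ 2 :=
        ⟨Real.sqrt ((1 + t) / t) * μ, mul_nonneg (Real.sqrt_nonneg _) hμ0, by
          rw [mul_pow, Real.sq_sqrt (le_of_lt (div_pos (by linarith) ht))]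
          rw [div_mul_eq_mul_div, div_mul_eq_mul_div, div_eq_iff ht.ne']⟩
      have htLm : 0 < t * (L - m) := mul_pos ht hLm
      obtain ⟨l1w, hl1w0, hl1w⟩ : ∃ l : ℝ, 0 ≤ l ∧ l * (t * (L - m)) = (1 + t) * (α * μ) :=
        ⟨(1 + t) * (α * μ) / (t * (L - m)),
          div_nonneg (by nlinarith [mul_nonneg hα.le hμ0]) htLm.le,
          div_mul_cancel₀ _ htLm.ne'⟩
      have hbmem : b ≤ ρw ^ 2 * U + (1 + t) * σ ^ 2 + α ^ 2 * c ^ 2 :=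
        hb ⟨ρw, l1w, 1 + t, α ^ 2, -α, α ^ 2, -α, hρw0, hl1w0, by linarith,
          sq_nonneg α,
          feasAux m L α t μ β co ρw l1w _ _ _ _ _ hLm ht hco hρw2 hl1w
            rfl rfl rfl rfl rfl hid, rfl⟩
      have hρwU : ρw ^ 2 * U = (1 + t) / t * s ^ 2 := by
        have h0 : ρw ^ 2 = (1 + t) * μ ^ 2 / t := by
          rw [eq_div_iff ht.ne']; exact hρw2
        rw [h0, hs2]; ring
      have hexp : (1 + t) / t * s ^ 2 = s ^ 2 + s ^ 2 / t := by
        field_simp; ring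
      have h1 : s ^ 2 / t ≤ s * (σ + δ) := by
        rw [div_le_iff₀ ht]
        nlinarith [mul_nonneg hs0 hδ.le, hteq]
      have h2 : t * σ ^ 2 ≤ (s + δ) * σ := by
        nlinarith [mul_nonneg (mul_nonneg ht.le hσ) hδ.le, hteq]
      have h3 : δ * (s + σ) ≤ ε := by nlinarith [hδeq]
      nlinarith [hbmem, hρwU, hexp, h1, h2, h3]
    by_cases hcase : α ≤ 2 / (m + L)
    · rw [if_pos hcase]
      have h2 : α * (m + L) ≤ 2 := by
        rw [le_div_iff₀ hmL0] at hcase; linarith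
      have hμ0 : 0 ≤ 1 - m * α := by nlinarith [mul_pos hα hLm]
      exact main (1 - m * α) m (α * (2 - α * (m + L))) hμ0
        (mul_nonneg hα.le (by linarith)) (fun z1 z2 => by ring)
    · rw [if_neg hcase]
      have hgt : 2 / (m + L) < α := lt_of_not_ge hcase
      have h2 : 2 ≤ α * (m + L) := by
        rw [div_lt_iff₀ hmL0] at hgt; linarith
      have hμ0 : 0 ≤ α * L - 1 := by nlinarith [mul_pos hα hLm]
      exact main (α * L - 1) L (α * (α * (m + L) - 2)) hμ0
        (mul_nonneg hα.le (by linarith)) (fun z1 z2 => by ring)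
end

section
/- Let 0 < m ≤ L, α ≥ 0, σ ≥ 0, n a positive integer, and let f^{(1)}, …, f^{(n)} : ℝ^p → ℝ be differentiable functions such that f := (1/n) ∑_{i=1}^{n} f^{(i)} is m-strongly convex with global minimizer x* ∈ ℝ^p. Assume one of the following three cases holds: (a) every f^{(i)} has L-Lipschitz gradient and X̃ := [[2L², 0], [0, −1]]; (b) every f^{(i)} is convex with L-Lipschitz gradient and X̃ := [[0, L], [L, −1]]; (c) every f^{(i)} is m-strongly convex with L-Lipschitz gradient and X̃ := [[−2Lm, L+m], [L+m, −1]]. Set G² := (1/n) ∑_{i=1}^{n} ‖∇f^{(i)}(x*)‖², and let x*' ∈ ℝ^p with ‖x*' − x*‖ ≤ σ. Let (Ω, 𝔓) be a probability space, x : Ω → ℝ^p a random vector with ‖x−x*‖² and each ‖∇f^{(i)}(x)‖² integrable, and i : Ω → {1,…,n} uniformly distributed and independent of x. If there exist nonnegative reals ρ, λ₁, λ₂, λ₃ such that the matrix D(ρ,λ₁,λ₂,λ₃; X̃) is negative semidefinite, then E‖x − α ∇f^{(i)}(x) − x*'‖² ≤ ρ² E‖x − x*‖² + λ₂ σ² +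 2λ₃ G². -/
set_option maxHeartbeats 1000000

open MeasureTheory Set

section auxlemmas
variable {E : Type*} [NormedAddCommGroup E] [InnerProductSpace ℝ E] [CompleteSpace E]

local notation "⟪" x ", " y "⟫" => @inner ℝ _ _ x y

private lemma aux_smooth (f : E → ℝ) (hf : Differentiable ℝ f) (C : ℝ) (hC : 0 ≤ C)
    (hlip : ∀ a b, ‖gradient f a - gradient f b‖ ≤ C * ‖a - b‖) (a b : E) :
    f b ≤ f a + ⟪gradient f a, b - a⟫ + C / 2 * ‖b - a‖ ^ 2 := by
  set g := gradient f with hg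
  set d := b - a with hd
  set φ : ℝ → ℝ := fun t => f (a + t • d) - t * ⟪g a, d⟫ - C / 2 * ‖d‖ ^ 2 * t ^ 2 with hφ
  have hγ : ∀ t : ℝ, HasDerivAt (fun t : ℝ => a + t • d) d t := by
    intro t
    simpa using ((hasDerivAt_id t).smul_const d).const_add a
  have hφ' : ∀ t : ℝ, HasDerivAt φ (⟪g (a + t • d), d⟫ - ⟪g a, d⟫ - C / 2 * ‖d‖ ^ 2 * (2 * t)) t := by
    intro t
    have h1 : HasDerivAt (fun t : ℝ => f (a + t • d)) (⟪g (a + t • d), d⟫) t := by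
      have := ((hf (a + t • d)).hasGradientAt.hasFDerivAt).comp_hasDerivAt t (hγ t)
      simpa [InnerProductSpace.toDual_apply_apply, hg, Function.comp_def] using this
    have h2 : HasDerivAt (fun t : ℝ => t * ⟪g a, d⟫) (⟪g a, d⟫) t := by
      simpa using (hasDerivAt_id t).mul_const (⟪g a, d⟫)
    have h3 : HasDerivAt (fun t : ℝ => C / 2 * ‖d‖ ^ 2 * t ^ 2) (C / 2 * ‖d‖ ^ 2 * (2 * t)) t := by
      have := (hasDerivAt_pow 2 t).const_mul (C / 2 * ‖d‖ ^ 2)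
      exact this.congr_deriv (by norm_num)
    exact (h1.sub h2).sub h3
  have hanti : AntitoneOn φ (Icc (0:ℝ) 1) := by
    apply antitoneOn_of_deriv_nonpos (convex_Icc 0 1)
    · exact Continuous.continuousOn (by
        have : Continuous φ := by
          apply Continuous.sub
          apply Continuous.sub
          · exact hf.continuous.comp (by continuity)
          · continuity
          · continuity
        exact this)
    · intro t ht
      exact (hφ' t).differentiableAt.differentiableWithinAt
    · intro t ht
      rw [interior_Icc] at ht
      rw [(hφ' t).deriv]
      have h4 : ⟪g (a + t • d) - g a, d⟫ ≤ ‖g (a + t • d) - g a‖ * ‖d‖ := real_inner_le_norm _ _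
      have h5 : ‖g (a + t • d) - g a‖ ≤ C * ‖t • d‖ := by
        have := hlip (a + t • d) a
        simpa using this
      have h6 : ‖t • d‖ = t * ‖d‖ := by
        rw [norm_smul, Real.norm_eq_abs, abs_of_nonneg ht.1.le]
      rw [inner_sub_left] at h4
      nlinarith [norm_nonneg d, mul_nonneg hC (norm_nonneg d), ht.1.le]
  have := hanti (left_mem_Icc.2 (by norm_num)) (right_mem_Icc.2 (by norm_num)) (by norm_num)
  simp only [hφ, zero_smul, add_zero, one_smul, zero_mul, one_pow, mul_one] at this
  have hab : a + d = b := by simp [hd]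
  rw [hab] at this
  linarith

private lemma aux_coco (f : E → ℝ) (g : E → E) (C : ℝ) (hC : 0 < C)
    (hcvx : ∀ a b, f b + ⟪g b, a - b⟫ ≤ f a)
    (hsmooth : ∀ a b, f b ≤ f a + ⟪g a, b - a⟫ + C / 2 * ‖b - a‖ ^ 2) (a b : E) :
    ‖g a - g b‖ ^ 2 ≤ C * ⟪g a - g b, a - b⟫ := by
  have step : ∀ a b : E, f b + ⟪g b, a - b⟫ + 1 / (2 * C) * ‖g a - g b‖ ^ 2 ≤ f a := by
    intro a b
    set u := g a - g b with hu
    set z := a - C⁻¹ • u with hz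
    have h1 : f b + ⟪g b, z - b⟫ ≤ f z := hcvx z b
    have h2 : f z ≤ f a + ⟪g a, z - a⟫ + C / 2 * ‖z - a‖ ^ 2 := hsmooth a z
    have hza : z - a = -(C⁻¹ • u) := by rw [hz]; abel
    have h3 : ⟪g a, z - a⟫ = -(C⁻¹ * ⟪g a, u⟫) := by
      rw [hza, inner_neg_right, real_inner_smul_right]
    have h4 : ‖z - a‖ ^ 2 = C⁻¹ ^ 2 * ‖u‖ ^ 2 := by
      rw [hza, norm_neg, norm_smul, mul_pow, Real.norm_eq_abs, sq_abs]
    have h5 : ⟪g b, z - b⟫ = ⟪g b, a - b⟫ - C⁻¹ * ⟪g b, u⟫ := by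
      have : z - b = (a - b) - C⁻¹ • u := by rw [hz]; abel
      rw [this, inner_sub_right, real_inner_smul_right]
    have h6 : ⟪g a, u⟫ - ⟪g b, u⟫ = ‖u‖ ^ 2 := by
      rw [← inner_sub_left, ← hu, real_inner_self_eq_norm_sq]
    have hC' : C⁻¹ = 1 / C := by rw [one_div]
    rw [h3, h4] at h2
    rw [h5] at h1
    have hCne : C ≠ 0 := ne_of_gt hC
    have key : C⁻¹ * ‖u‖ ^ 2 - C / 2 * (C⁻¹ ^ 2 * ‖u‖ ^ 2) = 1 / (2 * C) * ‖u‖ ^ 2 := by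
      field_simp
      ring
    have h6' : C⁻¹ * ⟪g a, u⟫ - C⁻¹ * ⟪g b, u⟫ = C⁻¹ * ‖u‖ ^ 2 := by
      rw [← mul_sub, h6]
    linarith
  have s1 := step a b
  have s2 := step b a
  have h7 : ⟪g a, b - a⟫ = -⟪g a, a - b⟫ := by rw [← inner_neg_right]; congr 1; abel
  have h8 : ‖g b - g a‖ = ‖g a - g b‖ := norm_sub_rev _ _
  rw [h7, h8] at s2
  have h9 : ⟪g a - g b, a - b⟫ = ⟪g a, a - b⟫ - ⟪g b, a - b⟫ := inner_sub_left _ _ _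
  have hC2 : 0 < 2 * C := by linarith
  rw [h9]
  have := add_le_add s1 s2
  have h10 : 1 / (2 * C) * ‖g a - g b‖ ^ 2 * 2 ≤ ⟪g a, a - b⟫ - ⟪g b, a - b⟫ := by linarith
  calc ‖g a - g b‖ ^ 2 = C * (1 / (2 * C) * ‖g a - g b‖ ^ 2 * 2) := by field_simp
    _ ≤ C * (⟪g a, a - b⟫ - ⟪g b, a - b⟫) := by
        exact mul_le_mul_of_nonneg_left h10 hC.le

/-- first-order condition for differentiable convex functions. -/

private lemma aux_cvx_ineq (f : E → ℝ) (hf : Differentiable ℝ f)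
    (hcvx : ConvexOn ℝ Set.univ f) (a b : E) :
    f b + ⟪gradient f b, a - b⟫ ≤ f a := by
  set d := a - b with hd
  set ψ : ℝ → ℝ := fun t => f (b + t • d) with hψ
  have hγ : HasDerivAt (fun t : ℝ => b + t • d) d 0 := by
    simpa using ((hasDerivAt_id (0:ℝ)).smul_const d).const_add b
  have hψ' : HasDerivAt ψ (⟪gradient f b, d⟫) 0 := by
    have := ((hf (b + (0:ℝ) • d)).hasGradientAt.hasFDerivAt).comp_hasDerivAt 0 hγ
    simpa [InnerProductSpace.toDual_apply_apply, hψ, Function.comp_def] using this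
  have hslope : ∀ t : ℝ, t ∈ Ioc (0:ℝ) 1 → slope ψ 0 t ≤ f a - f b := by
    intro t ht
    have hconv := hcvx.2 (mem_univ b) (mem_univ a) (by linarith [ht.2] : (0:ℝ) ≤ 1 - t) ht.1.le
      (by ring)
    have harg : (1 - t) • b + t • a = b + t • d := by
      rw [hd]; rw [smul_sub]; module
    rw [harg] at hconv
    have h0 : ψ 0 = f b := by simp [hψ]
    have hconv' : ψ t ≤ (1 - t) * f b + t * f a := by simpa [smul_eq_mul] using hconv
    have hstep : ψ t - ψ 0 ≤ t * (f a - f b) := by rw [h0]; linarith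
    rw [slope_def_field, sub_zero, div_le_iff₀ ht.1]
    nlinarith [hstep]
  have htend : Filter.Tendsto (slope ψ 0) (nhdsWithin 0 (Ioi 0)) (nhds (⟪gradient f b, d⟫)) := by
    have := hasDerivAt_iff_tendsto_slope.1 hψ'
    exact this.mono_left (nhdsWithin_mono 0 (fun t ht => ne_of_gt ht))
  have : ⟪gradient f b, d⟫ ≤ f a - f b := by
    apply le_of_tendsto htend
    filter_upwards [Ioc_mem_nhdsGT_of_mem (left_mem_Ico.2 one_pos)] with t ht
    exact hslope t ht
  linarith

private lemma aux_interp (f : E → ℝ) (hf : Differentiable ℝ f) (m L : ℝ) (hm : 0 < m)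
    (hmL : m ≤ L)
    (hsc : ∀ a b, f b + ⟪gradient f b, a - b⟫ + m / 2 * ‖a - b‖ ^ 2 ≤ f a)
    (hlip : ∀ a b, ‖gradient f a - gradient f b‖ ≤ L * ‖a - b‖) (a b : E) :
    m * L * ‖a - b‖ ^ 2 + ‖gradient f a - gradient f b‖ ^ 2
      ≤ (L + m) * ⟪gradient f a - gradient f b, a - b⟫ := by
  set g := gradient f with hg
  have hL0 : (0:ℝ) ≤ L := hm.le.trans hmL
  have hsmoothL := aux_smooth f hf L hL0 hlip
  set φ : E → ℝ := fun z => f z - m / 2 * ‖z‖ ^ 2 with hφ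
  set gφ : E → E := fun z => g z - m • z with hgφ
  have hid : ∀ a b : E, ‖a - b‖ ^ 2 = ‖a‖ ^ 2 - 2 * ⟪b, a - b⟫ - ‖b‖ ^ 2 := by
    intro a b
    have h1 : ⟪b, a - b⟫ = ⟪a, b⟫ - ‖b‖ ^ 2 := by
      rw [inner_sub_right, real_inner_self_eq_norm_sq, real_inner_comm]
    rw [norm_sub_sq_real, h1]; ring
  have hgφinner : ∀ a b : E, ⟪gφ b, a - b⟫ = ⟪g b, a - b⟫ - m * ⟪b, a - b⟫ := by
    intro a b
    simp only [hgφ, inner_sub_left, real_inner_smul_left]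
  have hcvxφ : ∀ a b : E, φ b + ⟪gφ b, a - b⟫ ≤ φ a := by
    intro a b
    simp only [hφ]
    rw [hgφinner]
    have hm2 : m / 2 * ‖a - b‖ ^ 2 = m / 2 * (‖a‖ ^ 2 - 2 * ⟪b, a - b⟫ - ‖b‖ ^ 2) := by
      rw [← hid a b]
    linarith [hsc a b, hm2]
  have hsmoothφ : ∀ c : ℝ, L - m ≤ c → ∀ a b : E,
      φ b ≤ φ a + ⟪gφ a, b - a⟫ + c / 2 * ‖b - a‖ ^ 2 := by
    intro c hc a b
    simp only [hφ]
    rw [hgφinner]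
    have hm2 : m / 2 * ‖b - a‖ ^ 2 = m / 2 * (‖b‖ ^ 2 - 2 * ⟪a, b - a⟫ - ‖a‖ ^ 2) := by
      rw [← hid b a]
    have h3 : 0 ≤ (c - (L - m)) * ‖b - a‖ ^ 2 :=
      mul_nonneg (by linarith) (sq_nonneg _)
    linarith [hsmoothL a b, hm2, h3]
  set u := g a - g b with hu
  set r := a - b with hr
  have hgd : gφ a - gφ b = u - m • r := by
    simp only [hgφ, hu, hr, smul_sub]; abel
  have hinner_umr : ⟪u - m • r, r⟫ = ⟪u, r⟫ - m * ‖r‖ ^ 2 := by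
    rw [inner_sub_left, real_inner_smul_left, real_inner_self_eq_norm_sq]
  have hK : 0 ≤ ⟪u, r⟫ - m * ‖r‖ ^ 2 := by
    have h1 := hcvxφ a b
    have h2 := hcvxφ b a
    have h3 : ⟪gφ a, b - a⟫ = -⟪gφ a, a - b⟫ := by
      rw [← inner_neg_right]; congr 1; abel
    have h4 : ⟪gφ a, a - b⟫ - ⟪gφ b, a - b⟫ = ⟪u, r⟫ - m * ‖r‖ ^ 2 := by
      rw [← inner_sub_left, hgd, hinner_umr]
    rw [h3] at h2
    linarith
  have hnorm_umr : ‖u - m • r‖ ^ 2 = ‖u‖ ^ 2 - 2 * m * ⟪u, r⟫ + m ^ 2 * ‖r‖ ^ 2 := by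
    rw [norm_sub_sq_real, real_inner_smul_right, norm_smul, Real.norm_eq_abs, mul_pow, sq_abs]
    ring
  set K := ⟪u, r⟫ - m * ‖r‖ ^ 2 with hKdef
  apply le_of_forall_pos_le_add
  intro ε' hε'
  set ε := ε' / (K + 1) with hε
  have hK1 : (0:ℝ) < K + 1 := by linarith
  have hεpos : 0 < ε := div_pos hε' hK1
  have hεK : ε * K ≤ ε' := by
    rw [hε, div_mul_eq_mul_div, div_le_iff₀ hK1]
    nlinarith
  have hc0 : 0 < L - m + ε := by linarith
  have coco := aux_coco φ gφ (L - m + ε) hc0 hcvxφ (hsmoothφ _ (by linarith)) a b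
  rw [hgd] at coco
  rw [hinner_umr, hnorm_umr] at coco
  have hexp : (L - m + ε) * (⟪u, r⟫ - m * ‖r‖ ^ 2) = (L - m) * K + ε * K := by
    rw [hKdef]; ring
  rw [hexp] at coco
  have : m * L * ‖r‖ ^ 2 + ‖u‖ ^ 2 ≤ (L + m) * ⟪u, r⟫ + ε * K := by
    have hKexp : (L - m) * K = (L - m) * ⟪u, r⟫ - (L - m) * m * ‖r‖ ^ 2 := by rw [hKdef]; ring
    nlinarith [coco]
  linarith

end auxlemmas

local notation "⟪" x ", " y "⟫" => @inner ℝ _ _ x y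

private lemma aux_gram {p : ℕ} (M : Matrix (Fin 3) (Fin 3) ℝ)
    (hM : ∀ z : Fin 3 → ℝ, ∑ k, ∑ l, z k * M k l * z l ≤ 0)
    (u : Fin 3 → EuclideanSpace ℝ (Fin p)) :
    ∑ k, ∑ l, M k l * ⟪u k, u l⟫ ≤ 0 := by
  simp_rw [PiLp.inner_apply, RCLike.inner_apply, conj_trivial, Finset.mul_sum]
  have h2 : ∀ k : Fin 3, ∑ l : Fin 3, ∑ c : Fin p, M k l * (u l c * u k c)
      = ∑ c : Fin p, ∑ l : Fin 3, M k l * (u l c * u k c) :=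
    fun k => Finset.sum_comm
  rw [Finset.sum_congr rfl (fun k _ => h2 k), Finset.sum_comm]
  apply Finset.sum_nonpos
  intro c _
  refine le_trans (le_of_eq ?_) (hM fun k => u k c)
  apply Finset.sum_congr rfl; intro k _
  apply Finset.sum_congr rfl; intro l _
  ring

private lemma aux_grad_avg {p n : ℕ} (f : Fin n → EuclideanSpace ℝ (Fin p) → ℝ)
    (hfdiff : ∀ i, Differentiable ℝ (f i))
    (favg : EuclideanSpace ℝ (Fin p) → ℝ)
    (hfavg : ∀ z, favg z = (1 / (n : ℝ)) * ∑ i, f i z)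
    (y : EuclideanSpace ℝ (Fin p)) :
    gradient favg y = (1 / (n : ℝ)) • ∑ i, gradient (f i) y := by
  have hfun : favg = fun z => (1 / (n : ℝ)) * ∑ i, f i z := funext hfavg
  have h1 : HasFDerivAt (fun z : EuclideanSpace ℝ (Fin p) => ∑ i : Fin n, f i z)
      (∑ i : Fin n, fderiv ℝ (f i) y) y :=
    HasFDerivAt.fun_sum (fun i _ => (hfdiff i y).hasFDerivAt)
  have h2 := h1.const_mul (1 / (n : ℝ))
  rw [← hfun] at h2
  rw [gradient, h2.fderiv, _root_.map_smul, map_sum]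
  rfl

private lemma aux_key_s11 {p : ℕ} (m L α ρ l1 l2 l3 : ℝ) (Xt : Matrix (Fin 2) (Fin 2) ℝ)
    (hLMI : ∀ z : Fin 3 → ℝ,
      ∑ k, ∑ l, z k *
        (!![1 - ρ ^ 2 - 2 * m * l1 + l3 * Xt 0 0, -α + l1 + l3 * Xt 0 1, 1;
            -α + l1 + l3 * Xt 1 0, α ^ 2 + l3 * Xt 1 1, -α;
            1, -α, 1 - l2] k l) * z l ≤ 0)
    (r h e : EuclideanSpace ℝ (Fin p)) :
    ‖r - α • h + e‖ ^ 2 ≤ ρ ^ 2 * ‖r‖ ^ 2 + l2 * ‖e‖ ^ 2 + 2 * l1 * (m * ‖r‖ ^ 2 - ⟪r, h⟫)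
      - l3 * (Xt 0 0 * ‖r‖ ^ 2 + (Xt 0 1 + Xt 1 0) * ⟪r, h⟫ + Xt 1 1 * ‖h‖ ^ 2) := by
  have G := aux_gram _ hLMI ![r, h, e]
  simp only [Fin.sum_univ_three, Fin.isValue, Matrix.of_apply, Matrix.cons_val', Matrix.cons_val_zero,
    Matrix.cons_val_one, Matrix.head_cons, Matrix.empty_val', Matrix.cons_val_fin_one,
    Matrix.cons_val_two, Nat.succ_eq_add_one, Nat.reduceAdd, Matrix.tail_cons,
    Matrix.head_fin_const] at G
  have hx1 : ‖r - α • h + e‖ ^ 2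
      = ‖r‖ ^ 2 - 2 * α * ⟪r, h⟫ + α ^ 2 * ‖h‖ ^ 2 + 2 * ⟪r, e⟫ - 2 * α * ⟪h, e⟫ + ‖e‖ ^ 2 := by
    rw [norm_add_sq_real, norm_sub_sq_real, inner_sub_left, real_inner_smul_left,
      real_inner_smul_right, norm_smul, Real.norm_eq_abs, mul_pow, sq_abs]
    ring
  have c1 : ⟪h, r⟫ = ⟪r, h⟫ := real_inner_comm _ _
  have c2 : ⟪e, r⟫ = ⟪r, e⟫ := real_inner_comm _ _
  have c3 : ⟪e, h⟫ = ⟪h, e⟫ := real_inner_comm _ _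
  have s1 : ⟪r, r⟫ = ‖r‖ ^ 2 := real_inner_self_eq_norm_sq r
  have s2 : ⟪h, h⟫ = ‖h‖ ^ 2 := real_inner_self_eq_norm_sq h
  have s3 : ⟪e, e⟫ = ‖e‖ ^ 2 := real_inner_self_eq_norm_sq e
  rw [c1, c2, c3, s1, s2, s3] at G
  nlinarith [G, hx1]

theorem stmt_11 (p n : ℕ) (hn : 0 < n) (m L α σ : ℝ)
    (hm : 0 < m) (hmL : m ≤ L) (hα : 0 ≤ α) (hσ : 0 ≤ σ)
    (f : Fin n → EuclideanSpace ℝ (Fin p) → ℝ)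
    (hfdiff : ∀ i, Differentiable ℝ (f i))
    (favg : EuclideanSpace ℝ (Fin p) → ℝ)
    (hfavg : ∀ z, favg z = (1 / (n : ℝ)) * ∑ i, f i z)
    (hstrong : ∀ x y : EuclideanSpace ℝ (Fin p),
      favg y + @inner ℝ _ _ (gradient favg y) (x - y) + m / 2 * ‖x - y‖ ^ 2 ≤ favg x)
    (xstar : EuclideanSpace ℝ (Fin p)) (hmin : ∀ z, favg xstar ≤ favg z)
    (Xt : Matrix (Fin 2) (Fin 2) ℝ)
    (hcase :
      (Xt = !![2 * L ^ 2, 0; 0, -1] ∧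
        (∀ i, ∀ a b : EuclideanSpace ℝ (Fin p),
          ‖gradient (f i) a - gradient (f i) b‖ ≤ L * ‖a - b‖)) ∨
      (Xt = !![0, L; L, -1] ∧
        (∀ i, ConvexOn ℝ Set.univ (f i)) ∧
        (∀ i, ∀ a b : EuclideanSpace ℝ (Fin p),
          ‖gradient (f i) a - gradient (f i) b‖ ≤ L * ‖a - b‖)) ∨
      (Xt = !![-(2 * L * m), L + m; L + m, -1] ∧
        (∀ i, ∀ a b : EuclideanSpace ℝ (Fin p),
          f i b + @inner ℝ _ _ (gradient (f i) b) (a - b) + m / 2 * ‖a - b‖ ^ 2 ≤ f i a) ∧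
        (∀ i, ∀ a b : EuclideanSpace ℝ (Fin p),
          ‖gradient (f i) a - gradient (f i) b‖ ≤ L * ‖a - b‖)))
    (G2 : ℝ) (hG2 : G2 = (1 / (n : ℝ)) * ∑ i, ‖gradient (f i) xstar‖ ^ 2)
    (xstar' : EuclideanSpace ℝ (Fin p)) (hx' : ‖xstar' - xstar‖ ≤ σ)
    {Ω : Type*} [MeasurableSpace Ω] (P : Measure Ω) [IsProbabilityMeasure P]
    (x : Ω → EuclideanSpace ℝ (Fin p)) (hxmeas : Measurable x)
    (hint1 : Integrable (fun ω => ‖x ω - xstar‖ ^ 2) P)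
    (hint2 : ∀ i, Integrable (fun ω => ‖gradient (f i) (x ω)‖ ^ 2) P)
    (idx : Ω → Fin n) (hidxmeas : Measurable idx)
    (hunif : ∀ j : Fin n, P (idx ⁻¹' {j}) = 1 / (n : ENNReal))
    (hindep : ProbabilityTheory.IndepFun x idx P)
    (ρ l1 l2 l3 : ℝ) (hρ : 0 ≤ ρ) (hl1 : 0 ≤ l1) (hl2 : 0 ≤ l2) (hl3 : 0 ≤ l3)
    (hLMI : ∀ z : Fin 3 → ℝ,
      ∑ k, ∑ l, z k *
        (!![1 - ρ ^ 2 - 2 * m * l1 + l3 * Xt 0 0, -α + l1 + l3 * Xt 0 1, 1;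
            -α + l1 + l3 * Xt 1 0, α ^ 2 + l3 * Xt 1 1, -α;
            1, -α, 1 - l2] k l) * z l ≤ 0) :
    (∫ ω, ‖x ω - α • gradient (f (idx ω)) (x ω) - xstar'‖ ^ 2 ∂P) ≤
      ρ ^ 2 * (∫ ω, ‖x ω - xstar‖ ^ 2 ∂P) + l2 * σ ^ 2 + 2 * l3 * G2 := by
  have hL0 : (0:ℝ) ≤ L := hm.le.trans hmL
  have hLpos : (0:ℝ) < L := lt_of_lt_of_le hm hmL
  have hn0 : ((n:ℝ)) ≠ 0 := Nat.cast_ne_zero.2 hn.ne'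
  have hnpos : (0:ℝ) < (n:ℝ) := Nat.cast_pos.2 hn
  have hlipAll : ∀ i, ∀ a b : EuclideanSpace ℝ (Fin p),
      ‖gradient (f i) a - gradient (f i) b‖ ≤ L * ‖a - b‖ := by
    rcases hcase with ⟨_, h⟩ | ⟨_, _, h⟩ | ⟨_, _, h⟩ <;> exact h
  -- gradient of the average vanishes at the minimizer
  have hgz : gradient favg xstar = 0 := by
    have hloc : IsLocalMin favg xstar := Filter.Eventually.of_forall hmin
    rw [gradient, hloc.fderiv_eq_zero, map_zero]
  have hsum0 : ∑ j, gradient (f j) xstar = 0 := by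
    have h1 := aux_grad_avg f hfdiff favg hfavg xstar
    rw [hgz] at h1
    have h2 := h1.symm
    rcases smul_eq_zero.1 h2 with h | h
    · exact absurd h (by simp [hn0])
    · exact h
  -- monotonicity type inequality from strong convexity
  have hmono : ∀ y : EuclideanSpace ℝ (Fin p),
      (n:ℝ) * (m * ‖y - xstar‖ ^ 2) ≤ ∑ j, ⟪y - xstar, gradient (f j) y⟫ := by
    intro y
    have h1 := hstrong xstar y
    have h2 := hstrong y xstar
    rw [hgz, inner_zero_left] at h2
    have h3 : ⟪gradient favg y, xstar - y⟫ = -⟪y - xstar, gradient favg y⟫ := by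
      rw [show xstar - y = -(y - xstar) by abel, inner_neg_right, real_inner_comm]
    rw [h3, norm_sub_rev xstar y] at h1
    have h4 : m * ‖y - xstar‖ ^ 2 ≤ ⟪y - xstar, gradient favg y⟫ := by linarith
    have h5 : ∑ j, ⟪y - xstar, gradient (f j) y⟫ = ⟪y - xstar, ∑ j, gradient (f j) y⟫ :=
      (inner_sum _ _ _).symm
    have h6 : ∑ j, gradient (f j) y = (n:ℝ) • gradient favg y := by
      rw [aux_grad_avg f hfdiff favg hfavg y, smul_smul]
      rw [mul_one_div_cancel hn0, one_smul]
    rw [h5, h6, real_inner_smul_right]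
    exact le_trans (by nlinarith) (mul_le_mul_of_nonneg_left h4 hnpos.le)
  -- the case-dependent quadratic bound
  have hQ : ∀ y : EuclideanSpace ℝ (Fin p),
      -2 * ∑ j, ‖gradient (f j) xstar‖ ^ 2 ≤
      ∑ j, (Xt 0 0 * ‖y - xstar‖ ^ 2 + (Xt 0 1 + Xt 1 0) * ⟪y - xstar, gradient (f j) y⟫
        + Xt 1 1 * ‖gradient (f j) y‖ ^ 2) := by
    intro y
    have hzero : ∑ j, ⟪y - xstar, gradient (f j) xstar⟫ = 0 := by
      rw [← inner_sum, hsum0, inner_zero_right]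
    have hsplit : ∀ j : Fin n, gradient (f j) y
        = (gradient (f j) y - gradient (f j) xstar) + gradient (f j) xstar := by
      intro j; abel
    have hdecomp : ∀ j : Fin n,
        ⟪y - xstar, gradient (f j) y⟫ = ⟪y - xstar, gradient (f j) y - gradient (f j) xstar⟫
          + ⟪y - xstar, gradient (f j) xstar⟫ := by
      intro j
      conv_lhs => rw [hsplit j]
      rw [inner_add_right]
    have hnormdecomp : ∀ j : Fin n,
        ‖gradient (f j) y‖ ^ 2 = ‖gradient (f j) y - gradient (f j) xstar‖ ^ 2
          + 2 * ⟪gradient (f j) y - gradient (f j) xstar, gradient (f j) xstar⟫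
          + ‖gradient (f j) xstar‖ ^ 2 := by
      intro j
      conv_lhs => rw [hsplit j]
      rw [norm_add_sq_real]
    have hsq : ∀ j : Fin n,
        0 ≤ ‖gradient (f j) y - gradient (f j) xstar‖ ^ 2
          - 2 * ⟪gradient (f j) y - gradient (f j) xstar, gradient (f j) xstar⟫
          + ‖gradient (f j) xstar‖ ^ 2 := by
      intro j
      have := norm_sub_sq_real (gradient (f j) y - gradient (f j) xstar) (gradient (f j) xstar)
      nlinarith [sq_nonneg ‖(gradient (f j) y - gradient (f j) xstar) - gradient (f j) xstar‖]
    rcases hcase with ⟨hXt, hlip⟩ | ⟨hXt, hcvx, hlip⟩ | ⟨hXt, hsc, hlip⟩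
    · -- case (a)
      subst hXt
      simp only [Matrix.cons_val', Matrix.cons_val_zero, Matrix.empty_val',
        Matrix.cons_val_fin_one, Matrix.cons_val_one, Matrix.head_cons, Matrix.head_fin_const,
        Matrix.of_apply]
      rw [Finset.mul_sum]
      apply Finset.sum_le_sum
      intro j _
      have h1 := hlip j y xstar
      rw [hnormdecomp j]
      nlinarith [norm_nonneg (gradient (f j) y - gradient (f j) xstar),
        norm_nonneg (y - xstar), mul_nonneg hL0 (norm_nonneg (y - xstar)), hsq j]
    · -- case (b)
      subst hXt
      simp only [Matrix.cons_val', Matrix.cons_val_zero, Matrix.empty_val',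
        Matrix.cons_val_fin_one, Matrix.cons_val_one, Matrix.head_cons, Matrix.head_fin_const,
        Matrix.of_apply]
      have key : ∀ j : Fin n,
          2 * L * ⟪y - xstar, gradient (f j) xstar⟫ - 2 * ‖gradient (f j) xstar‖ ^ 2 ≤
          0 * ‖y - xstar‖ ^ 2 + (L + L) * ⟪y - xstar, gradient (f j) y⟫ + (-1) * ‖gradient (f j) y‖ ^ 2 := by
        intro j
        have hco := aux_coco (f j) (gradient (f j)) L hLpos
          (fun a b => aux_cvx_ineq (f j) (hfdiff j) (hcvx j) a b)
          (fun a b => aux_smooth (f j) (hfdiff j) L hL0 (hlip j) a b) y xstar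
        have hcomm : ⟪gradient (f j) y - gradient (f j) xstar, y - xstar⟫
            = ⟪y - xstar, gradient (f j) y - gradient (f j) xstar⟫ := real_inner_comm _ _
        rw [hcomm] at hco
        rw [hdecomp j, hnormdecomp j]
        linarith [hco, hsq j]
      calc -2 * ∑ j, ‖gradient (f j) xstar‖ ^ 2
          = ∑ j, (2 * L * ⟪y - xstar, gradient (f j) xstar⟫ - 2 * ‖gradient (f j) xstar‖ ^ 2) := by
            rw [Finset.sum_sub_distrib, ← Finset.mul_sum, ← Finset.mul_sum, hzero]
            ring
        _ ≤ _ := Finset.sum_le_sum fun j _ => key j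
    · -- case (c)
      subst hXt
      simp only [Matrix.cons_val', Matrix.cons_val_zero, Matrix.empty_val',
        Matrix.cons_val_fin_one, Matrix.cons_val_one, Matrix.head_cons, Matrix.head_fin_const,
        Matrix.of_apply]
      have key : ∀ j : Fin n,
          2 * (L + m) * ⟪y - xstar, gradient (f j) xstar⟫ - 2 * ‖gradient (f j) xstar‖ ^ 2 ≤
          -(2 * L * m) * ‖y - xstar‖ ^ 2 + ((L + m) + (L + m)) * ⟪y - xstar, gradient (f j) y⟫
            + (-1) * ‖gradient (f j) y‖ ^ 2 := by
        intro j
        have hco := aux_interp (f j) (hfdiff j) m L hm hmL (hsc j) (hlip j) y xstar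
        have hcomm : ⟪gradient (f j) y - gradient (f j) xstar, y - xstar⟫
            = ⟪y - xstar, gradient (f j) y - gradient (f j) xstar⟫ := real_inner_comm _ _
        rw [hcomm] at hco
        rw [hdecomp j, hnormdecomp j]
        linarith [hco, hsq j]
      calc -2 * ∑ j, ‖gradient (f j) xstar‖ ^ 2
          = ∑ j, (2 * (L + m) * ⟪y - xstar, gradient (f j) xstar⟫
              - 2 * ‖gradient (f j) xstar‖ ^ 2) := by
            rw [Finset.sum_sub_distrib, ← Finset.mul_sum, ← Finset.mul_sum, hzero]
            ring
        _ ≤ _ := Finset.sum_le_sum fun j _ => key j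
  -- deterministic average bound
  have hdet : ∀ y : EuclideanSpace ℝ (Fin p),
      ∑ j, ‖y - α • gradient (f j) y - xstar'‖ ^ 2 ≤
        (n:ℝ) * (ρ ^ 2 * ‖y - xstar‖ ^ 2 + l2 * σ ^ 2) + 2 * l3 * ∑ j, ‖gradient (f j) xstar‖ ^ 2 := by
    intro y
    have hrew : ∀ h : EuclideanSpace ℝ (Fin p),
        y - α • h - xstar' = (y - xstar) - α • h + (xstar - xstar') := by
      intro h; abel
    have key : ∀ j : Fin n, ‖y - α • gradient (f j) y - xstar'‖ ^ 2 ≤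
        ρ ^ 2 * ‖y - xstar‖ ^ 2 + l2 * ‖xstar - xstar'‖ ^ 2 + 2 * l1 * (m * ‖y - xstar‖ ^ 2 - ⟪y - xstar, gradient (f j) y⟫)
          - l3 * (Xt 0 0 * ‖y - xstar‖ ^ 2 + (Xt 0 1 + Xt 1 0) * ⟪y - xstar, gradient (f j) y⟫
            + Xt 1 1 * ‖gradient (f j) y‖ ^ 2) := by
      intro j
      rw [hrew]
      exact aux_key_s11 m L α ρ l1 l2 l3 Xt hLMI (y - xstar) (gradient (f j) y) (xstar - xstar')
    have hsum := Finset.sum_le_sum fun j (_ : j ∈ Finset.univ) => key j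
    have hEsig : ‖xstar - xstar'‖ ^ 2 ≤ σ ^ 2 := by
      have h1 : ‖xstar - xstar'‖ ≤ σ := by rw [norm_sub_rev]; exact hx'
      nlinarith [norm_nonneg (xstar - xstar')]
    have hexp : ∑ j, (ρ ^ 2 * ‖y - xstar‖ ^ 2 + l2 * ‖xstar - xstar'‖ ^ 2
          + 2 * l1 * (m * ‖y - xstar‖ ^ 2 - ⟪y - xstar, gradient (f j) y⟫)
          - l3 * (Xt 0 0 * ‖y - xstar‖ ^ 2 + (Xt 0 1 + Xt 1 0) * ⟪y - xstar, gradient (f j) y⟫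
            + Xt 1 1 * ‖gradient (f j) y‖ ^ 2))
        = (n:ℝ) * (ρ ^ 2 * ‖y - xstar‖ ^ 2 + l2 * ‖xstar - xstar'‖ ^ 2
            + 2 * l1 * (m * ‖y - xstar‖ ^ 2))
          - 2 * l1 * ∑ j, ⟪y - xstar, gradient (f j) y⟫
          - l3 * ∑ j, (Xt 0 0 * ‖y - xstar‖ ^ 2
            + (Xt 0 1 + Xt 1 0) * ⟪y - xstar, gradient (f j) y⟫
            + Xt 1 1 * ‖gradient (f j) y‖ ^ 2) := by
      have h1 : ∀ j : Fin n, (ρ ^ 2 * ‖y - xstar‖ ^ 2 + l2 * ‖xstar - xstar'‖ ^ 2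
          + 2 * l1 * (m * ‖y - xstar‖ ^ 2 - ⟪y - xstar, gradient (f j) y⟫)
          - l3 * (Xt 0 0 * ‖y - xstar‖ ^ 2 + (Xt 0 1 + Xt 1 0) * ⟪y - xstar, gradient (f j) y⟫
            + Xt 1 1 * ‖gradient (f j) y‖ ^ 2))
          = (ρ ^ 2 * ‖y - xstar‖ ^ 2 + l2 * ‖xstar - xstar'‖ ^ 2
              + 2 * l1 * (m * ‖y - xstar‖ ^ 2))
            - (2 * l1 * ⟪y - xstar, gradient (f j) y⟫
              + l3 * (Xt 0 0 * ‖y - xstar‖ ^ 2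
                + (Xt 0 1 + Xt 1 0) * ⟪y - xstar, gradient (f j) y⟫
                + Xt 1 1 * ‖gradient (f j) y‖ ^ 2)) := fun j => by ring
      rw [Finset.sum_congr rfl (fun j _ => h1 j), Finset.sum_sub_distrib, Finset.sum_const,
        Finset.card_univ, Fintype.card_fin, nsmul_eq_mul, Finset.sum_add_distrib,
        ← Finset.mul_sum, ← Finset.mul_sum]
      ring
    rw [hexp] at hsum
    have hm1 := hmono y
    have hq1 := hQ y
    have t1 : 2 * l1 * ((n:ℝ) * (m * ‖y - xstar‖ ^ 2)) ≤ 2 * l1 * ∑ j, ⟪y - xstar, gradient (f j) y⟫ :=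
      mul_le_mul_of_nonneg_left hm1 (by linarith)
    have t2 : l3 * (-2 * ∑ j, ‖gradient (f j) xstar‖ ^ 2) ≤
        l3 * ∑ j, (Xt 0 0 * ‖y - xstar‖ ^ 2 + (Xt 0 1 + Xt 1 0) * ⟪y - xstar, gradient (f j) y⟫
          + Xt 1 1 * ‖gradient (f j) y‖ ^ 2) :=
      mul_le_mul_of_nonneg_left hq1 hl3
    have t3 : (n:ℝ) * (l2 * ‖xstar - xstar'‖ ^ 2) ≤ (n:ℝ) * (l2 * σ ^ 2) :=
      mul_le_mul_of_nonneg_left (mul_le_mul_of_nonneg_left hEsig hl2) hnpos.le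
    linarith [hsum, t1, t2, t3]
  -- continuity and measurability of the gradients
  have hgcont : ∀ j : Fin n, Continuous (gradient (f j)) := by
    intro j
    have hlw : LipschitzWith (Real.toNNReal L) (gradient (f j)) := by
      apply LipschitzWith.of_dist_le_mul
      intro a b
      rw [dist_eq_norm, dist_eq_norm, Real.coe_toNNReal L hL0]
      exact hlipAll j a b
    exact hlw.continuous
  set φ : Fin n → EuclideanSpace ℝ (Fin p) → ℝ :=
    fun j y => ‖y - α • gradient (f j) y - xstar'‖ ^ 2 with hφdef
  have hφcont : ∀ j, Continuous (φ j) := by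
    intro j
    apply Continuous.pow
    apply Continuous.norm
    exact (continuous_id.sub ((hgcont j).const_smul α)).sub continuous_const
  have hφbound : ∀ j, ∀ y : EuclideanSpace ℝ (Fin p),
      φ j y ≤ 3 * ‖y - xstar‖ ^ 2 + 3 * α ^ 2 * ‖gradient (f j) y‖ ^ 2 + 3 * σ ^ 2 := by
    intro j y
    have h1 : y - α • gradient (f j) y - xstar'
        = (y - xstar) - α • gradient (f j) y + (xstar - xstar') := by abel
    have h2 : ‖y - α • gradient (f j) y - xstar'‖
        ≤ ‖y - xstar‖ + α * ‖gradient (f j) y‖ + σ := by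
      rw [h1]
      refine le_trans (norm_add_le _ _) ?_
      have h3 : ‖(y - xstar) - α • gradient (f j) y‖ ≤ ‖y - xstar‖ + α * ‖gradient (f j) y‖ := by
        refine le_trans (norm_sub_le _ _) ?_
        rw [norm_smul, Real.norm_eq_abs, abs_of_nonneg hα]
      have h4 : ‖xstar - xstar'‖ ≤ σ := by rw [norm_sub_rev]; exact hx'
      linarith
    have h5 : (0:ℝ) ≤ ‖y - xstar‖ + α * ‖gradient (f j) y‖ + σ := by
      have := norm_nonneg (y - xstar)
      have := mul_nonneg hα (norm_nonneg (gradient (f j) y))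
      linarith
    calc φ j y ≤ (‖y - xstar‖ + α * ‖gradient (f j) y‖ + σ) ^ 2 := by
          rw [hφdef]
          exact pow_le_pow_left₀ (norm_nonneg _) h2 2
      _ ≤ 3 * ‖y - xstar‖ ^ 2 + 3 * α ^ 2 * ‖gradient (f j) y‖ ^ 2 + 3 * σ ^ 2 := by
          nlinarith [sq_nonneg (‖y - xstar‖ - α * ‖gradient (f j) y‖),
            sq_nonneg (‖y - xstar‖ - σ), sq_nonneg (α * ‖gradient (f j) y‖ - σ)]
  have hφmeasx : ∀ j, AEStronglyMeasurable (fun ω => φ j (x ω)) P := fun j =>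
    ((hφcont j).measurable.comp hxmeas).aestronglyMeasurable
  have hφint : ∀ j, Integrable (fun ω => φ j (x ω)) P := by
    intro j
    apply Integrable.mono'
      (((hint1.const_mul 3).add ((hint2 j).const_mul (3 * α ^ 2))).add
        (integrable_const (3 * σ ^ 2)))
      (hφmeasx j)
    apply Filter.Eventually.of_forall
    intro ω
    have h1 := hφbound j (x ω)
    have h2 : (0:ℝ) ≤ φ j (x ω) := by rw [hφdef]; positivity
    rw [Real.norm_eq_abs, abs_of_nonneg h2]
    simpa using h1
  have hAmeas : ∀ j : Fin n, MeasurableSet (idx ⁻¹' {j}) :=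
    fun j => hidxmeas (measurableSet_singleton j)
  -- split the integral over the value of idx
  have hsplit : (fun ω => ‖x ω - α • gradient (f (idx ω)) (x ω) - xstar'‖ ^ 2)
      = fun ω => ∑ j, Set.indicator (idx ⁻¹' {j}) (fun ω' => φ j (x ω')) ω := by
    funext ω
    rw [Finset.sum_eq_single (idx ω)]
    · rw [Set.indicator_of_mem (by simp : ω ∈ idx ⁻¹' {idx ω})]
    · intro j _ hj
      apply Set.indicator_of_notMem
      intro hmem
      exact hj ((by simpa using hmem : idx ω = j).symm)
    · intro h; exact absurd (Finset.mem_univ _) h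
  have hprod : ∀ j : Fin n, ∫ ω, Set.indicator (idx ⁻¹' {j}) (fun ω' => φ j (x ω')) ω ∂P
      = (∫ ω, φ j (x ω) ∂P) * (1 / (n:ℝ)) := by
    intro j
    set χ : Fin n → ℝ := fun i' => if i' = j then 1 else 0 with hχdef
    have hrw : (fun ω => Set.indicator (idx ⁻¹' {j}) (fun ω' => φ j (x ω')) ω)
        = (fun ω => φ j (x ω)) * (fun ω => χ (idx ω)) := by
      funext ω
      by_cases h : idx ω = j
      · simp [Set.indicator, h, hχdef]
      · simp [Set.indicator, h, hχdef]
    have hχidx : (fun ω => χ (idx ω)) = fun ω =>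
        Set.indicator (idx ⁻¹' {j}) (fun _ => (1:ℝ)) ω := by
      funext ω
      by_cases h : idx ω = j
      · simp [Set.indicator, h, hχdef]
      · simp [Set.indicator, h, hχdef]
    have hχint : Integrable (fun ω => χ (idx ω)) P := by
      rw [hχidx]
      exact (integrable_const (1:ℝ)).indicator (hAmeas j)
    have hiind : ProbabilityTheory.IndepFun (fun ω => φ j (x ω)) (fun ω => χ (idx ω)) P :=
      hindep.comp (hφcont j).measurable (Measurable.of_discrete (f := χ))
    have hmul := hiind.integral_mul_eq_mul_integral (hφint j).aestronglyMeasurable hχint.aestronglyMeasurable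
    have hχval : ∫ ω, χ (idx ω) ∂P = 1 / (n:ℝ) := by
      rw [hχidx, integral_indicator_const (1:ℝ) (hAmeas j), measureReal_def, hunif j, smul_eq_mul, mul_one]
      rw [ENNReal.toReal_div]
      simp
    rw [hrw, hmul, hχval]
  -- put everything together
  have hLHS : (∫ ω, ‖x ω - α • gradient (f (idx ω)) (x ω) - xstar'‖ ^ 2 ∂P)
      = ∑ j, (∫ ω, φ j (x ω) ∂P) * (1 / (n:ℝ)) := by
    rw [hsplit, integral_finset_sum _ (fun j _ => (hφint j).indicator (hAmeas j))]
    exact Finset.sum_congr rfl fun j _ => hprod j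
  have hsum_int : ∫ ω, (∑ j, φ j (x ω)) ∂P = ∑ j, ∫ ω, φ j (x ω) ∂P :=
    integral_finset_sum _ (fun j _ => hφint j)
  have hbound_int : Integrable (fun ω =>
      (n:ℝ) * (ρ ^ 2 * ‖x ω - xstar‖ ^ 2 + l2 * σ ^ 2)
        + 2 * l3 * ∑ j, ‖gradient (f j) xstar‖ ^ 2) P := by
    apply Integrable.add _ (integrable_const _)
    have : (fun ω => (n:ℝ) * (ρ ^ 2 * ‖x ω - xstar‖ ^ 2 + l2 * σ ^ 2))
        = fun ω => (n:ℝ) * ρ ^ 2 * ‖x ω - xstar‖ ^ 2 + (n:ℝ) * (l2 * σ ^ 2) := by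
      funext ω; ring
    rw [this]
    exact (hint1.const_mul _).add (integrable_const _)
  have hsum_int2 : Integrable (fun ω => ∑ j, φ j (x ω)) P :=
    integrable_finset_sum _ (fun j _ => hφint j)
  have hmono_int : ∫ ω, (∑ j, φ j (x ω)) ∂P ≤
      ∫ ω, ((n:ℝ) * (ρ ^ 2 * ‖x ω - xstar‖ ^ 2 + l2 * σ ^ 2)
        + 2 * l3 * ∑ j, ‖gradient (f j) xstar‖ ^ 2) ∂P := by
    apply integral_mono hsum_int2 hbound_int
    intro ω
    exact hdet (x ω)
  have hbound_val : ∫ ω, ((n:ℝ) * (ρ ^ 2 * ‖x ω - xstar‖ ^ 2 + l2 * σ ^ 2)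
        + 2 * l3 * ∑ j, ‖gradient (f j) xstar‖ ^ 2) ∂P
      = (n:ℝ) * (ρ ^ 2 * (∫ ω, ‖x ω - xstar‖ ^ 2 ∂P) + l2 * σ ^ 2)
        + 2 * l3 * ∑ j, ‖gradient (f j) xstar‖ ^ 2 := by
    have h1 : (fun ω => (n:ℝ) * (ρ ^ 2 * ‖x ω - xstar‖ ^ 2 + l2 * σ ^ 2)
        + 2 * l3 * ∑ j, ‖gradient (f j) xstar‖ ^ 2)
        = fun ω => ((n:ℝ) * ρ ^ 2) * ‖x ω - xstar‖ ^ 2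
          + ((n:ℝ) * (l2 * σ ^ 2) + 2 * l3 * ∑ j, ‖gradient (f j) xstar‖ ^ 2) := by
      funext ω; ring
    rw [h1, integral_add (hint1.const_mul _) (integrable_const _), integral_const_mul,
      integral_const]
    simp [measure_univ]
    ring
  rw [hLHS]
  have hfinal : ∑ j, (∫ ω, φ j (x ω) ∂P) * (1 / (n:ℝ))
      = (1 / (n:ℝ)) * ∫ ω, (∑ j, φ j (x ω)) ∂P := by
    rw [hsum_int, Finset.mul_sum]
    exact Finset.sum_congr rfl fun j _ => by ring
  rw [hfinal]
  have hG2' : ∑ j, ‖gradient (f j) xstar‖ ^ 2 = (n:ℝ) * G2 := by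
    rw [hG2]; field_simp
  calc (1 / (n:ℝ)) * ∫ ω, (∑ j, φ j (x ω)) ∂P
      ≤ (1 / (n:ℝ)) * ((n:ℝ) * (ρ ^ 2 * (∫ ω, ‖x ω - xstar‖ ^ 2 ∂P) + l2 * σ ^ 2)
        + 2 * l3 * ∑ j, ‖gradient (f j) xstar‖ ^ 2) := by
        apply mul_le_mul_of_nonneg_left _ (by positivity)
        rw [← hbound_val]
        exact hmono_int
    _ = ρ ^ 2 * (∫ ω, ‖x ω - xstar‖ ^ 2 ∂P) + l2 * σ ^ 2 + 2 * l3 * G2 := by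
        rw [hG2']
        field_simp
end

section
/- Let 0 < m < L, σ ≥ 0, G ≥ 0, and U ≥ 0. Suppose one of the following cases holds: (a) X̃ := [[2L², 0], [0, −1]] and 0 ≤ α ≤ m/L²; (b) X̃ := [[0, L], [L, −1]] and 0 ≤ α ≤ 1/L; (c) X̃ := [[−2Lm, L+m], [L+m, −1]] and 0 ≤ α ≤ 1/(L+m). Set m̃ := X̃₁₁ + 2m X̃₂₁ and ρ̂ := 1 − 2αm + m̃ α². Let T be the set of all tuples (ρ, λ₁, λ₂, λ₃) of nonnegative real numbers such that the matrix D(ρ,λ₁,λ₂,λ₃; X̃) is negative semidefinite. Then ( √(ρ̂ U + 2α² G²) + σ )² is the greatest lower bound of the set { ρ² U + λ₂ σ² + 2λ₃ G² : (ρ, λ₁, λ₂, λ₃) ∈ T }. -/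
private lemma lb_aux (m σ G U α X11 X12 T2 ρ l1 l2 l3 : ℝ)
    (hσ : 0 ≤ σ) (hU : 0 ≤ U) (hl3 : 0 ≤ l3)
    (hm2 : m ^ 2 ≤ X11 + 2 * m * X12)
    (hT2 : T2 = (1 - 2 * α * m + (X11 + 2 * m * X12) * α ^ 2) * U + 2 * α ^ 2 * G ^ 2)
    (H : ∀ z1 z2 z3 : ℝ,
      (1 - ρ ^ 2 - 2 * m * l1 + l3 * X11) * z1 ^ 2 + (α ^ 2 - l3) * z2 ^ 2
        + (1 - l2) * z3 ^ 2 + 2 * (-α + l1 + l3 * X12) * z1 * z2 + 2 * z1 * z3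
        - 2 * α * z2 * z3 ≤ 0) :
    (Real.sqrt T2 + σ) ^ 2 ≤ ρ ^ 2 * U + l2 * σ ^ 2 + 2 * l3 * G ^ 2 := by
  have hg2 : 0 ≤ U * (X11 + 2 * m * X12 - m ^ 2) + 2 * G ^ 2 := by
    nlinarith [mul_nonneg hU (sub_nonneg.2 hm2), sq_nonneg G]
  have hT2nn : 0 ≤ T2 := by
    rw [hT2]
    nlinarith [mul_nonneg hU (sq_nonneg (1 - α * m)), mul_nonneg (sq_nonneg α) hg2]
  set t := Real.sqrt T2 with htdef
  have ht0 : 0 ≤ t := Real.sqrt_nonneg _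
  have ht2 : t ^ 2 = T2 := Real.sq_sqrt hT2nn
  have ht2' : t ^ 2 = (1 - 2 * α * m + (X11 + 2 * m * X12) * α ^ 2) * U
      + 2 * α ^ 2 * G ^ 2 := by rw [ht2, hT2]
  rcases eq_or_lt_of_le ht0 with h0 | htpos
  · have hQ3 := H 0 0 1
    rw [← h0]
    nlinarith [mul_nonneg (sq_nonneg ρ) hU, mul_nonneg hl3 (sq_nonneg G), sq_nonneg σ, hQ3]
  · have hq1 := H t (m * t) (σ * (1 - α * m))
    have hq2 := H 0 t (-(σ * α))
    have h1 : U * ((1 - ρ ^ 2 - 2 * m * l1 + l3 * X11) * t ^ 2 + (α ^ 2 - l3) * (m * t) ^ 2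
        + (1 - l2) * (σ * (1 - α * m)) ^ 2 + 2 * (-α + l1 + l3 * X12) * t * (m * t)
        + 2 * t * (σ * (1 - α * m)) - 2 * α * (m * t) * (σ * (1 - α * m))) ≤ 0 := by
      have := mul_le_mul_of_nonneg_left hq1 hU
      simpa using this
    have h2 : (U * (X11 + 2 * m * X12 - m ^ 2) + 2 * G ^ 2) *
        ((1 - ρ ^ 2 - 2 * m * l1 + l3 * X11) * 0 ^ 2 + (α ^ 2 - l3) * t ^ 2
        + (1 - l2) * (-(σ * α)) ^ 2 + 2 * (-α + l1 + l3 * X12) * 0 * t + 2 * 0 * (-(σ * α))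
        - 2 * α * t * (-(σ * α))) ≤ 0 := by
      have := mul_le_mul_of_nonneg_left hq2 hg2
      simpa using this
    have key : t ^ 2 * ((t + σ) ^ 2 - (ρ ^ 2 * U + l2 * σ ^ 2 + 2 * l3 * G ^ 2)) =
        U * ((1 - ρ ^ 2 - 2 * m * l1 + l3 * X11) * t ^ 2 + (α ^ 2 - l3) * (m * t) ^ 2
        + (1 - l2) * (σ * (1 - α * m)) ^ 2 + 2 * (-α + l1 + l3 * X12) * t * (m * t)
        + 2 * t * (σ * (1 - α * m)) - 2 * α * (m * t) * (σ * (1 - α * m)))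
        + (U * (X11 + 2 * m * X12 - m ^ 2) + 2 * G ^ 2) *
        ((1 - ρ ^ 2 - 2 * m * l1 + l3 * X11) * 0 ^ 2 + (α ^ 2 - l3) * t ^ 2
        + (1 - l2) * (-(σ * α)) ^ 2 + 2 * (-α + l1 + l3 * X12) * 0 * t + 2 * 0 * (-(σ * α))
        - 2 * α * t * (-(σ * α))) := by
      linear_combination (t ^ 2 + 2 * σ * t + σ ^ 2 - l2 * σ ^ 2) * ht2'
    have h3 : t ^ 2 * ((t + σ) ^ 2 - (ρ ^ 2 * U + l2 * σ ^ 2 + 2 * l3 * G ^ 2)) ≤ t ^ 2 * 0 := by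
      rw [mul_zero, key]; linarith
    have h4 := le_of_mul_le_mul_left h3 (pow_pos htpos 2)
    linarith

set_option maxHeartbeats 1000000 in
private lemma ub_aux (m σ G U α X11 X12 T2 b : ℝ)
    (hσ : 0 ≤ σ) (hG : 0 ≤ G) (hU : 0 ≤ U) (hα0 : 0 ≤ α)
    (hm2 : m ^ 2 ≤ X11 + 2 * m * X12) (hαX : α * X12 ≤ 1)
    (hT2 : T2 = (1 - 2 * α * m + (X11 + 2 * m * X12) * α ^ 2) * U + 2 * α ^ 2 * G ^ 2)
    (hb : ∀ ρ l1 l2 l3 : ℝ, 0 ≤ ρ → 0 ≤ l1 → 0 ≤ l2 → 0 ≤ l3 →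
      (∀ z1 z2 z3 : ℝ,
        (1 - ρ ^ 2 - 2 * m * l1 + l3 * X11) * z1 ^ 2 + (α ^ 2 - l3) * z2 ^ 2
          + (1 - l2) * z3 ^ 2 + 2 * (-α + l1 + l3 * X12) * z1 * z2 + 2 * z1 * z3
          - 2 * α * z2 * z3 ≤ 0) →
      b ≤ ρ ^ 2 * U + l2 * σ ^ 2 + 2 * l3 * G ^ 2) :
    b ≤ (Real.sqrt T2 + σ) ^ 2 := by
  by_contra hcon
  push_neg at hcon
  have hrh : 0 ≤ 1 - 2 * α * m + (X11 + 2 * m * X12) * α ^ 2 := by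
    nlinarith [sq_nonneg (1 - α * m), mul_nonneg (sq_nonneg α) (sub_nonneg.2 hm2)]
  have hT2nn : 0 ≤ T2 := by
    rw [hT2]
    nlinarith [mul_nonneg hrh hU, mul_nonneg (sq_nonneg α) (sq_nonneg G)]
  set t := Real.sqrt T2 with htdef
  have ht0 : 0 ≤ t := Real.sqrt_nonneg _
  have ht2 : t ^ 2 = T2 := Real.sq_sqrt hT2nn
  have ht2' : t ^ 2 = (1 - 2 * α * m + (X11 + 2 * m * X12) * α ^ 2) * U
      + 2 * α ^ 2 * G ^ 2 := by rw [ht2, hT2]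
  set δ := (b - (t + σ) ^ 2) / (t + σ + 1) with hδdef
  have hδ : 0 < δ := div_pos (by linarith) (by linarith)
  set s := (σ + δ) / (t + δ) with hsdef
  have hs : 0 < s := div_pos (by linarith) (by linarith)
  have hs1 : (0:ℝ) < 1 + s := by linarith
  set ρ := Real.sqrt ((1 - 2 * α * m + (X11 + 2 * m * X12) * α ^ 2) * (1 + s)) with hρdef
  have hρ2 : ρ ^ 2 = (1 - 2 * α * m + (X11 + 2 * m * X12) * α ^ 2) * (1 + s) :=
    Real.sq_sqrt (mul_nonneg hrh hs1.le)
  have hsw : s * (1 / s) = 1 := by field_simp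
  have hkey := hb ρ (α * (1 + s) * (1 - α * X12)) (1 + 1 / s) (α ^ 2 * (1 + s))
    (Real.sqrt_nonneg _)
    (mul_nonneg (mul_nonneg hα0 hs1.le) (by linarith))
    (by have := one_div_pos.2 hs; linarith)
    (mul_nonneg (sq_nonneg α) hs1.le)
    (by
      intro z1 z2 z3
      have hiden : s * ((1 - ρ ^ 2 - 2 * m * (α * (1 + s) * (1 - α * X12))
          + α ^ 2 * (1 + s) * X11) * z1 ^ 2 + (α ^ 2 - α ^ 2 * (1 + s)) * z2 ^ 2
          + (1 - (1 + 1 / s)) * z3 ^ 2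
          + 2 * (-α + α * (1 + s) * (1 - α * X12) + α ^ 2 * (1 + s) * X12) * z1 * z2
          + 2 * z1 * z3 - 2 * α * z2 * z3)
          = -(s * z1 - α * s * z2 - z3) ^ 2 := by
        linear_combination (-(s * z1 ^ 2)) * hρ2 - z3 ^ 2 * hsw
      nlinarith [hiden, hs, sq_nonneg (s * z1 - α * s * z2 - z3)])
  have hval : ρ ^ 2 * U + (1 + 1 / s) * σ ^ 2 + 2 * (α ^ 2 * (1 + s)) * G ^ 2
      = (1 + s) * t ^ 2 + σ ^ 2 + σ ^ 2 * (1 / s) := by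
    rw [hρ2, ht2']; ring
  have h1 : s * t ^ 2 ≤ (σ + δ) * t := by
    rw [hsdef, div_mul_eq_mul_div, div_le_iff₀ (by linarith : (0:ℝ) < t + δ)]
    nlinarith [mul_nonneg (mul_nonneg (by linarith : (0:ℝ) ≤ σ + δ) ht0) hδ.le]
  have h2 : σ ^ 2 * (1 / s) ≤ σ * (t + δ) := by
    rw [mul_one_div, div_le_iff₀ hs, hsdef]
    have hteq : σ * (t + δ) * ((σ + δ) / (t + δ)) = σ * (σ + δ) := by
      field_simp
    rw [hteq]
    nlinarith [mul_nonneg hσ hδ.le]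
  have hδc : δ * (t + σ + 1) = b - (t + σ) ^ 2 := by
    rw [hδdef]
    field_simp
  linarith [hkey, hval, h1, h2, hδc, hδ]

set_option maxHeartbeats 1000000 in
theorem stmt_12 (m L σ G U α : ℝ)
    (hm : 0 < m) (hmL : m < L) (hσ : 0 ≤ σ) (hG : 0 ≤ G) (hU : 0 ≤ U)
    (hα0 : 0 ≤ α)
    (Xt : Matrix (Fin 2) (Fin 2) ℝ)
    (hcase :
      (Xt = !![2 * L ^ 2, 0; 0, -1] ∧ α ≤ m / L ^ 2) ∨
      (Xt = !![0, L; L, -1] ∧ α ≤ 1 / L) ∨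
      (Xt = !![-(2 * L * m), L + m; L + m, -1] ∧ α ≤ 1 / (L + m))) :
    IsGLB { y : ℝ | ∃ ρ l1 l2 l3 : ℝ,
        0 ≤ ρ ∧ 0 ≤ l1 ∧ 0 ≤ l2 ∧ 0 ≤ l3 ∧
        (∀ z : Fin 3 → ℝ,
          ∑ k, ∑ l, z k *
            (!![1 - ρ ^ 2 - 2 * m * l1 + l3 * Xt 0 0, -α + l1 + l3 * Xt 0 1, 1;
                -α + l1 + l3 * Xt 1 0, α ^ 2 + l3 * Xt 1 1, -α;
                1, -α, 1 - l2] k l) * z l ≤ 0) ∧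
        y = ρ ^ 2 * U + l2 * σ ^ 2 + 2 * l3 * G ^ 2 }
      ((Real.sqrt ((1 - 2 * α * m + (Xt 0 0 + 2 * m * Xt 1 0) * α ^ 2) * U +
          2 * α ^ 2 * G ^ 2) + σ) ^ 2) := by
  have hL : 0 < L := lt_trans hm hmL
  constructor
  · rintro y ⟨ρ, l1, l2, l3, hρ, h1, h2, h3, H, rfl⟩
    rcases hcase with ⟨rfl, hα⟩ | ⟨rfl, hα⟩ | ⟨rfl, hα⟩
    · apply lb_aux m σ G U α (2 * L ^ 2) 0 _ ρ l1 l2 l3 hσ hU h3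
        (by nlinarith) (by norm_num)
      intro z1 z2 z3
      have h := H ![z1, z2, z3]
      simp [Fin.sum_univ_three] at h
      nlinarith [h]
    · apply lb_aux m σ G U α 0 L _ ρ l1 l2 l3 hσ hU h3
        (by nlinarith) (by norm_num)
      intro z1 z2 z3
      have h := H ![z1, z2, z3]
      simp [Fin.sum_univ_three] at h
      nlinarith [h]
    · apply lb_aux m σ G U α (-(2 * L * m)) (L + m) _ ρ l1 l2 l3 hσ hU h3
        (by nlinarith) (by norm_num)
      intro z1 z2 z3
      have h := H ![z1, z2, z3]
      simp [Fin.sum_univ_three] at h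
      nlinarith [h]
  · intro b hb
    rcases hcase with ⟨rfl, hα⟩ | ⟨rfl, hα⟩ | ⟨rfl, hα⟩
    · apply ub_aux m σ G U α (2 * L ^ 2) 0 _ b hσ hG hU hα0 (by nlinarith)
        (by norm_num) (by norm_num)
      intro ρ l1 l2 l3 hρ h1 h2 h3 Hs
      apply hb
      refine ⟨ρ, l1, l2, l3, hρ, h1, h2, h3, ?_, rfl⟩
      intro z
      have h := Hs (z 0) (z 1) (z 2)
      simp [Fin.sum_univ_three]
      nlinarith [h]
    · apply ub_aux m σ G U α 0 L _ b hσ hG hU hα0 (by nlinarith)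
        ((le_div_iff₀ hL).mp hα) (by norm_num)
      intro ρ l1 l2 l3 hρ h1 h2 h3 Hs
      apply hb
      refine ⟨ρ, l1, l2, l3, hρ, h1, h2, h3, ?_, rfl⟩
      intro z
      have h := Hs (z 0) (z 1) (z 2)
      simp [Fin.sum_univ_three]
      nlinarith [h]
    · apply ub_aux m σ G U α (-(2 * L * m)) (L + m) _ b hσ hG hU hα0 (by nlinarith)
        ((le_div_iff₀ (by linarith : (0:ℝ) < L + m)).mp hα) (by norm_num)
      intro ρ l1 l2 l3 hρ h1 h2 h3 Hs
      apply hb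
      refine ⟨ρ, l1, l2, l3, hρ, h1, h2, h3, ?_, rfl⟩
      intro z
      have h := Hs (z 0) (z 1) (z 2)
      simp [Fin.sum_univ_three]
      nlinarith [h]
end

section
/- Let 0 < m ≤ L, α > 0, σ ≥ 0, c ≥ 0, L_g ≥ 0. Let f : ℝ^p → ℝ be differentiable, m-strongly convex, with L-Lipschitz gradient, and let g : ℝ^p → ℝ be convex and L_g-Lipschitz. Let x* ∈ ℝ^p be a global minimizer of f + g, let x*' ∈ ℝ^p with ‖x*' − x*‖ ≤ σ, and let r' ∈ ℝ^p be a subgradient of g at x*' (i.e., g(z) ≥ g(x*') + ⟨r', z − x*'⟩ for all z). Let (Ω, 𝔓) be a probability space and x, v : Ω → ℝ^p random vectors with E‖v‖² ≤ c², and for each ω let x⁺(ω) ∈ ℝ^p be a minimizer over z ∈ ℝ^p of (1/(2α))‖z − x(ω) + α(∇f(x(ω)) + v(ω))‖² + g(z); assume ‖x−x*‖², ‖x⁺−x*'‖², ‖∇f(x)‖², ‖v‖² are integrable. If there exist nonnegative reals ρ, λ₁, λ₂, λ₃, λ₄, λ₅ such that the 6×6 matrix M(ρ,λ₁,…,λ₅)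 is negative semidefinite, then E‖x⁺ − x*'‖² ≤ ρ² E‖x − x*‖² + λ₂ σ² + λ₃ c² + 4λ₄ L_g². -/
open MeasureTheory



section Aux
open Set
set_option linter.unusedSectionVars false
variable {E : Type*} [NormedAddCommGroup E] [InnerProductSpace ℝ E] [CompleteSpace E]
local notation "⟪" x ", " y "⟫" => @inner ℝ _ _ x y

@[simp] lemma cons_val_five' {m : ℕ} {β : Type*} (x : β)
    (u : Fin m.succ.succ.succ.succ.succ → β) :
    Matrix.vecCons x u 5 =
      Matrix.vecHead (Matrix.vecTail (Matrix.vecTail (Matrix.vecTail (Matrix.vecTail u)))) :=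
  rfl

theorem my_descent (f : E → ℝ) (L : ℝ) (hfdiff : Differentiable ℝ f)
    (hflip : ∀ x y : E, ‖gradient f x - gradient f y‖ ≤ L * ‖x - y‖) (x y : E) :
    f y ≤ f x + ⟪gradient f x, y - x⟫ + L / 2 * ‖y - x‖ ^ 2 := by
  set v := y - x with hv
  have hline : ∀ t : ℝ, HasDerivAt (fun t : ℝ => f (x + t • v))
      ⟪gradient f (x + t • v), v⟫ t := by
    intro t
    have h1 : HasDerivAt (fun t : ℝ => x + t • v) v t := by
      simpa using ((hasDerivAt_id t).smul_const v).const_add x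
    have h2 := ((hfdiff (x + t • v)).hasGradientAt).hasFDerivAt
    have h3 := h2.comp_hasDerivAt t h1
    simp only [InnerProductSpace.toDual_apply_apply] at h3
    exact h3
  set φ : ℝ → ℝ := fun t => f (x + t • v) - t * ⟪gradient f x, v⟫ - L / 2 * t ^ 2 * ‖v‖ ^ 2
    with hφ
  have hφd : ∀ t : ℝ, HasDerivAt φ
      (⟪gradient f (x + t • v), v⟫ - ⟪gradient f x, v⟫ - L * t * ‖v‖ ^ 2) t := by
    intro t
    have hm : HasDerivAt (fun t : ℝ => t * ⟪gradient f x, v⟫) ⟪gradient f x, v⟫ t := by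
      simpa using (hasDerivAt_id t).mul_const (⟪gradient f x, v⟫)
    have h3 : HasDerivAt (fun t : ℝ => L / 2 * t ^ 2 * ‖v‖ ^ 2) (L * t * ‖v‖ ^ 2) t := by
      have := ((hasDerivAt_pow 2 t).const_mul (L / 2)).mul_const (‖v‖ ^ 2)
      exact this.congr_deriv (by ring)
    exact ((hline t).sub hm).sub h3
  have hmono : AntitoneOn φ (Icc 0 1) := by
    apply antitoneOn_of_deriv_nonpos (convex_Icc 0 1)
    · exact Differentiable.continuous (fun t => (hφd t).differentiableAt) |>.continuousOn
    · exact fun t _ => ((hφd t).differentiableAt).differentiableWithinAt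
    · intro t ht
      rw [interior_Icc] at ht
      rw [(hφd t).deriv]
      have hb : ⟪gradient f (x + t • v) - gradient f x, v⟫ ≤ L * t * ‖v‖ ^ 2 := by
        calc ⟪gradient f (x + t • v) - gradient f x, v⟫ ≤
            ‖gradient f (x + t • v) - gradient f x‖ * ‖v‖ := real_inner_le_norm _ _
          _ ≤ (L * ‖(x + t • v) - x‖) * ‖v‖ := by
              apply mul_le_mul_of_nonneg_right (hflip _ _) (norm_nonneg _)
          _ = L * t * ‖v‖ ^ 2 := by
              simp [norm_smul, abs_of_nonneg ht.1.le]; ring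
      rw [inner_sub_left] at hb
      linarith
  have h01 := hmono (Set.mem_Icc.2 ⟨le_refl 0, zero_le_one⟩)
    (Set.mem_Icc.2 ⟨zero_le_one, le_refl 1⟩) zero_le_one
  simp only [hφ] at h01
  simp only [zero_smul, add_zero, one_smul, zero_pow, mul_zero, zero_mul, sub_zero, one_pow,
    mul_one, one_mul] at h01
  have hxy : x + v = y := by rw [hv]; abel
  rw [hxy] at h01
  linarith

theorem my_coco (f : E → ℝ) (G : E → E) (K : ℝ) (hK : 0 < K)
    (lower : ∀ x y : E, f y + ⟪G y, x - y⟫ ≤ f x)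
    (upper : ∀ x y : E, f y ≤ f x + ⟪G x, y - x⟫ + K / 2 * ‖y - x‖ ^ 2) :
    ∀ x y : E, ‖G x - G y‖ ^ 2 ≤ K * ⟪G x - G y, x - y⟫ := by
  have half : ∀ x y : E, f y ≤ f x - ⟪G y, x - y⟫ - 1 / (2 * K) * ‖G x - G y‖ ^ 2 := by
    intro x y
    set d := G x - G y with hd
    set w := x - K⁻¹ • d with hw
    have h1 := lower w y
    have h2 := upper x w
    have hdd : ⟪G x, d⟫ - ⟪G y, d⟫ = ‖d‖ ^ 2 := by
      rw [← inner_sub_left, ← hd, real_inner_self_eq_norm_sq]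
    have e1 : ⟪G y, w - y⟫ = ⟪G y, x - y⟫ - K⁻¹ * ⟪G y, d⟫ := by
      rw [show w - y = (x - y) - K⁻¹ • d by rw [hw]; abel, inner_sub_right,
        real_inner_smul_right]
    have e2 : ⟪G x, w - x⟫ = -(K⁻¹ * ⟪G x, d⟫) := by
      rw [show w - x = -(K⁻¹ • d) by rw [hw]; abel, inner_neg_right, real_inner_smul_right]
    have e3 : ‖w - x‖ ^ 2 = K⁻¹ ^ 2 * ‖d‖ ^ 2 := by
      rw [show w - x = -(K⁻¹ • d) by rw [hw]; abel, norm_neg, norm_smul, mul_pow]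
      simp [abs_of_pos (inv_pos.2 hK)]
    rw [e1] at h1
    rw [e2, e3] at h2
    have hc1 : K⁻¹ * ⟪G x, d⟫ - K⁻¹ * ⟪G y, d⟫ = K⁻¹ * ‖d‖ ^ 2 := by
      rw [← mul_sub, hdd]
    have hc2 : K / 2 * (K⁻¹ ^ 2 * ‖d‖ ^ 2) = 1 / (2 * K) * ‖d‖ ^ 2 := by
      field_simp
    have hc3 : K⁻¹ * ‖d‖ ^ 2 = 2 * (1 / (2 * K) * ‖d‖ ^ 2) := by
      field_simp
    linarith
  intro x y
  have h1 := half x y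
  have h2 := half y x
  have hsymm : ‖G y - G x‖ = ‖G x - G y‖ := norm_sub_rev _ _
  rw [hsymm] at h2
  have e4 : ⟪G x, y - x⟫ = -⟪G x, x - y⟫ := by
    rw [show y - x = -(x - y) by abel, inner_neg_right]
  have e5 : ⟪G x - G y, x - y⟫ = ⟪G x, x - y⟫ - ⟪G y, x - y⟫ := inner_sub_left _ _ _
  rw [e4] at h2
  have hc4 : 2 * (1 / (2 * K) * ‖G x - G y‖ ^ 2) = 1 / K * ‖G x - G y‖ ^ 2 := by
    field_simp
  have key : 1 / K * ‖G x - G y‖ ^ 2 ≤ ⟪G x - G y, x - y⟫ := by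
    rw [e5]; linarith
  calc ‖G x - G y‖ ^ 2 = K * (1 / K * ‖G x - G y‖ ^ 2) := by field_simp
    _ ≤ K * ⟪G x - G y, x - y⟫ := mul_le_mul_of_nonneg_left key hK.le

lemma my_normid (x y : E) : ‖x - y‖ ^ 2 = ‖x‖ ^ 2 - ‖y‖ ^ 2 - 2 * ⟪y, x - y⟫ := by
  have h1 : ‖x - y‖ ^ 2 = ‖x‖ ^ 2 - 2 * ⟪x, y⟫ + ‖y‖ ^ 2 := norm_sub_sq_real x y
  have h2 : ⟪y, x - y⟫ = ⟪x, y⟫ - ‖y‖ ^ 2 := by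
    rw [inner_sub_right, real_inner_comm y x, real_inner_self_eq_norm_sq]
  rw [h1, h2]; ring

lemma my_normsmulid (m : ℝ) (hm : 0 ≤ m) (d u : E) :
    ‖d - m • u‖ ^ 2 = ‖d‖ ^ 2 - 2 * (m * ⟪d, u⟫) + m ^ 2 * ‖u‖ ^ 2 := by
  have h1 : ‖d - m • u‖ ^ 2 = ‖d‖ ^ 2 - 2 * ⟪d, m • u⟫ + ‖m • u‖ ^ 2 := norm_sub_sq_real d _
  rw [h1, real_inner_smul_right, norm_smul, mul_pow]
  simp [abs_of_nonneg hm]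

theorem my_coco_strong (f : E → ℝ) (m L : ℝ) (hm : 0 < m) (hmL : m ≤ L)
    (hstrong : ∀ x y : E, f y + ⟪gradient f y, x - y⟫ + m / 2 * ‖x - y‖ ^ 2 ≤ f x)
    (hflip : ∀ x y : E, ‖gradient f x - gradient f y‖ ≤ L * ‖x - y‖)
    (hdescent : ∀ x y : E, f y ≤ f x + ⟪gradient f x, y - x⟫ + L / 2 * ‖y - x‖ ^ 2) :
    ∀ x y : E, L * m * ‖x - y‖ ^ 2 + ‖gradient f x - gradient f y‖ ^ 2 ≤
      (L + m) * ⟪gradient f x - gradient f y, x - y⟫ := by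
  have mono : ∀ x y : E, m * ‖x - y‖ ^ 2 ≤ ⟪gradient f x - gradient f y, x - y⟫ := by
    intro x y
    have h1 := hstrong x y
    have h2 := hstrong y x
    rw [norm_sub_rev y x] at h2
    have e1 : ⟪gradient f x, y - x⟫ = -⟪gradient f x, x - y⟫ := by
      rw [show y - x = -(x - y) by abel, inner_neg_right]
    rw [e1] at h2
    rw [inner_sub_left]
    linarith
  rcases eq_or_lt_of_le hmL with heq | hlt
  · intro x y
    subst heq
    set d := gradient f x - gradient f y with hd
    set u := x - y with hu
    have h1 := mono x y
    have hnd : ‖d‖ ≤ m * ‖u‖ := hflip x y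
    have hnd2 : ‖d‖ ^ 2 ≤ (m * ‖u‖) ^ 2 := pow_le_pow_left₀ (norm_nonneg d) hnd 2
    have e : (m * ‖u‖) ^ 2 = m ^ 2 * ‖u‖ ^ 2 := by ring
    rw [e] at hnd2
    nlinarith [h1, hnd2, hm]
  · intro x y
    set h : E → ℝ := fun z => f z - m / 2 * ‖z‖ ^ 2 with hh
    set Gh : E → E := fun z => gradient f z - m • z with hGh
    have lower : ∀ a b : E, h b + ⟪Gh b, a - b⟫ ≤ h a := by
      intro a b
      have h1 := hstrong a b
      have e1 : ⟪Gh b, a - b⟫ = ⟪gradient f b, a - b⟫ - m * ⟪b, a - b⟫ := by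
        rw [hGh]; rw [inner_sub_left, real_inner_smul_left]
      rw [my_normid a b] at h1
      simp only [hh]
      rw [e1]
      linarith
    have upper : ∀ a b : E, h b ≤ h a + ⟪Gh a, b - a⟫ + (L - m) / 2 * ‖b - a‖ ^ 2 := by
      intro a b
      have h1 := hdescent a b
      have e1 : ⟪Gh a, b - a⟫ = ⟪gradient f a, b - a⟫ - m * ⟪a, b - a⟫ := by
        rw [hGh]; rw [inner_sub_left, real_inner_smul_left]
      rw [my_normid b a] at h1
      simp only [hh]
      rw [e1, my_normid b a]
      linarith
    have hco := my_coco h Gh (L - m) (by linarith) lower upper x y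
    have e3 : Gh x - Gh y = (gradient f x - gradient f y) - m • (x - y) := by
      rw [hGh]; simp only [smul_sub]; abel
    rw [e3] at hco
    set d := gradient f x - gradient f y with hd
    set u := x - y with hu
    have e5 : ⟪d - m • u, u⟫ = ⟪d, u⟫ - m * ‖u‖ ^ 2 := by
      rw [inner_sub_left, real_inner_smul_left, real_inner_self_eq_norm_sq]
    rw [my_normsmulid m hm.le d u, e5] at hco
    nlinarith [hco]

theorem my_prox_subgrad (g : E → ℝ) (hgconv : ConvexOn ℝ Set.univ g) (α : ℝ) (hα : 0 < α)
    (u q : E)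
    (hprox : ∀ z : E, 1 / (2 * α) * ‖u - q‖ ^ 2 + g u ≤ 1 / (2 * α) * ‖z - q‖ ^ 2 + g z) :
    ∀ z : E, g u + ⟪α⁻¹ • (q - u), z - u⟫ ≤ g z := by
  intro z
  set c : ℝ := 1 / (2 * α) with hc
  have hcpos : 0 < c := by rw [hc]; positivity
  set Y : ℝ := ‖z - u‖ ^ 2 with hY
  have hYnn : 0 ≤ Y := by positivity
  have key : ∀ t : ℝ, 0 < t → t ≤ 1 →
      g u ≤ g z + 2 * c * ⟪u - q, z - u⟫ + t * (c * Y) := by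
    intro t ht ht1
    have h1 := hprox (u + t • (z - u))
    have e1 : ‖(u + t • (z - u)) - q‖ ^ 2 =
        ‖u - q‖ ^ 2 + 2 * (t * ⟪u - q, z - u⟫) + t ^ 2 * Y := by
      rw [show (u + t • (z - u)) - q = (u - q) + t • (z - u) by abel]
      rw [norm_add_sq_real, real_inner_smul_right, norm_smul, mul_pow]
      simp [sq_abs, hY]
    have e2 : g (u + t • (z - u)) ≤ t * g z + (1 - t) * g u := by
      have h3 := hgconv.2 (Set.mem_univ z) (Set.mem_univ u) ht.le (by linarith)
        (by ring : t + (1 - t) = 1)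
      have e3 : t • z + (1 - t) • u = u + t • (z - u) := by module
      rwa [e3] at h3
    rw [e1] at h1
    have h4 : t * g u ≤ t * (g z + 2 * c * ⟪u - q, z - u⟫ + t * (c * Y)) := by
      have h5 := h1.trans (by linarith : c * (‖u - q‖ ^ 2 + 2 * (t * ⟪u - q, z - u⟫)
        + t ^ 2 * Y) + g (u + t • (z - u)) ≤ c * (‖u - q‖ ^ 2 + 2 * (t * ⟪u - q, z - u⟫)
        + t ^ 2 * Y) + (t * g z + (1 - t) * g u))
      nlinarith [h5]
    exact le_of_mul_le_mul_left (by linarith [h4]) ht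
  have main : g u ≤ g z + 2 * c * ⟪u - q, z - u⟫ := by
    apply le_of_forall_pos_le_add
    intro ε hε
    have hden : (0 : ℝ) < c * Y + 1 := by positivity
    set t : ℝ := min 1 (ε / (c * Y + 1)) with htd
    have ht0 : 0 < t := lt_min one_pos (div_pos hε hden)
    have ht1 : t ≤ 1 := min_le_left _ _
    have hk := key t ht0 ht1
    have hb : t * (c * Y) ≤ ε := by
      have h6 : t * (c * Y) ≤ t * (c * Y + 1) := by nlinarith [ht0]
      have h7 : t * (c * Y + 1) ≤ (ε / (c * Y + 1)) * (c * Y + 1) :=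
        mul_le_mul_of_nonneg_right (min_le_right _ _) hden.le
      rw [div_mul_cancel₀ _ (ne_of_gt hden)] at h7
      linarith
    linarith
  have e4 : ⟪α⁻¹ • (q - u), z - u⟫ = -(2 * c * ⟪u - q, z - u⟫) := by
    rw [real_inner_smul_left, show q - u = -(u - q) by abel, inner_neg_left, hc]
    field_simp
  rw [e4]
  linarith

set_option maxHeartbeats 1000000 in
theorem my_gram_bound {p : ℕ} (α ρ l1 l2 l3 l4 l5 L m : ℝ)
    (hLMI : ∀ z : Fin 6 → ℝ,
      ∑ k, ∑ l, z k *
        (!![1 - ρ ^ 2 - 2 * l1 * L * m, l1 * (L + m) - α, l5 - α, -α, -α, 1;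
            l1 * (L + m) - α, α ^ 2 - 2 * l1, α ^ 2 - α * l5, α ^ 2, α ^ 2, -α;
            l5 - α, α ^ 2 - α * l5, α ^ 2 - 2 * α * l5, α ^ 2 - α * l5, α ^ 2 - α * l5, l5 - α;
            -α, α ^ 2, α ^ 2 - α * l5, α ^ 2 - l4, α ^ 2, -α;
            -α, α ^ 2, α ^ 2 - α * l5, α ^ 2, α ^ 2 - l3, -α;
            1, -α, l5 - α, -α, -α, 1 - l2] k l) * z l ≤ 0)
    (w1 w2 w3 w4 w5 w6 : EuclideanSpace ℝ (Fin p)) :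
    ‖w1 + w6 - α • (w2 + w3 + w4 + w5)‖ ^ 2 - ρ ^ 2 * ‖w1‖ ^ 2
      + 2 * l1 * ((L + m) * ⟪w1, w2⟫ - L * m * ‖w1‖ ^ 2 - ‖w2‖ ^ 2)
      + 2 * l5 * ⟪w3, w1 + w6 - α • (w2 + w3 + w4 + w5)⟫
      - l2 * ‖w6‖ ^ 2 - l3 * ‖w5‖ ^ 2 - l4 * ‖w4‖ ^ 2 ≤ 0 := by
  set M := !![1 - ρ ^ 2 - 2 * l1 * L * m, l1 * (L + m) - α, l5 - α, -α, -α, 1;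
            l1 * (L + m) - α, α ^ 2 - 2 * l1, α ^ 2 - α * l5, α ^ 2, α ^ 2, -α;
            l5 - α, α ^ 2 - α * l5, α ^ 2 - 2 * α * l5, α ^ 2 - α * l5, α ^ 2 - α * l5, l5 - α;
            -α, α ^ 2, α ^ 2 - α * l5, α ^ 2 - l4, α ^ 2, -α;
            -α, α ^ 2, α ^ 2 - α * l5, α ^ 2, α ^ 2 - l3, -α;
            1, -α, l5 - α, -α, -α, 1 - l2] with hM
  set W : Fin 6 → EuclideanSpace ℝ (Fin p) := ![w1, w2, w3, w4, w5, w6] with hW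
  have h2 : ∑ k, ∑ l, M k l * ⟪W k, W l⟫ ≤ 0 := by
    have step1 : ∀ k l : Fin 6, M k l * ⟪W k, W l⟫ = ∑ i, W k i * M k l * W l i := by
      intro k l
      rw [PiLp.inner_apply, Finset.mul_sum]
      exact Finset.sum_congr rfl fun i _ => by simp [RCLike.inner_apply]; ring
    have step : ∑ k, ∑ l, M k l * ⟪W k, W l⟫
        = ∑ i, ∑ k, ∑ l, (W k i) * M k l * (W l i) := by
      calc ∑ k, ∑ l, M k l * ⟪W k, W l⟫
          = ∑ k, ∑ i, ∑ l, W k i * M k l * W l i := by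
            refine Finset.sum_congr rfl fun k _ => ?_
            rw [show  ∑ l, M k l * ⟪W k, W l⟫ = ∑ l, ∑ i, W k i * M k l * W l i from
              Finset.sum_congr rfl fun l _ => step1 k l]
            exact Finset.sum_comm
        _ = ∑ i, ∑ k, ∑ l, W k i * M k l * W l i := Finset.sum_comm
    rw [step]
    exact Finset.sum_nonpos fun i _ => hLMI fun k => W k i
  have hid : ∑ k, ∑ l, M k l * ⟪W k, W l⟫ =
      ‖w1 + w6 - α • (w2 + w3 + w4 + w5)‖ ^ 2 - ρ ^ 2 * ‖w1‖ ^ 2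
      + 2 * l1 * ((L + m) * ⟪w1, w2⟫ - L * m * ‖w1‖ ^ 2 - ‖w2‖ ^ 2)
      + 2 * l5 * ⟪w3, w1 + w6 - α • (w2 + w3 + w4 + w5)⟫
      - l2 * ‖w6‖ ^ 2 - l3 * ‖w5‖ ^ 2 - l4 * ‖w4‖ ^ 2 := by
    simp only [hM, hW, Fin.sum_univ_six]
    simp only [Matrix.cons_val_zero, Matrix.cons_val_one, Matrix.head_cons,
      Matrix.cons_val_two, Matrix.tail_cons, Matrix.cons_val_three, Matrix.cons_val_four,
      cons_val_five', Matrix.head_fin_const, Matrix.of_apply, Matrix.cons_val',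
      Matrix.cons_val_fin_one, Matrix.empty_val']
    simp only [← real_inner_self_eq_norm_sq]
    simp only [inner_add_left, inner_add_right, inner_sub_left, inner_sub_right,
      real_inner_smul_left, real_inner_smul_right]
    simp only [real_inner_comm w2 w1, real_inner_comm w3 w1, real_inner_comm w4 w1,
      real_inner_comm w5 w1, real_inner_comm w6 w1, real_inner_comm w3 w2,
      real_inner_comm w4 w2, real_inner_comm w5 w2, real_inner_comm w6 w2,
      real_inner_comm w4 w3, real_inner_comm w5 w3, real_inner_comm w6 w3,
      real_inner_comm w5 w4, real_inner_comm w6 w4, real_inner_comm w6 w5]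
    ring
  linarith [h2, hid.le, hid.symm.le]

end Aux

local notation "⟪" x ", " y "⟫" => @inner ℝ _ _ x y

set_option maxHeartbeats 2000000 in
theorem stmt_13 (p : ℕ) (m L α σ c Lg : ℝ)
    (hm : 0 < m) (hmL : m ≤ L) (hα : 0 < α) (hσ : 0 ≤ σ) (hc : 0 ≤ c) (hLg : 0 ≤ Lg)
    (f g : EuclideanSpace ℝ (Fin p) → ℝ)
    (hfdiff : Differentiable ℝ f)
    (hstrong : ∀ x y : EuclideanSpace ℝ (Fin p),
      f y + @inner ℝ _ _ (gradient f y) (x - y) + m / 2 * ‖x - y‖ ^ 2 ≤ f x)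
    (hflip : ∀ x y : EuclideanSpace ℝ (Fin p),
      ‖gradient f x - gradient f y‖ ≤ L * ‖x - y‖)
    (hgconv : ConvexOn ℝ Set.univ g)
    (hglip : ∀ x y : EuclideanSpace ℝ (Fin p), |g x - g y| ≤ Lg * ‖x - y‖)
    (xstar : EuclideanSpace ℝ (Fin p))
    (hmin : ∀ z, f xstar + g xstar ≤ f z + g z)
    (xstar' : EuclideanSpace ℝ (Fin p)) (hx' : ‖xstar' - xstar‖ ≤ σ)
    (r' : EuclideanSpace ℝ (Fin p))
    (hsub : ∀ z, g xstar' + @inner ℝ _ _ r' (z - xstar') ≤ g z)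
    {Ω : Type*} [MeasurableSpace Ω] (P : Measure Ω) [IsProbabilityMeasure P]
    (x v xplus : Ω → EuclideanSpace ℝ (Fin p))
    (hxmeas : Measurable x) (hvmeas : Measurable v)
    (hvms : (∫ ω, ‖v ω‖ ^ 2 ∂P) ≤ c ^ 2)
    (hprox : ∀ ω, ∀ z : EuclideanSpace ℝ (Fin p),
      (1 / (2 * α)) * ‖xplus ω - x ω + α • (gradient f (x ω) + v ω)‖ ^ 2 + g (xplus ω) ≤
        (1 / (2 * α)) * ‖z - x ω + α • (gradient f (x ω) + v ω)‖ ^ 2 + g z)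
    (hint1 : Integrable (fun ω => ‖x ω - xstar‖ ^ 2) P)
    (hint2 : Integrable (fun ω => ‖xplus ω - xstar'‖ ^ 2) P)
    (hint3 : Integrable (fun ω => ‖gradient f (x ω)‖ ^ 2) P)
    (hint4 : Integrable (fun ω => ‖v ω‖ ^ 2) P)
    (ρ l1 l2 l3 l4 l5 : ℝ)
    (hρ : 0 ≤ ρ) (hl1 : 0 ≤ l1) (hl2 : 0 ≤ l2) (hl3 : 0 ≤ l3) (hl4 : 0 ≤ l4) (hl5 : 0 ≤ l5)
    (hLMI : ∀ z : Fin 6 → ℝ,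
      ∑ k, ∑ l, z k *
        (!![1 - ρ ^ 2 - 2 * l1 * L * m, l1 * (L + m) - α, l5 - α, -α, -α, 1;
            l1 * (L + m) - α, α ^ 2 - 2 * l1, α ^ 2 - α * l5, α ^ 2, α ^ 2, -α;
            l5 - α, α ^ 2 - α * l5, α ^ 2 - 2 * α * l5, α ^ 2 - α * l5, α ^ 2 - α * l5, l5 - α;
            -α, α ^ 2, α ^ 2 - α * l5, α ^ 2 - l4, α ^ 2, -α;
            -α, α ^ 2, α ^ 2 - α * l5, α ^ 2, α ^ 2 - l3, -α;
            1, -α, l5 - α, -α, -α, 1 - l2] k l) * z l ≤ 0) :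
    (∫ ω, ‖xplus ω - xstar'‖ ^ 2 ∂P) ≤
      ρ ^ 2 * (∫ ω, ‖x ω - xstar‖ ^ 2 ∂P) + l2 * σ ^ 2 + l3 * c ^ 2 + 4 * l4 * Lg ^ 2 := by
  have hL0 : 0 < L := lt_of_lt_of_le hm hmL
  have hdescent := my_descent f L hfdiff hflip
  have hco := my_coco_strong f m L hm hmL hstrong hflip hdescent
  -- ‖r'‖ ≤ Lg
  have hr' : ‖r'‖ ≤ Lg := by
    have h1 := hsub (xstar' + r')
    have e1 : (xstar' + r') - xstar' = r' := by abel
    rw [e1, real_inner_self_eq_norm_sq] at h1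
    have h2 : g (xstar' + r') - g xstar' ≤ Lg * ‖r'‖ := by
      have := (le_abs_self (g (xstar' + r') - g xstar')).trans (hglip _ _)
      rwa [e1] at this
    rcases eq_or_lt_of_le (norm_nonneg r') with h0 | hpos
    · rw [← h0]; exact hLg
    · nlinarith [h1, h2, hpos]
  -- ‖gradient f xstar‖ ≤ Lg
  have hgstar : ‖gradient f xstar‖ ≤ Lg := by
    set G := gradient f xstar with hG
    set nG := ‖G‖ with hnG
    have key : ∀ t : ℝ, 0 < t → nG ^ 2 ≤ L / 2 * t * nG ^ 2 + Lg * nG := by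
      intro t ht
      have hd := hdescent xstar (xstar - t • G)
      have e1 : (xstar - t • G) - xstar = -(t • G) := by abel
      have e2 : ⟪G, (xstar - t • G) - xstar⟫ = -(t * nG ^ 2) := by
        rw [e1, inner_neg_right, real_inner_smul_right, real_inner_self_eq_norm_sq, hnG]
      have e3 : ‖(xstar - t • G) - xstar‖ = t * nG := by
        rw [e1, norm_neg, norm_smul, Real.norm_eq_abs, abs_of_pos ht, hnG]
      rw [← hG, e2, e3] at hd
      have hm2 := hmin (xstar - t • G)
      have hg2 : g (xstar - t • G) - g xstar ≤ Lg * (t * nG) := by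
        have := (le_abs_self (g (xstar - t • G) - g xstar)).trans (hglip _ _)
        rwa [e3] at this
      have h4 : t * nG ^ 2 ≤ L / 2 * (t * nG) ^ 2 + Lg * (t * nG) := by nlinarith [hd, hm2, hg2]
      have h5 : t * (nG ^ 2) ≤ t * (L / 2 * t * nG ^ 2 + Lg * nG) := by nlinarith [h4]
      exact le_of_mul_le_mul_left h5 ht
    have hsq : nG ^ 2 ≤ Lg * nG := by
      apply le_of_forall_pos_le_add
      intro ε hε
      have hden : (0 : ℝ) < L * (nG ^ 2 + 1) := by positivity
      set t : ℝ := 2 * ε / (L * (nG ^ 2 + 1)) with htd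
      have ht : 0 < t := by positivity
      have hk := key t ht
      have e6 : L / 2 * t * nG ^ 2 = ε * (nG ^ 2 / (nG ^ 2 + 1)) := by
        rw [htd]; field_simp
      have e7 : nG ^ 2 / (nG ^ 2 + 1) ≤ 1 := by
        rw [div_le_one (by positivity)]; linarith
      nlinarith [hk, e6, e7, hε]
    rcases eq_or_lt_of_le (norm_nonneg G) with h0 | hpos
    · rw [hnG, ← h0]; exact hLg
    · nlinarith [hsq, hpos]
  -- pointwise inequality
  have pw : ∀ ω, ‖xplus ω - xstar'‖ ^ 2 ≤
      ρ ^ 2 * ‖x ω - xstar‖ ^ 2 + l2 * σ ^ 2 + l3 * ‖v ω‖ ^ 2 + 4 * l4 * Lg ^ 2 := by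
    intro ω
    set X := x ω with hX
    set u := xplus ω with hu
    set gx := gradient f X with hgx
    set vv := v ω with hvv
    set q : EuclideanSpace ℝ (Fin p) := X - α • (gx + vv) with hq
    have hpx : ∀ z, 1 / (2 * α) * ‖u - q‖ ^ 2 + g u ≤ 1 / (2 * α) * ‖z - q‖ ^ 2 + g z := by
      intro z
      have h := hprox ω z
      rw [show u - X + α • (gx + vv) = u - q by rw [hq]; abel,
        show z - X + α • (gx + vv) = z - q by rw [hq]; abel] at h
      exact h
    have hs := my_prox_subgrad g hgconv α hα u q hpx
    set s : EuclideanSpace ℝ (Fin p) := α⁻¹ • (q - u) with hsd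
    have hαs : α • s = q - u := by
      rw [hsd, smul_inv_smul₀ (ne_of_gt hα)]
    set w1 : EuclideanSpace ℝ (Fin p) := X - xstar with hw1
    set w2 : EuclideanSpace ℝ (Fin p) := gx - gradient f xstar with hw2
    set w3 : EuclideanSpace ℝ (Fin p) := s - r' with hw3
    set w4 : EuclideanSpace ℝ (Fin p) := gradient f xstar + r' with hw4
    set w5 : EuclideanSpace ℝ (Fin p) := vv with hw5
    set w6 : EuclideanSpace ℝ (Fin p) := xstar - xstar' with hw6
    have hT : w1 + w6 - α • (w2 + w3 + w4 + w5) = u - xstar' := by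
      have hue : u = q - α • s := by rw [hαs]; abel
      rw [hw1, hw2, hw3, hw4, hw5, hw6, hue, hq]
      module
    have hG := my_gram_bound α ρ l1 l2 l3 l4 l5 L m hLMI w1 w2 w3 w4 w5 w6
    rw [hT] at hG
    have hcoco : 0 ≤ (L + m) * ⟪w1, w2⟫ - L * m * ‖w1‖ ^ 2 - ‖w2‖ ^ 2 := by
      have h := hco X xstar
      have hcomm : ⟪w1, w2⟫ = ⟪gradient f X - gradient f xstar, X - xstar⟫ :=
        (real_inner_comm w1 w2).symm
      have hn1 : ‖w1‖ = ‖X - xstar‖ := rfl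
      have hn2 : ‖w2‖ = ‖gradient f X - gradient f xstar‖ := rfl
      rw [hcomm, hn1, hn2]
      linarith
    have hmono35 : 0 ≤ ⟪w3, u - xstar'⟫ := by
      have h1 := hs xstar'
      have h2 := hsub u
      have e1 : ⟪s, xstar' - u⟫ = -⟪s, u - xstar'⟫ := by
        rw [show xstar' - u = -(u - xstar') by abel, inner_neg_right]
      rw [e1] at h1
      rw [hw3, inner_sub_left]
      linarith
    have h6 : ‖w6‖ ≤ σ := by rw [hw6, norm_sub_rev]; exact hx'
    have h4 : ‖w4‖ ≤ 2 * Lg := by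
      rw [hw4]
      calc ‖gradient f xstar + r'‖ ≤ ‖gradient f xstar‖ + ‖r'‖ := norm_add_le _ _
        _ ≤ 2 * Lg := by linarith
    have h6sq : ‖w6‖ ^ 2 ≤ σ ^ 2 := by nlinarith [norm_nonneg w6, h6, hσ]
    have h4sq : ‖w4‖ ^ 2 ≤ 4 * Lg ^ 2 := by nlinarith [norm_nonneg w4, h4, hLg]
    have t1 : 0 ≤ l1 * ((L + m) * ⟪w1, w2⟫ - L * m * ‖w1‖ ^ 2 - ‖w2‖ ^ 2) :=
      mul_nonneg hl1 hcoco
    have t5 : 0 ≤ l5 * ⟪w3, u - xstar'⟫ := mul_nonneg hl5 hmono35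
    have t2 : l2 * ‖w6‖ ^ 2 ≤ l2 * σ ^ 2 := mul_le_mul_of_nonneg_left h6sq hl2
    have t4 : l4 * ‖w4‖ ^ 2 ≤ l4 * (4 * Lg ^ 2) := mul_le_mul_of_nonneg_left h4sq hl4
    have hx1 : ‖x ω - xstar‖ = ‖w1‖ := by rw [hw1]
    have hv1 : ‖v ω‖ = ‖w5‖ := by rw [hw5]
    rw [hx1, hv1]
    nlinarith [hG, t1, t5, t2, t4]
  -- integration
  have hrhs : Integrable (fun ω =>
      ρ ^ 2 * ‖x ω - xstar‖ ^ 2 + l2 * σ ^ 2 + l3 * ‖v ω‖ ^ 2 + 4 * l4 * Lg ^ 2) P :=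
    (((hint1.const_mul (ρ ^ 2)).add (integrable_const _)).add (hint4.const_mul l3)).add
      (integrable_const _)
  have hle := integral_mono hint2 hrhs pw
  have hsplit : (∫ ω, (ρ ^ 2 * ‖x ω - xstar‖ ^ 2 + l2 * σ ^ 2 + l3 * ‖v ω‖ ^ 2
      + 4 * l4 * Lg ^ 2) ∂P)
      = ρ ^ 2 * (∫ ω, ‖x ω - xstar‖ ^ 2 ∂P) + l2 * σ ^ 2 + l3 * (∫ ω, ‖v ω‖ ^ 2 ∂P)
        + 4 * l4 * Lg ^ 2 := by
    have h1 : Integrable (fun ω => ρ ^ 2 * ‖x ω - xstar‖ ^ 2 + l2 * σ ^ 2) P :=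
      (hint1.const_mul _).add (integrable_const _)
    have h2 : Integrable (fun ω => ρ ^ 2 * ‖x ω - xstar‖ ^ 2 + l2 * σ ^ 2
        + l3 * ‖v ω‖ ^ 2) P := h1.add (hint4.const_mul l3)
    rw [integral_add h2 (integrable_const _), integral_add h1 (hint4.const_mul l3),
      integral_add (hint1.const_mul (ρ ^ 2)) (integrable_const _),
      integral_const_mul, integral_const_mul, integral_const, integral_const]
    simp [measure_univ, integral_const_mul]
  rw [hsplit] at hle
  have hvc : l3 * (∫ ω, ‖v ω‖ ^ 2 ∂P) ≤ l3 * c ^ 2 := mul_le_mul_of_nonneg_left hvms hl3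
  linarith
end

section
/- Let T be a natural number, 0 ≤ γ < 1, L > 0, and let (Û_t)_{0 ≤ t ≤ T} and (u_t)_{0 ≤ t ≤ T−1} be nonnegative real sequences with √(Û_{t+1}) ≤ γ √(Û_t) + u_t for 0 ≤ t ≤ T−1. For each 0 ≤ t ≤ T, let f_t : ℝ^p → ℝ be differentiable with L-Lipschitz gradient, and let x_t, x*_t ∈ ℝ^p with ∇f_t(x*_t) = 0 and ‖x_t − x*_t‖² ≤ Û_t. Then ∑_{t=0}^{T} ( f_t(x_t) − f_t(x*_t) ) ≤ (L/(1−γ)²) Û₀ + (L/(1−γ)²) ( ∑_{t=0}^{T−1} u_t )². -/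
open intervalIntegral in
lemma descent_lemma {p : ℕ} {L : ℝ} (hL : 0 < L) (f : EuclideanSpace ℝ (Fin p) → ℝ)
    (hdiff : Differentiable ℝ f)
    (hlip : ∀ a b, ‖gradient f a - gradient f b‖ ≤ L * ‖a - b‖)
    (x xs : EuclideanSpace ℝ (Fin p)) (hcrit : gradient f xs = 0) :
    f x - f xs ≤ L / 2 * ‖x - xs‖ ^ 2 := by
  set v := x - xs with hv
  have hgradlip : LipschitzWith (Real.toNNReal L) (gradient f) := by
    apply LipschitzWith.of_dist_le_mul
    intro a b
    simpa [dist_eq_norm, Real.coe_toNNReal _ hL.le] using hlip a b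
  have key : ∀ t : ℝ, HasDerivAt (fun s : ℝ => f (xs + s • v))
      (inner ℝ (gradient f (xs + t • v)) v : ℝ) t := by
    intro t
    have h1 : HasFDerivAt f
        ((InnerProductSpace.toDual ℝ _) (gradient f (xs + t • v))) (xs + t • v) :=
      (hdiff _).hasGradientAt.hasFDerivAt
    have h2 : HasDerivAt (fun s : ℝ => xs + s • v) v t := by
      simpa using ((hasDerivAt_id t).smul_const v).const_add xs
    have := h1.comp_hasDerivAt t h2
    rw [InnerProductSpace.toDual_apply_apply] at this
    exact this
  have hcont : Continuous fun t : ℝ => (inner ℝ (gradient f (xs + t • v)) v : ℝ) := by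
    apply Continuous.inner _ continuous_const
    exact hgradlip.continuous.comp (by continuity)
  have heq : f x - f xs = ∫ t in (0:ℝ)..1, (inner ℝ (gradient f (xs + t • v)) v : ℝ) := by
    have := intervalIntegral.integral_eq_sub_of_hasDerivAt
      (f := fun s : ℝ => f (xs + s • v)) (fun t _ => key t)
      (hcont.intervalIntegrable 0 1)
    rw [this]
    simp [hv]
  rw [heq]
  have hbound : ∫ t in (0:ℝ)..1, (inner ℝ (gradient f (xs + t • v)) v : ℝ) ≤
      ∫ t in (0:ℝ)..1, L * t * ‖v‖ ^ 2 := by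
    apply intervalIntegral.integral_mono_on zero_le_one (hcont.intervalIntegrable 0 1)
      ((by continuity : Continuous fun t : ℝ => L * t * ‖v‖ ^ 2).intervalIntegrable 0 1)
    intro t ht
    rcases ht with ⟨ht0, ht1⟩
    calc (inner ℝ (gradient f (xs + t • v)) v : ℝ)
        = inner ℝ (gradient f (xs + t • v) - gradient f xs) v := by rw [hcrit]; simp
      _ ≤ ‖gradient f (xs + t • v) - gradient f xs‖ * ‖v‖ := real_inner_le_norm _ _
      _ ≤ (L * ‖(xs + t • v) - xs‖) * ‖v‖ := by
          exact mul_le_mul_of_nonneg_right (hlip _ _) (norm_nonneg _)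
      _ = L * t * ‖v‖ ^ 2 := by
          simp [norm_smul, abs_of_nonneg ht0]; ring
  refine hbound.trans ?_
  rw [intervalIntegral.integral_mul_const, intervalIntegral.integral_const_mul,
    integral_id]
  ring_nf
  norm_num

theorem stmt_15 (p T : ℕ) (γ L : ℝ) (hγ0 : 0 ≤ γ) (hγ1 : γ < 1) (hL : 0 < L)
    (Uhat u : ℕ → ℝ)
    (hUnn : ∀ t ≤ T, 0 ≤ Uhat t) (hunn : ∀ t < T, 0 ≤ u t)
    (hrecur : ∀ t < T, Real.sqrt (Uhat (t + 1)) ≤ γ * Real.sqrt (Uhat t) + u t)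
    (f : ℕ → EuclideanSpace ℝ (Fin p) → ℝ)
    (x xs : ℕ → EuclideanSpace ℝ (Fin p))
    (hdiff : ∀ t ≤ T, Differentiable ℝ (f t))
    (hlip : ∀ t ≤ T, ∀ a b : EuclideanSpace ℝ (Fin p),
      ‖gradient (f t) a - gradient (f t) b‖ ≤ L * ‖a - b‖)
    (hcrit : ∀ t ≤ T, gradient (f t) (xs t) = 0)
    (htrack : ∀ t ≤ T, ‖x t - xs t‖ ^ 2 ≤ Uhat t) :
    ∑ t ∈ Finset.range (T + 1), (f t (x t) - f t (xs t)) ≤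
      L / (1 - γ) ^ 2 * Uhat 0 + L / (1 - γ) ^ 2 * (∑ t ∈ Finset.range T, u t) ^ 2 := by
  set b : ℕ → ℝ := fun t => Real.sqrt (Uhat t) with hb
  set B : ℝ := ∑ t ∈ Finset.range (T + 1), b t with hB
  set S : ℝ := ∑ t ∈ Finset.range T, u t with hS
  have hbnn : ∀ t, 0 ≤ b t := fun t => Real.sqrt_nonneg _
  have hBnn : 0 ≤ B := Finset.sum_nonneg fun t _ => hbnn t
  have hSnn : 0 ≤ S := Finset.sum_nonneg fun t ht => hunn t (Finset.mem_range.mp ht)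
  have h1γ : 0 < 1 - γ := by linarith
  -- bound on B
  have hBle : (1 - γ) * B ≤ b 0 + S := by
    have h1 : B = b 0 + ∑ t ∈ Finset.range T, b (t + 1) := by
      rw [hB, Finset.sum_range_succ']
      ring
    have h2 : ∑ t ∈ Finset.range T, b (t + 1) ≤ γ * (∑ t ∈ Finset.range T, b t) + S := by
      rw [Finset.mul_sum, ← Finset.sum_add_distrib]
      exact Finset.sum_le_sum fun t ht => hrecur t (Finset.mem_range.mp ht)
    have h3 : ∑ t ∈ Finset.range T, b t ≤ B := by
      rw [hB]
      apply Finset.sum_le_sum_of_subset_of_nonneg (Finset.range_subset_range.mpr (Nat.le_succ T))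
      exact fun t _ _ => hbnn t
    nlinarith [mul_le_mul_of_nonneg_left h3 hγ0]
  -- sum Uhat bound
  have hUsum : ∑ t ∈ Finset.range (T + 1), Uhat t ≤ B ^ 2 := by
    have : ∑ t ∈ Finset.range (T + 1), Uhat t = ∑ t ∈ Finset.range (T + 1), b t ^ 2 := by
      apply Finset.sum_congr rfl
      intro t ht
      rw [hb]
      exact (Real.sq_sqrt (hUnn t (Nat.lt_succ_iff.mp (Finset.mem_range.mp ht)))).symm
    rw [this]
    exact Finset.sum_sq_le_sq_sum_of_nonneg fun t _ => hbnn t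
  -- per-term descent bound
  have hterm : ∑ t ∈ Finset.range (T + 1), (f t (x t) - f t (xs t)) ≤
      L / 2 * ∑ t ∈ Finset.range (T + 1), Uhat t := by
    rw [Finset.mul_sum]
    apply Finset.sum_le_sum
    intro t ht
    have htT : t ≤ T := Nat.lt_succ_iff.mp (Finset.mem_range.mp ht)
    calc f t (x t) - f t (xs t) ≤ L / 2 * ‖x t - xs t‖ ^ 2 :=
          descent_lemma hL (f t) (hdiff t htT) (hlip t htT) (x t) (xs t) (hcrit t htT)
      _ ≤ L / 2 * Uhat t := by
          exact mul_le_mul_of_nonneg_left (htrack t htT) (by linarith)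
  have hU0 : b 0 ^ 2 = Uhat 0 := Real.sq_sqrt (hUnn 0 (Nat.zero_le T))
  have hB2 : B ^ 2 ≤ (b 0 + S) ^ 2 / (1 - γ) ^ 2 := by
    rw [le_div_iff₀ (by positivity)]
    nlinarith [mul_le_mul hBle hBle (by positivity) (by positivity)]
  calc ∑ t ∈ Finset.range (T + 1), (f t (x t) - f t (xs t))
      ≤ L / 2 * ∑ t ∈ Finset.range (T + 1), Uhat t := hterm
    _ ≤ L / 2 * B ^ 2 := mul_le_mul_of_nonneg_left hUsum (by linarith)
    _ ≤ L / 2 * ((b 0 + S) ^ 2 / (1 - γ) ^ 2) := mul_le_mul_of_nonneg_left hB2 (by linarith)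
    _ ≤ L / (1 - γ) ^ 2 * Uhat 0 + L / (1 - γ) ^ 2 * S ^ 2 := by
        rw [← hU0]
        have hc : (0:ℝ) < (1 - γ) ^ 2 := by positivity
        have hX : (b 0 + S) ^ 2 ≤ 2 * b 0 ^ 2 + 2 * S ^ 2 := by nlinarith [sq_nonneg (b 0 - S)]
        have h := mul_le_mul_of_nonneg_left hX
          (le_of_lt (by positivity : (0:ℝ) < L / 2 / (1 - γ) ^ 2))
        calc L / 2 * ((b 0 + S) ^ 2 / (1 - γ) ^ 2)
            = L / 2 / (1 - γ) ^ 2 * (b 0 + S) ^ 2 := by ring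
          _ ≤ L / 2 / (1 - γ) ^ 2 * (2 * b 0 ^ 2 + 2 * S ^ 2) := h
          _ = L / (1 - γ) ^ 2 * b 0 ^ 2 + L / (1 - γ) ^ 2 * S ^ 2 := by ring
end
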